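/- arXiv:2302.01814 — 4 statements merged into one kernel-verified Lean document; each statement's English description precedes it below -/
import Mathlib

section
/- The function s(d) := s(dA + diag(m_1,…,m_n)) is strictly decreasing in d on (0,∞); s(d) → max_{1≤j≤n} m_j as d → 0⁺; s(d) → −∞ as d → ∞. Consequently there exists a unique d_* > 0 such that s(d_*) = 0, s(d) > 0 for all d ∈ (0,d_*), and s(d) < 0 for all d > d_*. -/
open Matrix Filter Set

/-- Spectral bound of a real square matrix: the maximum of the real parts of its
complex eigenvalues. -/
noncomputable def specBound {n : ℕ} (M : Matrix (Fin n) (Fin n) ℝ) : ℝ :=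
  sSup (Complex.re '' spectrum ℂ (M.map (fun x : ℝ => (x : ℂ))))


section PF
variable {n : ℕ}

def Irr (B : Matrix (Fin n) (Fin n) ℝ) : Prop :=
  ∀ S : Finset (Fin n), S.Nonempty → S ≠ Finset.univ → ∃ j ∉ S, ∃ k ∈ S, 0 < B j k

noncomputable def supp (z : Fin n → ℝ) : Finset (Fin n) :=
  Finset.univ.filter (fun j => 0 < z j)

lemma mem_supp {z : Fin n → ℝ} {j : Fin n} : j ∈ supp z ↔ 0 < z j := by
  simp [supp]

lemma mulVec_nonneg {B : Matrix (Fin n) (Fin n) ℝ} (hB : ∀ j k, 0 ≤ B j k)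
    {z : Fin n → ℝ} (hz : ∀ j, 0 ≤ z j) : ∀ j, 0 ≤ B.mulVec z j := by
  intro j
  rw [Matrix.mulVec, dotProduct]
  exact Finset.sum_nonneg fun k _ => mul_nonneg (hB j k) (hz k)

/-- one step of `z ↦ z + B z`. -/
noncomputable def fstep (B : Matrix (Fin n) (Fin n) ℝ) (z : Fin n → ℝ) : Fin n → ℝ :=
  z + B.mulVec z

lemma fstep_nonneg {B : Matrix (Fin n) (Fin n) ℝ} (hB : ∀ j k, 0 ≤ B j k)
    {z : Fin n → ℝ} (hz : ∀ j, 0 ≤ z j) : ∀ j, 0 ≤ fstep B z j :=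
  fun j => add_nonneg (hz j) (mulVec_nonneg hB hz j)

lemma supp_subset_fstep {B : Matrix (Fin n) (Fin n) ℝ} (hB : ∀ j k, 0 ≤ B j k)
    {z : Fin n → ℝ} (hz : ∀ j, 0 ≤ z j) : supp z ⊆ supp (fstep B z) := by
  intro j hj
  rw [mem_supp] at *
  exact lt_of_lt_of_le hj (le_add_of_nonneg_right (mulVec_nonneg hB hz j))

lemma supp_card_fstep {B : Matrix (Fin n) (Fin n) ℝ} (hB : ∀ j k, 0 ≤ B j k)
    (hirr : Irr B) {z : Fin n → ℝ} (hz : ∀ j, 0 ≤ z j)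
    (h1 : (supp z).Nonempty) (h2 : supp z ≠ Finset.univ) :
    (supp z).card + 1 ≤ (supp (fstep B z)).card := by
  obtain ⟨j, hj, k, hk, hjk⟩ := hirr (supp z) h1 h2
  have hjmem : j ∈ supp (fstep B z) := by
    rw [mem_supp]
    have h1' : 0 < B j k * z k := mul_pos hjk (mem_supp.mp hk)
    have h2' : B j k * z k ≤ B.mulVec z j :=
      Finset.single_le_sum (f := fun k => B j k * z k)
        (fun i _ => mul_nonneg (hB j i) (hz i)) (Finset.mem_univ k)
    have : 0 < B.mulVec z j := lt_of_lt_of_le h1' h2'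
    exact add_pos_of_nonneg_of_pos (hz j) this
  have hss : supp z ⊂ supp (fstep B z) := by
    refine Finset.ssubset_iff_of_subset (supp_subset_fstep hB hz) |>.mpr ⟨j, hjmem, hj⟩
  exact Finset.card_lt_card hss

lemma iter_supp {B : Matrix (Fin n) (Fin n) ℝ} (hB : ∀ j k, 0 ≤ B j k) (hirr : Irr B) :
    ∀ (k : ℕ) (z : Fin n → ℝ), (∀ j, 0 ≤ z j) → (supp z).Nonempty →
      (∀ j, 0 ≤ (fstep B)^[k] z j) ∧
      min n ((supp z).card + k) ≤ (supp ((fstep B)^[k] z)).card := by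
  intro k
  induction k with
  | zero =>
    intro z hz hz1
    refine ⟨by simpa using hz, ?_⟩
    simpa using min_le_right n (supp z).card
  | succ k ih =>
    intro z hz hz1
    have hfz : ∀ j, 0 ≤ fstep B z j := fstep_nonneg hB hz
    have hfz1 : (supp (fstep B z)).Nonempty :=
      hz1.mono (supp_subset_fstep hB hz)
    obtain ⟨hpos, hcard⟩ := ih (fstep B z) hfz hfz1
    rw [Function.iterate_succ_apply]
    refine ⟨hpos, ?_⟩
    by_cases hu : supp z = Finset.univ
    · refine le_trans ?_ hcard
      have : (supp (fstep B z)).card = n := by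
        have : supp (fstep B z) = Finset.univ :=
          Finset.univ_subset_iff.mp (hu ▸ supp_subset_fstep hB hz)
        simp [this]
      calc min n ((supp z).card + (k+1)) ≤ n := min_le_left _ _
        _ ≤ min n ((supp (fstep B z)).card + k) := by
            simp [this]
    · refine le_trans ?_ hcard
      have hstep := supp_card_fstep hB hirr hz hz1 hu
      have : (supp z).card + (k + 1) = ((supp z).card + 1) + k := by ring
      rw [this]
      exact min_le_min le_rfl (by omega)

lemma iter_pos {B : Matrix (Fin n) (Fin n) ℝ} (hB : ∀ j k, 0 ≤ B j k) (hirr : Irr B)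
    {z : Fin n → ℝ} (hz : ∀ j, 0 ≤ z j) (hz' : z ≠ 0) :
    ∀ j, 0 < (fstep B)^[n-1] z j := by
  have hne : (supp z).Nonempty := by
    obtain ⟨j, hj⟩ := Function.ne_iff.mp hz'
    exact ⟨j, mem_supp.mpr (lt_of_le_of_ne (hz j) (Ne.symm (by simpa using hj)))⟩
  obtain ⟨_, hcard⟩ := iter_supp hB hirr (n-1) z hz hne
  have hn : 1 ≤ n := by
    have := hne.card_pos
    have := (supp z).card_le_univ
    simp only [Finset.card_univ, Fintype.card_fin] at this
    omega
  have h1 : 1 ≤ (supp z).card := hne.card_pos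
  have : n ≤ (supp ((fstep B)^[n-1] z)).card := by
    have : min n ((supp z).card + (n-1)) = n := by omega
    omega
  have huniv : supp ((fstep B)^[n-1] z) = Finset.univ := by
    apply Finset.eq_univ_of_card
    have := (supp ((fstep B)^[n-1] z)).card_le_univ
    simp only [Finset.card_univ, Fintype.card_fin] at *
    omega
  intro j
  have : j ∈ supp ((fstep B)^[n-1] z) := huniv ▸ Finset.mem_univ j
  exact mem_supp.mp this

lemma fstep_smul (B : Matrix (Fin n) (Fin n) ℝ) (a : ℝ) (z : Fin n → ℝ) :
    fstep B (a • z) = a • fstep B z := by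
  simp [fstep, Matrix.mulVec_smul, smul_add]

lemma fstep_add (B : Matrix (Fin n) (Fin n) ℝ) (z w : Fin n → ℝ) :
    fstep B (z + w) = fstep B z + fstep B w := by
  simp [fstep, Matrix.mulVec_add]
  abel

lemma fstep_comm (B : Matrix (Fin n) (Fin n) ℝ) (z : Fin n → ℝ) :
    B.mulVec (fstep B z) = fstep B (B.mulVec z) := by
  simp [fstep, Matrix.mulVec_add]

lemma iter_smul (B : Matrix (Fin n) (Fin n) ℝ) (k : ℕ) (a : ℝ) (z : Fin n → ℝ) :
    (fstep B)^[k] (a • z) = a • (fstep B)^[k] z := by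
  induction k with
  | zero => simp
  | succ k ih => rw [Function.iterate_succ_apply', Function.iterate_succ_apply', ih, fstep_smul]

lemma iter_add (B : Matrix (Fin n) (Fin n) ℝ) (k : ℕ) (z w : Fin n → ℝ) :
    (fstep B)^[k] (z + w) = (fstep B)^[k] z + (fstep B)^[k] w := by
  induction k with
  | zero => simp
  | succ k ih => rw [Function.iterate_succ_apply', Function.iterate_succ_apply', Function.iterate_succ_apply', ih, fstep_add]

lemma iter_comm (B : Matrix (Fin n) (Fin n) ℝ) (k : ℕ) (z : Fin n → ℝ) :
    B.mulVec ((fstep B)^[k] z) = (fstep B)^[k] (B.mulVec z) := by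
  induction k with
  | zero => simp
  | succ k ih => rw [Function.iterate_succ_apply', Function.iterate_succ_apply', fstep_comm, ih]

lemma continuous_mulVec (B : Matrix (Fin n) (Fin n) ℝ) :
    Continuous (fun z : Fin n → ℝ => B.mulVec z) := by
  refine continuous_pi fun j => ?_
  have : (fun z : Fin n → ℝ => B.mulVec z j) = fun z => ∑ k, B j k * z k := by
    funext z; rw [Matrix.mulVec, dotProduct]
  rw [this]
  exact continuous_finset_sum _ fun k _ => continuous_const.mul (continuous_apply k)

lemma continuous_iter (B : Matrix (Fin n) (Fin n) ℝ) (k : ℕ) :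
    Continuous ((fstep B)^[k]) := by
  induction k with
  | zero => simpa using continuous_id
  | succ k ih =>
    rw [Function.iterate_succ]
    exact ih.comp (continuous_id.add (continuous_mulVec B))

end PF
section PF2
variable {n : ℕ}

lemma continuousOn_finset_inf' {ι α : Type*} [TopologicalSpace α] {s : Finset ι}
    (hs : s.Nonempty) {t : Set α} {f : ι → α → ℝ}
    (hf : ∀ i ∈ s, ContinuousOn (f i) t) :
    ContinuousOn (fun x => s.inf' hs (fun i => f i x)) t := by
  induction hs using Finset.Nonempty.cons_induction with
  | singleton i => simpa using hf i (by simp)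
  | cons i s hi hne ih =>
    have h1 : ContinuousOn (f i) t := hf i (by simp)
    have h2 : ContinuousOn (fun x => s.inf' hne fun j => f j x) t :=
      ih (fun j hj => hf j (by simp [hj]))
    have heq : (fun x => (Finset.cons i s hi).inf' (Finset.cons_nonempty hi) fun j => f j x)
        = fun x => (f i x) ⊓ (s.inf' hne fun j => f j x) := by
      funext x; exact Finset.inf'_cons hne _
    rw [heq]
    exact h1.inf h2

theorem perron_nonneg (hn : 0 < n) {B : Matrix (Fin n) (Fin n) ℝ}
    (hB : ∀ j k, 0 ≤ B j k) (hirr : Irr B) :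
    ∃ (r : ℝ) (x : Fin n → ℝ), (∀ j, 0 < x j) ∧ B.mulVec x = r • x := by
  haveI : Nonempty (Fin n) := ⟨⟨0, hn⟩⟩
  set T : (Fin n → ℝ) → (Fin n → ℝ) := (fstep B)^[n-1] with hT
  have hTpos : ∀ z : Fin n → ℝ, (∀ j, 0 ≤ z j) → z ≠ 0 → ∀ j, 0 < T z j :=
    fun z hz hz' => iter_pos hB hirr hz hz'
  set K : Set (Fin n → ℝ) := T '' stdSimplex ℝ (Fin n) with hK
  have hKcpt : IsCompact K := (isCompact_stdSimplex _ _).image (continuous_iter B _)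
  have hsimpne : (stdSimplex ℝ (Fin n)).Nonempty := by
    refine ⟨fun _ => 1/n, fun j => by positivity, ?_⟩
    simp only [Finset.sum_const, Finset.card_univ, Fintype.card_fin, nsmul_eq_mul]
    field_simp
  have hKne : K.Nonempty := hsimpne.image T
  have hKpos : ∀ x ∈ K, ∀ j, 0 < x j := by
    rintro x ⟨z, hz, rfl⟩ j
    refine hTpos z (fun j => hz.1 j) ?_ j
    intro h0
    have h1 := hz.2
    rw [h0] at h1
    simp at h1
  have hune : (Finset.univ : Finset (Fin n)).Nonempty := Finset.univ_nonempty
  set g : (Fin n → ℝ) → ℝ := fun x => Finset.univ.inf' hune (fun j => B.mulVec x j / x j)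
    with hg
  have hgcont : ContinuousOn g K := by
    refine continuousOn_finset_inf' hune (fun j _ => ?_)
    refine ContinuousOn.div ?_ (continuous_apply j).continuousOn
      (fun x hx => ne_of_gt (hKpos x hx j))
    exact ((continuous_apply j).comp (continuous_mulVec B)).continuousOn
  obtain ⟨x, hxK, hmax⟩ := hKcpt.exists_isMaxOn hKne hgcont
  set r : ℝ := g x with hr
  have hxpos : ∀ j, 0 < x j := hKpos x hxK
  have hlow : ∀ j, r * x j ≤ B.mulVec x j := by
    intro j
    have : r ≤ B.mulVec x j / x j := Finset.inf'_le _ (Finset.mem_univ j)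
    exact (le_div_iff₀ (hxpos j)).mp this
  set w : Fin n → ℝ := B.mulVec x - r • x with hw
  have hwnn : ∀ j, 0 ≤ w j := by
    intro j; simp only [hw, Pi.sub_apply, Pi.smul_apply, smul_eq_mul, sub_nonneg]
    exact hlow j
  by_cases hw0 : w = 0
  · exact ⟨r, x, hxpos, by rwa [sub_eq_zero] at hw0⟩
  · exfalso
    have hTw : ∀ j, 0 < T w j := hTpos w hwnn hw0
    set y : Fin n → ℝ := T x with hy
    have hxne : x ≠ 0 := by
      intro h; have := hxpos ⟨0, hn⟩; rw [h] at this; simp at this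
    have hypos : ∀ j, 0 < y j := hTpos x (fun j => (hxpos j).le) hxne
    have hBy : B.mulVec y - r • y = T w := by
      have h1 : T (B.mulVec x) = B.mulVec y := (iter_comm B (n-1) x).symm
      have h2 : T (r • x) = r • y := iter_smul B (n-1) r x
      have h3 : T (B.mulVec x) = T (r • x + w) := by
        congr 1
        simp [hw]
      have h4 : T (r • x + w) = T (r • x) + T w := iter_add B (n-1) _ _
      rw [← h1, h3, h4, h2]
      abel
    set σ : ℝ := ∑ j, x j with hσ
    have hσpos : 0 < σ := Finset.sum_pos (fun j _ => hxpos j) hune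
    have hmem : σ⁻¹ • x ∈ stdSimplex ℝ (Fin n) := by
      constructor
      · intro j
        exact mul_nonneg (inv_nonneg.mpr hσpos.le) (hxpos j).le
      · simp only [Pi.smul_apply, smul_eq_mul, ← Finset.mul_sum]
        field_simp
        exact hσ.symm
    have hy'K : T (σ⁻¹ • x) ∈ K := Set.mem_image_of_mem T hmem
    have hy'eq : T (σ⁻¹ • x) = σ⁻¹ • y := iter_smul B (n-1) σ⁻¹ x
    have hcontra : r < g (T (σ⁻¹ • x)) := by
      rw [hy'eq, hg, Finset.lt_inf'_iff]
      intro j _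
      have hratio : B.mulVec (σ⁻¹ • y) j / (σ⁻¹ • y) j = B.mulVec y j / y j := by
        rw [Matrix.mulVec_smul]
        simp only [Pi.smul_apply, smul_eq_mul]
        rw [mul_div_mul_left _ _ (by positivity : σ⁻¹ ≠ 0)]
      rw [hratio, lt_div_iff₀ (hypos j)]
      have h4 := congrFun hBy j
      simp only [Pi.sub_apply, Pi.smul_apply, smul_eq_mul] at h4
      have := hTw j
      linarith [h4, hTw j]
    exact absurd (hmax hy'K) (not_le.mpr hcontra)

end PF2
section PF3
variable {n : ℕ}

def Metzler (M : Matrix (Fin n) (Fin n) ℝ) : Prop := ∀ j k, j ≠ k → 0 ≤ M j k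

theorem perron_metzler (hn : 0 < n) {M : Matrix (Fin n) (Fin n) ℝ}
    (hM : Metzler M) (hirr : Irr M) :
    ∃ (r : ℝ) (x : Fin n → ℝ), (∀ j, 0 < x j) ∧ M.mulVec x = r • x := by
  set c : ℝ := ∑ j, |M j j| with hc
  have hcge : ∀ j, |M j j| ≤ c := fun j =>
    Finset.single_le_sum (f := fun j => |M j j|) (fun i _ => abs_nonneg _) (Finset.mem_univ j)
  set B : Matrix (Fin n) (Fin n) ℝ := M + c • (1 : Matrix (Fin n) (Fin n) ℝ) with hB
  have hBapp : ∀ j k, B j k = M j k + if j = k then c else 0 := by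
    intro j k
    simp [hB, Matrix.one_apply, mul_ite]
  have hBnn : ∀ j k, 0 ≤ B j k := by
    intro j k
    rw [hBapp]
    by_cases h : j = k
    · subst h
      rw [if_pos rfl]
      have h1 := hcge j
      have h2 := neg_abs_le (M j j)
      linarith
    · simpa [h] using hM j k h
  have hBirr : Irr B := by
    intro S hS1 hS2
    obtain ⟨j, hj, k, hk, hjk⟩ := hirr S hS1 hS2
    refine ⟨j, hj, k, hk, ?_⟩
    have hne : j ≠ k := fun h => hj (h ▸ hk)
    rw [hBapp, if_neg hne]
    linarith
  obtain ⟨r, x, hx, hrx⟩ := perron_nonneg hn hBnn hBirr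
  refine ⟨r - c, x, hx, ?_⟩
  have : B.mulVec x = M.mulVec x + c • x := by
    rw [hB, Matrix.add_mulVec, Matrix.smul_mulVec, Matrix.one_mulVec]
  rw [this] at hrx
  have : M.mulVec x = r • x - c • x := by
    rw [← hrx]; abel
  rw [this, sub_smul]

lemma irr_transpose {M : Matrix (Fin n) (Fin n) ℝ} (hirr : Irr M) : Irr Mᵀ := by
  intro S hS1 hS2
  have h1 : (Sᶜ : Finset (Fin n)).Nonempty := by
    have : ¬ (∀ a, a ∈ S) := fun h => hS2 (Finset.eq_univ_iff_forall.mpr h)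
    push_neg at this
    obtain ⟨a, ha⟩ := this
    exact ⟨a, Finset.mem_compl.mpr ha⟩
  have h2 : (Sᶜ : Finset (Fin n)) ≠ Finset.univ := by
    obtain ⟨b, hb⟩ := hS1
    intro h
    have : b ∈ (Sᶜ : Finset (Fin n)) := h ▸ Finset.mem_univ b
    exact (Finset.mem_compl.mp this) hb
  obtain ⟨j, hj, k, hk, hjk⟩ := hirr Sᶜ h1 h2
  refine ⟨k, Finset.mem_compl.mp hk, j, ?_, ?_⟩
  · by_contra hjS
    exact hj (Finset.mem_compl.mpr hjS)
  · simpa [Matrix.transpose_apply] using hjk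

lemma metzler_transpose {M : Matrix (Fin n) (Fin n) ℝ} (hM : Metzler M) : Metzler Mᵀ :=
  fun j k h => hM k j (Ne.symm h)

lemma dot_mulVec_eq (M : Matrix (Fin n) (Fin n) ℝ) (v w : Fin n → ℝ) :
    ∑ j, v j * M.mulVec w j = ∑ k, Mᵀ.mulVec v k * w k := by
  simp only [Matrix.mulVec, dotProduct, Finset.mul_sum, Finset.sum_mul,
    Matrix.transpose_apply]
  rw [Finset.sum_comm]
  apply Finset.sum_congr rfl
  intro k _
  apply Finset.sum_congr rfl
  intro j _
  ring

end PF3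
section PF4
variable {n : ℕ}

lemma algebraMap_mulVec_apply (μ : ℂ) (z : Fin n → ℂ) (j : Fin n) :
    Matrix.mulVec ((algebraMap ℂ (Matrix (Fin n) (Fin n) ℂ)) μ) z j = μ * z j := by
  rw [Matrix.mulVec, dotProduct]
  rw [Finset.sum_eq_single j]
  · rw [Matrix.algebraMap_matrix_apply, if_pos rfl]; simp
  · intro k _ hk
    rw [Matrix.algebraMap_matrix_apply, if_neg (Ne.symm hk)]; simp
  · intro h; exact absurd (Finset.mem_univ j) h

theorem specBound_eq (hn : 0 < n) {M : Matrix (Fin n) (Fin n) ℝ} {r : ℝ}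
    {x ψ : Fin n → ℝ} (hM : Metzler M) (hψ : ∀ j, 0 < ψ j) (hx : ∀ j, 0 < x j)
    (hMx : M.mulVec x = r • x) (hMψ : Mᵀ.mulVec ψ = r • ψ) :
    specBound M = r := by
  set N : Matrix (Fin n) (Fin n) ℂ := M.map (fun a : ℝ => (a : ℂ)) with hN
  have hNmulVec : ∀ (z : Fin n → ℂ) (j : Fin n),
      N.mulVec z j = ∑ k, (M j k : ℂ) * z k := by
    intro z j; rw [Matrix.mulVec, dotProduct]; rfl
  have hmem : (r : ℂ) ∈ spectrum ℂ N := by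
    rw [spectrum.mem_iff]
    intro hunit
    rw [Matrix.isUnit_iff_isUnit_det, isUnit_iff_ne_zero] at hunit
    apply hunit
    rw [← Matrix.exists_mulVec_eq_zero_iff]
    refine ⟨fun j => (x j : ℂ), ?_, ?_⟩
    · intro h
      have := congrFun h ⟨0, hn⟩
      simp only [Pi.zero_apply, Complex.ofReal_eq_zero] at this
      exact (hx ⟨0, hn⟩).ne' this
    · funext j
      have hMxj := congrFun hMx j
      simp only [Pi.smul_apply, smul_eq_mul] at hMxj
      rw [Matrix.sub_mulVec]
      simp only [Pi.sub_apply, Pi.zero_apply]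
      rw [algebraMap_mulVec_apply, hNmulVec]
      have : (∑ k, (M j k : ℂ) * (x k : ℂ)) = ((M.mulVec x j : ℝ) : ℂ) := by
        rw [Matrix.mulVec, dotProduct]
        push_cast
        rfl
      rw [this, hMxj]
      push_cast
      ring
  have hub : ∀ μ ∈ spectrum ℂ N, μ.re ≤ r := by
    intro μ hμ
    rw [spectrum.mem_iff, Matrix.isUnit_iff_isUnit_det, isUnit_iff_ne_zero, not_not,
      ← Matrix.exists_mulVec_eq_zero_iff] at hμ
    obtain ⟨z, hz0, hz⟩ := hμ
    have hNz : ∀ j, (∑ k, (M j k : ℂ) * z k) = μ * z j := by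
      intro j
      have := congrFun hz j
      simp only [Matrix.sub_mulVec, Pi.sub_apply, Pi.zero_apply, sub_eq_zero] at this
      rw [← hNmulVec z j, ← algebraMap_mulVec_apply μ z j, this]
    set c : ℝ := ∑ j, |M j j| with hc
    have hcge : ∀ j, |M j j| ≤ c := fun j =>
      Finset.single_le_sum (f := fun j => |M j j|) (fun i _ => abs_nonneg _) (Finset.mem_univ j)
    set B : Fin n → Fin n → ℝ := fun j k => M j k + if j = k then c else 0 with hBdef
    have hBnn : ∀ j k, 0 ≤ B j k := by
      intro j k
      by_cases h : j = k
      · subst h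
        have hB : B j j = M j j + c := by simp [hBdef]
        rw [hB]
        have h1 := hcge j
        have h2 := neg_abs_le (M j j)
        linarith
      · simpa [hBdef, h] using hM j k h
    set a : Fin n → ℝ := fun j => ‖z j‖ with ha
    have hann : ∀ j, 0 ≤ a j := fun j => norm_nonneg _
    have hkey : ∀ j, ‖μ + c‖ * a j ≤ ∑ k, B j k * a k := by
      intro j
      have hsum : (∑ k, (B j k : ℂ) * z k) = (μ + c) * z j := by
        have : (∑ k, (B j k : ℂ) * z k)
            = (∑ k, (M j k : ℂ) * z k) + ∑ k, (if j = k then (c:ℂ) else 0) * z k := by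
          rw [← Finset.sum_add_distrib]
          apply Finset.sum_congr rfl
          intro k _
          simp only [hBdef]
          push_cast
          by_cases h : j = k <;> simp [h] <;> ring
        rw [this, hNz]
        have : (∑ k, (if j = k then (c:ℂ) else 0) * z k) = c * z j := by
          rw [Finset.sum_eq_single j]
          · simp
          · intro k _ hk; simp [Ne.symm hk]
          · intro h; exact absurd (Finset.mem_univ j) h
        rw [this]
        ring
      calc ‖μ + c‖ * a j = ‖(μ + c) * z j‖ := by
            rw [norm_mul]
        _ = ‖∑ k, (B j k : ℂ) * z k‖ := by rw [hsum]
        _ ≤ ∑ k, ‖(B j k : ℂ) * z k‖ := by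
            exact norm_sum_le _ _
        _ = ∑ k, B j k * a k := by
            apply Finset.sum_congr rfl
            intro k _
            rw [norm_mul, Complex.norm_real, Real.norm_eq_abs, abs_of_nonneg (hBnn j k)]
    have hW : 0 < ∑ j, ψ j * a j := by
      apply Finset.sum_pos'
      · intro j _; exact mul_nonneg (hψ j).le (hann j)
      · obtain ⟨j, hj⟩ := Function.ne_iff.mp hz0
        refine ⟨j, Finset.mem_univ j, mul_pos (hψ j) ?_⟩
        simpa [ha] using (norm_pos_iff.mpr (by simpa using hj))
    have hpair : ‖μ + c‖ * ∑ j, ψ j * a j ≤ (r + c) * ∑ j, ψ j * a j := by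
      calc ‖μ + c‖ * ∑ j, ψ j * a j
          = ∑ j, ψ j * (‖μ + c‖ * a j) := by
            rw [Finset.mul_sum]; apply Finset.sum_congr rfl; intro j _; ring
        _ ≤ ∑ j, ψ j * ∑ k, B j k * a k := by
            apply Finset.sum_le_sum
            intro j _
            exact mul_le_mul_of_nonneg_left (hkey j) (hψ j).le
        _ = ∑ k, (∑ j, ψ j * B j k) * a k := by
            simp only [Finset.mul_sum, Finset.sum_mul]
            rw [Finset.sum_comm]
            apply Finset.sum_congr rfl; intro k _
            apply Finset.sum_congr rfl; intro j _; ring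
        _ = ∑ k, ((r + c) * ψ k) * a k := by
            apply Finset.sum_congr rfl
            intro k _
            congr 1
            have h1 : (∑ j, ψ j * B j k) = (∑ j, ψ j * M j k) + c * ψ k := by
              simp only [hBdef, mul_add, Finset.sum_add_distrib]
              congr 1
              rw [Finset.sum_eq_single k]
              · simp [mul_comm]
              · intro j _ hj; simp [hj]
              · intro h; exact absurd (Finset.mem_univ k) h
            have h2 : (∑ j, ψ j * M j k) = Mᵀ.mulVec ψ k := by
              rw [Matrix.mulVec, dotProduct]
              apply Finset.sum_congr rfl
              intro j _
              rw [Matrix.transpose_apply]; ring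
            have h3 := congrFun hMψ k
            simp only [Pi.smul_apply, smul_eq_mul] at h3
            rw [h1, h2, h3]
            ring
        _ = (r + c) * ∑ j, ψ j * a j := by
            rw [Finset.mul_sum]
            apply Finset.sum_congr rfl; intro k _; ring
    have habs : ‖μ + c‖ ≤ r + c := le_of_mul_le_mul_right hpair hW
    have hre : μ.re + c ≤ ‖μ + c‖ := by
      have := Complex.re_le_norm (μ + c)
      simpa using this
    linarith
  have hgreat : IsGreatest (Complex.re '' spectrum ℂ N) r :=
    ⟨⟨(r : ℂ), hmem, Complex.ofReal_re r⟩, by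
      rintro _ ⟨μ, hμ, rfl⟩
      exact hub μ hμ⟩
  rw [specBound]
  exact hgreat.csSup_eq

theorem perron_full (hn : 0 < n) {M : Matrix (Fin n) (Fin n) ℝ}
    (hM : Metzler M) (hirr : Irr M) :
    ∃ (x ψ : Fin n → ℝ), (∀ j, 0 < x j) ∧ (∀ j, 0 < ψ j) ∧
      M.mulVec x = specBound M • x ∧ Mᵀ.mulVec ψ = specBound M • ψ := by
  obtain ⟨r, x, hx, hrx⟩ := perron_metzler hn hM hirr
  obtain ⟨r', ψ, hψ, hrψ⟩ := perron_metzler hn (metzler_transpose hM) (irr_transpose hirr)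
  have hrr : r = r' := by
    have h1 : ∑ j, ψ j * M.mulVec x j = ∑ k, Mᵀ.mulVec ψ k * x k := dot_mulVec_eq M ψ x
    rw [hrx, hrψ] at h1
    simp only [Pi.smul_apply, smul_eq_mul] at h1
    have h2 : r * ∑ j, ψ j * x j = r' * ∑ j, ψ j * x j := by
      have e1 : ∑ j, ψ j * (r * x j) = r * ∑ j, ψ j * x j := by
        rw [Finset.mul_sum]; exact Finset.sum_congr rfl fun j _ => by ring
      have e2 : ∑ j, r' * ψ j * x j = r' * ∑ j, ψ j * x j := by
        rw [Finset.mul_sum]; exact Finset.sum_congr rfl fun j _ => by ring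
      rw [← e1, ← e2]; exact h1
    have hW : 0 < ∑ j, ψ j * x j :=
      Finset.sum_pos (fun j _ => mul_pos (hψ j) (hx j)) ⟨⟨0, hn⟩, Finset.mem_univ _⟩
    exact mul_right_cancel₀ hW.ne' h2
  have hs : specBound M = r := specBound_eq hn hM hψ hx hrx (hrr ▸ hrψ)
  exact ⟨x, ψ, hx, hψ, hs ▸ hrx, hs ▸ hrr ▸ hrψ⟩

end PF4
section DV
variable {n : ℕ}

/-- Key inequality: for Perron left/right eigenvectors `ψ, x` of a Metzler matrix `M`
with eigenvalue `r`, and any positive vector `u`,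
`r * ∑ ψ x ≤ ∑ ψ x (Mu)/u`. -/
theorem dv_ineq {M : Matrix (Fin n) (Fin n) ℝ} {r : ℝ} {x ψ u : Fin n → ℝ}
    (hM : Metzler M) (hx : ∀ j, 0 < x j) (hψ : ∀ j, 0 < ψ j) (hu : ∀ j, 0 < u j)
    (hMx : M.mulVec x = r • x) (hMψ : Mᵀ.mulVec ψ = r • ψ) :
    r * ∑ j, ψ j * x j ≤ ∑ j, ψ j * x j * (M.mulVec u j / u j) := by
  set f : Fin n → ℝ := fun j => Real.log (u j) - Real.log (x j) with hf
  have hRHS : ∑ j, ψ j * x j * (M.mulVec u j / u j)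
      = ∑ j, ∑ k, ψ j * x j * (M j k * u k / u j) := by
    apply Finset.sum_congr rfl
    intro j _
    rw [Matrix.mulVec, dotProduct, Finset.sum_div, Finset.mul_sum]
  have hptwise : ∀ j k, ψ j * M j k * x k * (1 + f k - f j) ≤ ψ j * x j * (M j k * u k / u j) := by
    intro j k
    by_cases h : j = k
    · subst h
      refine le_of_eq ?_
      rw [mul_div_assoc, div_self (hu j).ne']
      ring
    · have ha : 0 ≤ ψ j * M j k * x k :=
        mul_nonneg (mul_nonneg (hψ j).le (hM j k h)) (hx k).le
      set t : ℝ := u k * x j / (x k * u j) with ht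
      have htpos : 0 < t := div_pos (mul_pos (hu k) (hx j)) (mul_pos (hx k) (hu j))
      have hlog : Real.log t = f k - f j := by
        rw [ht, Real.log_div (mul_pos (hu k) (hx j)).ne' (mul_pos (hx k) (hu j)).ne',
          Real.log_mul (hu k).ne' (hx j).ne', Real.log_mul (hx k).ne' (hu j).ne', hf]
        ring
      have h1 : 1 + (f k - f j) ≤ t := by
        have := Real.log_le_sub_one_of_pos htpos
        rw [hlog] at this
        linarith
      have h2 : ψ j * M j k * x k * (1 + f k - f j) ≤ ψ j * M j k * x k * t := by
        have : (1 : ℝ) + f k - f j = 1 + (f k - f j) := by ring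
        rw [this]
        exact mul_le_mul_of_nonneg_left h1 ha
      refine le_trans h2 (le_of_eq ?_)
      rw [ht]
      have h5 : x k ≠ 0 := (hx k).ne'
      have h6 : u j ≠ 0 := (hu j).ne'
      field_simp
  have hsum : ∑ j, ∑ k, ψ j * M j k * x k * (1 + f k - f j) = r * ∑ j, ψ j * x j := by
    have hexp : ∀ j k, ψ j * M j k * x k * (1 + f k - f j)
        = ψ j * M j k * x k + ψ j * M j k * (x k * f k) - (ψ j * f j) * M j k * x k := by
      intro j k; ring
    have e0 : ∑ j, ∑ k, ψ j * M j k * x k = r * ∑ j, ψ j * x j := by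
      rw [Finset.mul_sum]
      apply Finset.sum_congr rfl
      intro j _
      have : ∑ k, ψ j * M j k * x k = ψ j * M.mulVec x j := by
        rw [Matrix.mulVec, dotProduct, Finset.mul_sum]
        exact Finset.sum_congr rfl fun k _ => by ring
      rw [this, congrFun hMx j]
      simp only [Pi.smul_apply, smul_eq_mul]
      ring
    have e1 : ∑ j, ∑ k, ψ j * M j k * (x k * f k) = r * ∑ k, ψ k * x k * f k := by
      rw [Finset.sum_comm, Finset.mul_sum]
      apply Finset.sum_congr rfl
      intro k _
      have : ∑ j, ψ j * M j k * (x k * f k) = (∑ j, Mᵀ k j * ψ j) * (x k * f k) := by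
        rw [Finset.sum_mul]
        exact Finset.sum_congr rfl fun j _ => by rw [Matrix.transpose_apply]; ring
      rw [this]
      have h3 : ∑ j, Mᵀ k j * ψ j = Mᵀ.mulVec ψ k := by
        rw [Matrix.mulVec, dotProduct]
      rw [h3, congrFun hMψ k]
      simp only [Pi.smul_apply, smul_eq_mul]
      ring
    have e2 : ∑ j, ∑ k, (ψ j * f j) * M j k * x k = r * ∑ j, ψ j * x j * f j := by
      rw [Finset.mul_sum]
      apply Finset.sum_congr rfl
      intro j _
      have : ∑ k, (ψ j * f j) * M j k * x k = (ψ j * f j) * M.mulVec x j := by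
        rw [Matrix.mulVec, dotProduct, Finset.mul_sum]
        exact Finset.sum_congr rfl fun k _ => by ring
      rw [this, congrFun hMx j]
      simp only [Pi.smul_apply, smul_eq_mul]
      ring
    calc ∑ j, ∑ k, ψ j * M j k * x k * (1 + f k - f j)
        = ∑ j, ∑ k, (ψ j * M j k * x k + ψ j * M j k * (x k * f k)
            - (ψ j * f j) * M j k * x k) := by
          apply Finset.sum_congr rfl; intro j _
          apply Finset.sum_congr rfl; intro k _
          exact hexp j k
      _ = (∑ j, ∑ k, ψ j * M j k * x k) + (∑ j, ∑ k, ψ j * M j k * (x k * f k))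
            - ∑ j, ∑ k, (ψ j * f j) * M j k * x k := by
          simp only [Finset.sum_add_distrib, Finset.sum_sub_distrib]
      _ = r * ∑ j, ψ j * x j := by
          rw [e0, e1, e2]
          have : ∑ k, ψ k * x k * f k = ∑ j, ψ j * x j * f j := rfl
          rw [this]
          ring
  rw [hRHS, ← hsum]
  apply Finset.sum_le_sum
  intro j _
  exact Finset.sum_le_sum fun k _ => hptwise j k

end DV
section Main
variable {n : ℕ}

lemma Md_mulVec_apply (A : Matrix (Fin n) (Fin n) ℝ) (m : Fin n → ℝ) (d : ℝ)
    (v : Fin n → ℝ) (j : Fin n) :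
    (d • A + Matrix.diagonal m).mulVec v j = d * A.mulVec v j + m j * v j := by
  rw [Matrix.add_mulVec, Matrix.smul_mulVec]
  simp only [Pi.add_apply, Pi.smul_apply, smul_eq_mul, Matrix.mulVec_diagonal]

lemma Md_metzler (A : Matrix (Fin n) (Fin n) ℝ) (m : Fin n → ℝ) {d : ℝ} (hd : 0 ≤ d)
    (hoff : ∀ j k, j ≠ k → 0 ≤ A j k) :
    Metzler (d • A + Matrix.diagonal m) := by
  intro j k hjk
  rw [Matrix.add_apply, Matrix.smul_apply, Matrix.diagonal_apply_ne _ hjk, smul_eq_mul]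
  have := hoff j k hjk
  nlinarith

lemma Md_irr (A : Matrix (Fin n) (Fin n) ℝ) (m : Fin n → ℝ) {d : ℝ} (hd : 0 < d)
    (hirr : Irr A) : Irr (d • A + Matrix.diagonal m) := by
  intro S h1 h2
  obtain ⟨j, hj, k, hk, hjk⟩ := hirr S h1 h2
  refine ⟨j, hj, k, hk, ?_⟩
  have hne : j ≠ k := fun h => hj (h ▸ hk)
  rw [Matrix.add_apply, Matrix.smul_apply, Matrix.diagonal_apply_ne _ hne, smul_eq_mul]
  nlinarith

lemma Mdt_mulVec_apply (A : Matrix (Fin n) (Fin n) ℝ) (m : Fin n → ℝ) (d : ℝ)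
    (v : Fin n → ℝ) (j : Fin n) :
    (d • A + Matrix.diagonal m)ᵀ.mulVec v j = d * Aᵀ.mulVec v j + m j * v j := by
  rw [Matrix.transpose_add, Matrix.transpose_smul, Matrix.diagonal_transpose,
    Matrix.add_mulVec, Matrix.smul_mulVec]
  simp only [Pi.add_apply, Pi.smul_apply, smul_eq_mul, Matrix.mulVec_diagonal]

end Main

set_option maxHeartbeats 2000000 in
theorem stmt0 {n : ℕ} (hn : 2 ≤ n) (A : Matrix (Fin n) (Fin n) ℝ) (m : Fin n → ℝ)
    (hm : ∀ j, 0 < m j)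
    (hoff : ∀ j k, j ≠ k → 0 ≤ A j k)
    (hirr : ∀ S : Finset (Fin n), S.Nonempty → S ≠ Finset.univ →
      ∃ j ∉ S, ∃ k ∈ S, 0 < A j k)
    (hcol : ∀ j, ∑ k ∈ Finset.univ.erase j, A k j ≤ -A j j)
    (hstr : ∃ j, ∑ k ∈ Finset.univ.erase j, A k j < -A j j) :
    StrictAntiOn (fun d : ℝ => specBound (d • A + Matrix.diagonal m)) (Set.Ioi 0) ∧
    Tendsto (fun d : ℝ => specBound (d • A + Matrix.diagonal m))
      (nhdsWithin 0 (Set.Ioi 0)) (nhds (⨆ j : Fin n, m j)) ∧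
    Tendsto (fun d : ℝ => specBound (d • A + Matrix.diagonal m)) atTop atBot ∧
    ∃! dstar : ℝ, 0 < dstar ∧ specBound (dstar • A + Matrix.diagonal m) = 0 ∧
      (∀ d, 0 < d → d < dstar → 0 < specBound (d • A + Matrix.diagonal m)) ∧
      (∀ d, dstar < d → specBound (d • A + Matrix.diagonal m) < 0) := by
  have hn0 : 0 < n := by omega
  haveI : Nonempty (Fin n) := ⟨⟨0, hn0⟩⟩
  have hune : (Finset.univ : Finset (Fin n)).Nonempty := Finset.univ_nonempty
  set s : ℝ → ℝ := fun d => specBound (d • A + Matrix.diagonal m) with hs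
  -- Perron data for A itself
  obtain ⟨xA, ψA, hxA, hψA, hAx, hAψ⟩ := perron_full hn0 hoff hirr
  set rA : ℝ := specBound A with hrAdef
  -- rA < 0
  have hrA : rA < 0 := by
    have h1 : ∑ j, A.mulVec xA j = rA * ∑ j, xA j := by
      rw [hAx]
      simp only [Pi.smul_apply, smul_eq_mul]
      rw [Finset.mul_sum]
    have h2 : ∑ j, A.mulVec xA j = ∑ k, (∑ j, A j k) * xA k := by
      simp only [Matrix.mulVec, dotProduct]
      rw [Finset.sum_comm]
      exact Finset.sum_congr rfl fun k _ => (Finset.sum_mul _ _ _).symm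
    have hcs : ∀ k, (∑ j, A j k) ≤ 0 := by
      intro k
      have h3 := hcol k
      have h4 := Finset.sum_erase_add Finset.univ (fun j => A j k) (Finset.mem_univ k)
      linarith
    obtain ⟨j₀, hj₀⟩ := hstr
    have hcs0 : (∑ j, A j j₀) < 0 := by
      have h4 := Finset.sum_erase_add Finset.univ (fun j => A j j₀) (Finset.mem_univ j₀)
      linarith
    have hsneg : ∑ k, (∑ j, A j k) * xA k < 0 := by
      have h5 : ∑ k, (∑ j, A j k) * xA k < ∑ _k : Fin n, (0:ℝ) :=
        Finset.sum_lt_sum (fun k _ => mul_nonpos_of_nonpos_of_nonneg (hcs k) (hxA k).le)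
          ⟨j₀, Finset.mem_univ j₀, mul_neg_of_neg_of_pos hcs0 (hxA j₀)⟩
      simpa using h5
    have hXp : 0 < ∑ j, xA j := Finset.sum_pos (fun j _ => hxA j) hune
    by_contra hge
    push_neg at hge
    have : 0 ≤ rA * ∑ j, xA j := mul_nonneg hge hXp.le
    rw [← h1, h2] at this
    linarith
  -- Perron data for each d > 0
  have hdata : ∀ d : ℝ, 0 < d → ∃ x ψ : Fin n → ℝ, (∀ j, 0 < x j) ∧ (∀ j, 0 < ψ j) ∧
      (d • A + Matrix.diagonal m).mulVec x = s d • x ∧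
      (d • A + Matrix.diagonal m)ᵀ.mulVec ψ = s d • ψ := by
    intro d hd
    exact perron_full hn0 (Md_metzler A m hd.le hoff) (Md_irr A m hd hirr)
  -- master inequality
  have master : ∀ d₁ d₂ : ℝ, 0 < d₁ → d₁ < d₂ → s d₂ ≤ s d₁ + (d₂ - d₁) * rA := by
    intro d₁ d₂ h₁ h₁₂
    have h₂ : 0 < d₂ := h₁.trans h₁₂
    obtain ⟨x₁, ψ₁, hx₁, hψ₁, he₁, het₁⟩ := hdata d₁ h₁
    obtain ⟨x₂, ψ₂, hx₂, hψ₂, he₂, het₂⟩ := hdata d₂ h₂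
    have hP : 0 < ∑ j, ψ₂ j * x₂ j :=
      Finset.sum_pos (fun j _ => mul_pos (hψ₂ j) (hx₂ j)) hune
    -- identity (i)
    have hi : d₂ * (∑ j, ψ₂ j * A.mulVec x₂ j) + (∑ j, ψ₂ j * (m j * x₂ j))
        = s d₂ * ∑ j, ψ₂ j * x₂ j := by
      have hcomp : ∀ j, ψ₂ j * (d₂ * A.mulVec x₂ j) + ψ₂ j * (m j * x₂ j)
          = s d₂ * (ψ₂ j * x₂ j) := by
        intro j
        have hcj := congrFun he₂ j
        rw [Md_mulVec_apply] at hcj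
        have hcj' : d₂ * A.mulVec x₂ j + m j * x₂ j = s d₂ * x₂ j := by
          rw [hcj]; rfl
        linear_combination ψ₂ j * hcj'
      calc d₂ * (∑ j, ψ₂ j * A.mulVec x₂ j) + (∑ j, ψ₂ j * (m j * x₂ j))
          = ∑ j, (ψ₂ j * (d₂ * A.mulVec x₂ j) + ψ₂ j * (m j * x₂ j)) := by
            rw [Finset.mul_sum, ← Finset.sum_add_distrib]
            exact Finset.sum_congr rfl fun j _ => by ring
        _ = ∑ j, s d₂ * (ψ₂ j * x₂ j) := Finset.sum_congr rfl fun j _ => hcomp j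
        _ = s d₂ * ∑ j, ψ₂ j * x₂ j := by rw [Finset.mul_sum]
    -- dv with u = xA
    have hdv1 := dv_ineq (Md_metzler A m h₂.le hoff) hx₂ hψ₂ hxA he₂ het₂
    have hii : s d₂ * (∑ j, ψ₂ j * x₂ j)
        ≤ d₂ * rA * (∑ j, ψ₂ j * x₂ j) + (∑ j, ψ₂ j * (m j * x₂ j)) := by
      have hu1 : ∀ j, (d₂ • A + Matrix.diagonal m).mulVec xA j / xA j = d₂ * rA + m j := by
        intro j
        rw [Md_mulVec_apply, div_eq_iff (hxA j).ne']
        have hAxj : A.mulVec xA j = rA * xA j := by rw [hAx]; rfl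
        linear_combination d₂ * hAxj
      have hRHS : (∑ j, ψ₂ j * x₂ j * ((d₂ • A + Matrix.diagonal m).mulVec xA j / xA j))
          = d₂ * rA * (∑ j, ψ₂ j * x₂ j) + (∑ j, ψ₂ j * (m j * x₂ j)) := by
        rw [Finset.mul_sum, ← Finset.sum_add_distrib]
        refine Finset.sum_congr rfl fun j _ => ?_
        rw [hu1 j]
        ring
      rw [hRHS] at hdv1
      exact hdv1
    -- dv with u = x₁
    have hdv2 := dv_ineq (Md_metzler A m h₂.le hoff) hx₂ hψ₂ hx₁ he₂ het₂
    have hiii : s d₂ * (∑ j, ψ₂ j * x₂ j)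
        ≤ (d₂/d₁) * (s d₁ * (∑ j, ψ₂ j * x₂ j) - (∑ j, ψ₂ j * (m j * x₂ j)))
          + (∑ j, ψ₂ j * (m j * x₂ j)) := by
      have hAx₁ : ∀ j, A.mulVec x₁ j = (s d₁ - m j) * x₁ j / d₁ := by
        intro j
        rw [eq_div_iff h₁.ne']
        have hcj := congrFun he₁ j
        rw [Md_mulVec_apply] at hcj
        have hcj' : d₁ * A.mulVec x₁ j + m j * x₁ j = s d₁ * x₁ j := by
          rw [hcj]; rfl
        linear_combination hcj'
      have hu2 : ∀ j, (d₂ • A + Matrix.diagonal m).mulVec x₁ j / x₁ j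
          = (d₂/d₁) * (s d₁ - m j) + m j := by
        intro j
        rw [Md_mulVec_apply, div_eq_iff (hx₁ j).ne', hAx₁ j]
        field_simp
      have hRHS : (∑ j, ψ₂ j * x₂ j * ((d₂ • A + Matrix.diagonal m).mulVec x₁ j / x₁ j))
          = (d₂/d₁) * (s d₁ * (∑ j, ψ₂ j * x₂ j) - (∑ j, ψ₂ j * (m j * x₂ j)))
            + (∑ j, ψ₂ j * (m j * x₂ j)) := by
        have e1 : ∀ j, ψ₂ j * x₂ j * ((d₂ • A + Matrix.diagonal m).mulVec x₁ j / x₁ j)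
            = (d₂/d₁) * (s d₁ * (ψ₂ j * x₂ j) - ψ₂ j * (m j * x₂ j))
              + ψ₂ j * (m j * x₂ j) := by
          intro j
          rw [hu2 j]
          ring
        rw [Finset.sum_congr rfl fun j _ => e1 j, Finset.sum_add_distrib]
        congr 1
        rw [← Finset.mul_sum]
        congr 1
        rw [Finset.sum_sub_distrib, ← Finset.mul_sum]
      rw [hRHS] at hdv2
      exact hdv2
    -- combine
    set P : ℝ := ∑ j, ψ₂ j * x₂ j with hPdef
    set Q : ℝ := ∑ j, ψ₂ j * (m j * x₂ j) with hQdef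
    set γ : ℝ := ∑ j, ψ₂ j * A.mulVec x₂ j with hγdef
    have key2 : γ ≤ rA * P := by
      have h6 : d₂ * γ ≤ d₂ * (rA * P) := by nlinarith [hi, hii]
      exact le_of_mul_le_mul_left h6 h₂
    have key1 : d₁ * γ ≤ s d₁ * P - Q := by
      have e : d₂ * γ ≤ (d₂/d₁) * (s d₁ * P - Q) := by linarith [hi, hiii]
      have e2 := mul_le_mul_of_nonneg_left e (div_nonneg h₁.le h₂.le)
      have e3 : (d₁/d₂) * (d₂ * γ) = d₁ * γ := by field_simp
      have e4 : (d₁/d₂) * ((d₂/d₁) * (s d₁ * P - Q)) = s d₁ * P - Q := by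
        field_simp
      rw [e3, e4] at e2
      exact e2
    have final : s d₂ * P ≤ (s d₁ + (d₂ - d₁) * rA) * P := by
      have h7 : (d₂ - d₁) * γ ≤ (d₂ - d₁) * (rA * P) :=
        mul_le_mul_of_nonneg_left key2 (by linarith)
      nlinarith [hi, key1, h7]
    exact le_of_mul_le_mul_right final hP
  -- pointwise lower bound
  have hlb : ∀ d, 0 < d → ∀ j, m j + d * A j j ≤ s d := by
    intro d hd j
    obtain ⟨x, ψ, hx, hψ, he, _⟩ := hdata d hd
    have h1' := congrFun he j
    rw [Md_mulVec_apply] at h1'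
    have h1 : d * A.mulVec x j + m j * x j = s d * x j := by rw [h1']; rfl
    have h2 : A j j * x j ≤ A.mulVec x j := by
      rw [Matrix.mulVec, dotProduct]
      have h4 := Finset.sum_erase_add Finset.univ (fun k => A j k * x k) (Finset.mem_univ j)
      have hnn : 0 ≤ ∑ k ∈ Finset.univ.erase j, A j k * x k :=
        Finset.sum_nonneg fun k hk =>
          mul_nonneg (hoff j k (Ne.symm (Finset.mem_erase.mp hk).1)) (hx k).le
      linarith
    have h5 : d * (A j j * x j) ≤ d * A.mulVec x j := mul_le_mul_of_nonneg_left h2 hd.le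
    have h3 : (m j + d * A j j) * x j ≤ s d * x j := by nlinarith [h1, h5]
    exact le_of_mul_le_mul_right h3 (hx j)
  -- upper bound by column... row sums
  have hub : ∀ d, 0 < d → s d ≤ Finset.univ.sup' hune (fun j => m j + d * (∑ k, A j k)) := by
    intro d hd
    obtain ⟨x, ψ, hx, hψ, he, het⟩ := hdata d hd
    have hW : 0 < ∑ j, ψ j := Finset.sum_pos (fun j _ => hψ j) hune
    have h1 : ∑ j, ψ j * (d • A + Matrix.diagonal m).mulVec (fun _ => 1) j
        = s d * ∑ j, ψ j := by
      rw [dot_mulVec_eq, het]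
      simp only [Pi.smul_apply, smul_eq_mul, mul_one]
      rw [Finset.mul_sum]
    have h2 : ∀ j, (d • A + Matrix.diagonal m).mulVec (fun _ => 1) j
        = m j + d * ∑ k, A j k := by
      intro j
      rw [Md_mulVec_apply]
      have : A.mulVec (fun _ => 1) j = ∑ k, A j k := by
        rw [Matrix.mulVec, dotProduct]
        simp
      rw [this]
      ring
    have h3 : s d * ∑ j, ψ j
        ≤ (Finset.univ.sup' hune fun j => m j + d * ∑ k, A j k) * ∑ j, ψ j := by
      rw [← h1]
      calc ∑ j, ψ j * (d • A + Matrix.diagonal m).mulVec (fun _ => 1) j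
          ≤ ∑ j, ψ j * (Finset.univ.sup' hune fun j => m j + d * ∑ k, A j k) := by
            refine Finset.sum_le_sum fun j _ => ?_
            refine mul_le_mul_of_nonneg_left ?_ (hψ j).le
            rw [h2 j]
            exact Finset.le_sup' (f := fun j => m j + d * ∑ k, A j k) (Finset.mem_univ j)
        _ = (Finset.univ.sup' hune fun j => m j + d * ∑ k, A j k) * ∑ j, ψ j := by
            rw [Finset.mul_sum]
            exact Finset.sum_congr rfl fun j _ => by ring
    exact le_of_mul_le_mul_right h3 hW
  -- local Lipschitz bound
  have hlip : ∀ d₀, 0 < d₀ → ∃ C : ℝ, 0 ≤ C ∧ ∀ d, 0 < d → |s d - s d₀| ≤ C * |d - d₀| := by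
    intro d₀ hd₀
    obtain ⟨x₀, ψ₀, hx₀, hψ₀, he₀, _⟩ := hdata d₀ hd₀
    set C : ℝ := Finset.univ.sup' hune (fun j => |A.mulVec x₀ j| / x₀ j) with hCdef
    have hC0 : 0 ≤ C :=
      le_trans (div_nonneg (abs_nonneg (A.mulVec x₀ ⟨0, hn0⟩)) (hx₀ ⟨0, hn0⟩).le)
        (Finset.le_sup' (f := fun j => |A.mulVec x₀ j| / x₀ j) (Finset.mem_univ ⟨0, hn0⟩))
    have hCb : ∀ j, |A.mulVec x₀ j| ≤ C * x₀ j := by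
      intro j
      have h5 : |A.mulVec x₀ j| / x₀ j ≤ C :=
        Finset.le_sup' (f := fun j => |A.mulVec x₀ j| / x₀ j) (Finset.mem_univ j)
      exact (div_le_iff₀ (hx₀ j)).mp h5
    refine ⟨C, hC0, ?_⟩
    intro d hd
    obtain ⟨x, ψ, hx, hψ, he, het⟩ := hdata d hd
    have hW : 0 < ∑ j, ψ j * x₀ j :=
      Finset.sum_pos (fun j _ => mul_pos (hψ j) (hx₀ j)) hune
    have h1 : ∑ j, ψ j * (d • A + Matrix.diagonal m).mulVec x₀ j
        = s d * ∑ j, ψ j * x₀ j := by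
      rw [dot_mulVec_eq, het]
      simp only [Pi.smul_apply, smul_eq_mul]
      rw [Finset.mul_sum]
      exact Finset.sum_congr rfl fun j _ => by ring
    have h2 : ∀ j, (d • A + Matrix.diagonal m).mulVec x₀ j
        = s d₀ * x₀ j + (d - d₀) * A.mulVec x₀ j := by
      intro j
      rw [Md_mulVec_apply]
      have hcj := congrFun he₀ j
      rw [Md_mulVec_apply] at hcj
      have hcj' : d₀ * A.mulVec x₀ j + m j * x₀ j = s d₀ * x₀ j := by rw [hcj]; rfl
      linear_combination hcj'
    have h3 : (s d - s d₀) * ∑ j, ψ j * x₀ j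
        = (d - d₀) * ∑ j, ψ j * A.mulVec x₀ j := by
      have h6 : ∑ j, ψ j * (s d₀ * x₀ j + (d - d₀) * A.mulVec x₀ j)
          = s d * ∑ j, ψ j * x₀ j := by
        rw [← h1]
        exact Finset.sum_congr rfl fun j _ => by rw [h2 j]
      have hexp : ∑ j, ψ j * (s d₀ * x₀ j + (d - d₀) * A.mulVec x₀ j)
          = s d₀ * (∑ j, ψ j * x₀ j) + (d - d₀) * ∑ j, ψ j * A.mulVec x₀ j := by
        rw [Finset.mul_sum, Finset.mul_sum, ← Finset.sum_add_distrib]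
        exact Finset.sum_congr rfl fun j _ => by ring
      rw [hexp] at h6
      linear_combination -h6
    have h5 : |∑ j, ψ j * A.mulVec x₀ j| ≤ C * ∑ j, ψ j * x₀ j := by
      calc |∑ j, ψ j * A.mulVec x₀ j| ≤ ∑ j, |ψ j * A.mulVec x₀ j| :=
            Finset.abs_sum_le_sum_abs _ _
        _ ≤ ∑ j, ψ j * (C * x₀ j) := by
            refine Finset.sum_le_sum fun j _ => ?_
            rw [abs_mul, abs_of_pos (hψ j)]
            exact mul_le_mul_of_nonneg_left (hCb j) (hψ j).le
        _ = C * ∑ j, ψ j * x₀ j := by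
            rw [Finset.mul_sum]
            exact Finset.sum_congr rfl fun j _ => by ring
    have h4 : |s d - s d₀| * (∑ j, ψ j * x₀ j) ≤ (C * |d - d₀|) * (∑ j, ψ j * x₀ j) := by
      calc |s d - s d₀| * (∑ j, ψ j * x₀ j)
          = |(s d - s d₀) * ∑ j, ψ j * x₀ j| := by rw [abs_mul, abs_of_pos hW]
        _ = |(d - d₀) * ∑ j, ψ j * A.mulVec x₀ j| := by rw [h3]
        _ = |d - d₀| * |∑ j, ψ j * A.mulVec x₀ j| := abs_mul _ _
        _ ≤ |d - d₀| * (C * ∑ j, ψ j * x₀ j) :=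
            mul_le_mul_of_nonneg_left h5 (abs_nonneg _)
        _ = (C * |d - d₀|) * (∑ j, ψ j * x₀ j) := by ring
    exact le_of_mul_le_mul_right h4 hW
  -- continuity on Ioi 0
  have hcont : ContinuousOn s (Ioi 0) := by
    intro d₀ hd₀
    obtain ⟨C, hC0, hC⟩ := hlip d₀ hd₀
    rw [Metric.continuousWithinAt_iff]
    intro ε hε
    refine ⟨ε / (C + 1), by positivity, fun {d} hd hlt => ?_⟩
    rw [Real.dist_eq] at hlt ⊢
    calc |s d - s d₀| ≤ C * |d - d₀| := hC d hd
      _ ≤ C * (ε / (C + 1)) := mul_le_mul_of_nonneg_left hlt.le hC0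
      _ = (C * ε) / (C + 1) := by ring
      _ < ε := by
          rw [div_lt_iff₀ (by positivity : (0:ℝ) < C + 1)]
          nlinarith
  -- choose a with s a > 0
  set j₀ : Fin n := ⟨0, hn0⟩ with hj₀def
  set a : ℝ := m j₀ / (2 * (1 + |A j₀ j₀|)) with hadef
  have hapos : 0 < a := by
    apply div_pos (hm j₀)
    positivity
  have hsa : 0 < s a := by
    have h1 := hlb a hapos j₀
    have h2 : a * |A j₀ j₀| ≤ m j₀ / 2 := by
      rw [hadef, div_mul_eq_mul_div, div_le_div_iff₀ (by positivity) two_pos]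
      nlinarith [abs_nonneg (A j₀ j₀), hm j₀]
    have h3 : -(m j₀ / 2) ≤ a * A j₀ j₀ := by
      have h4 := neg_abs_le (A j₀ j₀)
      nlinarith [hapos.le]
    nlinarith [hm j₀]
  -- choose b with s b < 0
  have hne : rA ≠ 0 := ne_of_lt hrA
  set b : ℝ := a + (s a + 1) * (-rA)⁻¹ with hbdef
  have hab : a < b := by
    have h0 : 0 < (s a + 1) * (-rA)⁻¹ :=
      mul_pos (by linarith) (inv_pos.mpr (by linarith))
    rw [hbdef]
    linarith
  have hsb : s b < 0 := by
    have h1 := master a b hapos hab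
    have hba : b - a = (s a + 1) * (-rA)⁻¹ := by rw [hbdef]; ring
    have hinv : (-rA)⁻¹ * rA = -1 := by rw [inv_neg, neg_mul, inv_mul_cancel₀ hne]
    have h2 : (b - a) * rA = -(s a + 1) := by
      rw [hba, mul_assoc, hinv]
      ring
    linarith
  -- IVT
  have hIoi : Icc a b ⊆ Ioi (0:ℝ) := fun y hy => lt_of_lt_of_le hapos hy.1
  have hivt := intermediate_value_Icc' (le_of_lt hab) (hcont.mono hIoi)
  obtain ⟨dstar, hdmem, hdeq⟩ := hivt ⟨hsb.le, hsa.le⟩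
  have hdpos : 0 < dstar := lt_of_lt_of_le hapos hdmem.1
  -- strict antitonicity
  have hanti : StrictAntiOn s (Ioi 0) := by
    intro d₁ h₁ d₂ h₂ h₁₂
    have h3 := master d₁ d₂ h₁ h₁₂
    have h4 : (d₂ - d₁) * rA < 0 := mul_neg_of_pos_of_neg (by linarith) hrA
    linarith
  refine ⟨hanti, ?_, ?_, ?_⟩
  · -- tendsto at 0+
    obtain ⟨jstar, hjstar⟩ := exists_eq_ciSup_of_finite (f := m)
    set RM : ℝ := Finset.univ.sup' hune (fun j => |∑ k, A j k|) with hRM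
    have hRM0 : 0 ≤ RM := le_trans (abs_nonneg (∑ k, A j₀ k))
      (Finset.le_sup' (f := fun j => |∑ k, A j k|) (Finset.mem_univ j₀))
    have hlow : ∀ d ∈ Ioi (0:ℝ), (⨆ j, m j) + d * A jstar jstar ≤ s d := by
      intro d hd
      have h6 := hlb d hd jstar
      rw [hjstar] at h6
      exact h6
    have hup : ∀ d ∈ Ioi (0:ℝ), s d ≤ (⨆ j, m j) + d * RM := by
      intro d hd
      refine le_trans (hub d hd) ?_
      refine Finset.sup'_le _ _ fun j _ => ?_
      have hm1 : m j ≤ ⨆ j, m j := le_ciSup (Set.Finite.bddAbove (Set.finite_range m)) j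
      have hm2 : d * (∑ k, A j k) ≤ d * RM := by
        refine mul_le_mul_of_nonneg_left ?_ (le_of_lt hd)
        exact le_trans (le_abs_self _)
          (Finset.le_sup' (f := fun j => |∑ k, A j k|) (Finset.mem_univ j))
      linarith
    have t1 : Tendsto (fun d : ℝ => (⨆ j, m j) + d * A jstar jstar)
        (nhdsWithin 0 (Ioi 0)) (nhds (⨆ j, m j)) := by
      have hco : Continuous (fun d : ℝ => (⨆ j, m j) + d * A jstar jstar) :=
        continuous_const.add (continuous_id.mul continuous_const)
      have h7 := hco.tendsto 0
      simp only [zero_mul, add_zero] at h7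
      exact h7.mono_left nhdsWithin_le_nhds
    have t2 : Tendsto (fun d : ℝ => (⨆ j, m j) + d * RM)
        (nhdsWithin 0 (Ioi 0)) (nhds (⨆ j, m j)) := by
      have hco : Continuous (fun d : ℝ => (⨆ j, m j) + d * RM) :=
        continuous_const.add (continuous_id.mul continuous_const)
      have h7 := hco.tendsto 0
      simp only [zero_mul, add_zero] at h7
      exact h7.mono_left nhdsWithin_le_nhds
    refine tendsto_of_tendsto_of_tendsto_of_le_of_le' t1 t2 ?_ ?_
    · filter_upwards [self_mem_nhdsWithin] with d hd using hlow d hd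
    · filter_upwards [self_mem_nhdsWithin] with d hd using hup d hd
  · -- tendsto atTop atBot
    have hbd : ∀ᶠ d in atTop, s d ≤ s a + (d - a) * rA := by
      filter_upwards [eventually_gt_atTop a] with d hd using master a d hapos hd
    have h8 : Tendsto (fun d : ℝ => d - a) atTop atTop :=
      (tendsto_atTop_add_const_right atTop (-a) tendsto_id).congr
        (fun d => (sub_eq_add_neg d a).symm)
    have haff : Tendsto (fun d : ℝ => s a + (d - a) * rA) atTop atBot :=
      tendsto_atBot_add_const_left atTop (s a) (h8.atTop_mul_const_of_neg hrA)
    exact tendsto_atBot_mono' atTop hbd haff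
  · -- unique zero crossing
    refine ⟨dstar, ⟨hdpos, hdeq, ?_, ?_⟩, ?_⟩
    · intro d hd hdlt
      have h9 := hanti (mem_Ioi.mpr hd) (mem_Ioi.mpr hdpos) hdlt
      rw [hdeq] at h9
      exact h9
    · intro d hdgt
      have h9 := hanti (mem_Ioi.mpr hdpos) (mem_Ioi.mpr (hdpos.trans hdgt)) hdgt
      rw [hdeq] at h9
      exact h9
    · rintro y ⟨hy0, hyeq, -, -⟩
      exact hanti.injOn (mem_Ioi.mpr hy0) (mem_Ioi.mpr hdpos) (hyeq.trans hdeq.symm)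
end

section
/- There exist continuously differentiable maps β : (0,d_*] → ℝ and ξ : (0,d_*] → ℝⁿ with ⟨ς, ξ(d)⟩ = 0 for all d, such that for every d ∈ (0,d_*) the unique positive equilibrium satisfies u^d = β(d)(d_*−d)(η + (d_*−d)ξ(d)). Moreover β(d_*) = (Σ_j m_j η_j ς_j)/(−d_*(ã+b̃)) > 0, and ξ(d_*) is the unique vector ξ ∈ ℝⁿ with ⟨ς,ξ⟩ = 0 satisfying d_*(d_* Σ_k α_{jk} ξ_k + m_j ξ_j) + η_j(m_j + d_* β(d_*)(a_j+b_j)η_j) = 0 for all j = 1,…,n. -/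
open Matrix Filter Set

/-- Partial derivative of `f : ℝ × ℝ → ℝ` with respect to the first variable. -/
noncomputable def pd1 (f : ℝ × ℝ → ℝ) (x y : ℝ) : ℝ := fderiv ℝ f (x, y) (1, 0)

/-- Partial derivative of `f : ℝ × ℝ → ℝ` with respect to the second variable. -/
noncomputable def pd2 (f : ℝ × ℝ → ℝ) (x y : ℝ) : ℝ := fderiv ℝ f (x, y) (0, 1)

/-- The characteristic matrix
`Δ(d,μ,τ) = dA + diag(f_j(u_j,u_j) + u_j a_j^d) + e^{-μτ} diag(u_j b_j^d) - μ I`. -/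
noncomputable def charM {n : ℕ} (A : Matrix (Fin n) (Fin n) ℝ) (f : Fin n → ℝ × ℝ → ℝ)
    (u : Fin n → ℝ) (d : ℝ) (μ : ℂ) (τ : ℝ) : Matrix (Fin n) (Fin n) ℂ :=
  (d : ℂ) • A.map (fun x : ℝ => (x : ℂ))
    + Matrix.diagonal (fun j => ((f j (u j, u j) + u j * pd1 (f j) (u j) (u j) : ℝ) : ℂ))
    + Complex.exp (-μ * (τ : ℂ)) •
        Matrix.diagonal (fun j => ((u j * pd2 (f j) (u j) (u j) : ℝ) : ℂ))
    - μ • (1 : Matrix (Fin n) (Fin n) ℂ)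

open Topology



section MatrixLemmas

variable {n : ℕ} [NeZero n]

private lemma sup_ratio (p v : Fin n → ℝ) (hp : ∀ j, 0 < p j) :
    ∃ t : ℝ, (∀ j, v j ≤ t * p j) ∧ ∃ j0, v j0 = t * p j0 := by
  have hne : (Finset.univ : Finset (Fin n)).Nonempty := ⟨0, Finset.mem_univ 0⟩
  obtain ⟨j0, -, hj0⟩ := Finset.exists_mem_eq_sup' hne (fun j => v j / p j)
  refine ⟨Finset.univ.sup' hne (fun j => v j / p j), fun j => ?_, j0, ?_⟩
  · have h := Finset.le_sup' (f := fun j => v j / p j) (b := j) (Finset.mem_univ j)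
    have hpj := hp j
    calc v j = (v j / p j) * p j := by field_simp
    _ ≤ _ := mul_le_mul_of_nonneg_right h hpj.le
  · rw [hj0]; exact (div_mul_cancel₀ _ (hp j0).ne').symm

private lemma nonpos_of_quasipos (N : Matrix (Fin n) (Fin n) ℝ)
    (p v : Fin n → ℝ) (hp : ∀ j, 0 < p j)
    (hoff : ∀ j k, j ≠ k → 0 ≤ N j k)
    (hNp : ∀ j, ∑ k, N j k * p k < 0)
    (hv : ∀ j, ∑ k, N j k * v k = 0) : ∀ j, v j ≤ 0 := by
  obtain ⟨t, hle, j0, hj0⟩ := sup_ratio p v hp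
  rcases le_or_gt t 0 with ht | ht
  · intro j; have := hle j; nlinarith [hp j]
  · exfalso
    have h1 : ∑ k, N j0 k * (t * p k - v k)
        = t * (∑ k, N j0 k * p k) - ∑ k, N j0 k * v k := by
      rw [Finset.mul_sum, ← Finset.sum_sub_distrib]
      refine Finset.sum_congr rfl fun k _ => by ring
    have h2 : ∑ k, N j0 k * (t * p k - v k) < 0 := by
      rw [h1, hv j0]; have := hNp j0; nlinarith
    have h3 : 0 ≤ ∑ k, N j0 k * (t * p k - v k) := by
      refine Finset.sum_nonneg fun k _ => ?_
      rcases eq_or_ne k j0 with rfl | hne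
      · rw [← hj0]; simp
      · exact mul_nonneg (hoff j0 k (Ne.symm hne)) (by nlinarith [hle k])
    linarith

private lemma eq_zero_of_quasipos (N : Matrix (Fin n) (Fin n) ℝ)
    (p v : Fin n → ℝ) (hp : ∀ j, 0 < p j)
    (hoff : ∀ j k, j ≠ k → 0 ≤ N j k)
    (hNp : ∀ j, ∑ k, N j k * p k < 0)
    (hv : ∀ j, ∑ k, N j k * v k = 0) : v = 0 := by
  have h1 := nonpos_of_quasipos N p v hp hoff hNp hv
  have h2 := nonpos_of_quasipos N p (fun k => -v k) hp hoff hNp (by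
    intro j; rw [← neg_eq_zero, ← hv j, ← Finset.sum_neg_distrib]
    exact Finset.sum_congr rfl fun k _ => by ring)
  funext j
  have h2j : -v j ≤ 0 := h2 j
  have := h1 j; simp only [Pi.zero_apply]; linarith

private lemma exists_smul_of_kernel (N : Matrix (Fin n) (Fin n) ℝ)
    (η v : Fin n → ℝ) (hη : ∀ j, 0 < η j)
    (hoff : ∀ j k, j ≠ k → 0 ≤ N j k)
    (hirr : ∀ S : Finset (Fin n), S.Nonempty → S ≠ Finset.univ → ∃ j ∉ S, ∃ k ∈ S, 0 < N j k)
    (hNη : ∀ j, ∑ k, N j k * η k = 0)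
    (hv : ∀ j, ∑ k, N j k * v k = 0) : ∃ t, ∀ j, v j = t * η j := by
  obtain ⟨t, hle, j0, hj0⟩ := sup_ratio η v hη
  refine ⟨t, ?_⟩
  set w : Fin n → ℝ := fun k => t * η k - v k with hwdef
  have hw0 : ∀ j, ∑ k, N j k * w k = 0 := by
    intro j
    have : ∑ k, N j k * w k = t * (∑ k, N j k * η k) - ∑ k, N j k * v k := by
      rw [Finset.mul_sum, ← Finset.sum_sub_distrib]
      exact Finset.sum_congr rfl fun k _ => by simp [hwdef]; ring
    rw [this, hNη j, hv j]; ring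
  have hwnn : ∀ k, 0 ≤ w k := fun k => sub_nonneg.2 (hle k)
  by_contra hcon
  push_neg at hcon
  obtain ⟨j1, hj1⟩ := hcon
  have hwj1 : 0 < w j1 := by
    rcases lt_or_eq_of_le (hwnn j1) with h | h
    · exact h
    · exfalso; apply hj1; have : t * η j1 - v j1 = 0 := h.symm; linarith
  set S := Finset.univ.filter (fun k => 0 < w k) with hSdef
  have hSne : S.Nonempty := ⟨j1, by simp [hSdef, hwj1]⟩
  have hSneq : S ≠ Finset.univ := by
    intro hEq
    have hj0S : j0 ∈ S := hEq ▸ Finset.mem_univ j0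
    have : 0 < w j0 := by simpa [hSdef] using hj0S
    have : w j0 = 0 := by simp [hwdef]; linarith [hj0]
    linarith
  obtain ⟨j, hjS, k, hkS, hNjk⟩ := hirr S hSne hSneq
  have hwj : w j = 0 := by
    have : ¬ 0 < w j := by simpa [hSdef] using hjS
    linarith [hwnn j]
  have hwk : 0 < w k := by simpa [hSdef] using hkS
  have hpos : 0 < ∑ k', N j k' * w k' := by
    refine Finset.sum_pos' (fun k' _ => ?_) ⟨k, Finset.mem_univ k, mul_pos hNjk hwk⟩
    rcases eq_or_ne k' j with rfl | hne
    · rw [hwj, mul_zero]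
    · exact mul_nonneg (hoff j k' (Ne.symm hne)) (hwnn k')
  rw [hw0 j] at hpos
  exact lt_irrefl 0 hpos

end MatrixLemmas

section Hadamard

private lemma hadamard_id (g : ℝ → ℝ) (y : ℝ) :
    y * (if y = 0 then deriv g 0 else (g y - g 0) / y) = g y - g 0 := by
  rcases eq_or_ne y 0 with rfl | hy
  · simp
  · rw [if_neg hy]; field_simp

private lemma hadamard_contDiffAt {g : ℝ → ℝ} (hg : ContDiff ℝ 2 g) :
    ContDiff ℝ 1 (fun y => if y = 0 then deriv g 0 else (g y - g 0) / y) := by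
  set r : ℝ → ℝ := fun y => if y = 0 then deriv g 0 else (g y - g 0) / y with hrdef
  have hgd : Differentiable ℝ g := hg.differentiable (by norm_num)
  have hg2 : ContDiff ℝ (1 + 1) g := by
    have : ((2:ℕ) : WithTop ℕ∞) = 1 + 1 := by norm_num
    exact this ▸ hg
  have hg1 : ContDiff ℝ 1 (deriv g) := (contDiff_succ_iff_deriv.mp hg2).2.2
  have hg'd : Differentiable ℝ (deriv g) := hg1.differentiable one_ne_zero
  have hg''c : Continuous (deriv (deriv g)) := (contDiff_one_iff_deriv.mp hg1).2
  set D : ℝ → ℝ := fun y =>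
    if y = 0 then deriv (deriv g) 0 / 2 else (deriv g y * y - (g y - g 0)) / y ^ 2 with hDdef
  -- the key l'Hopital limit for continuity of D at 0
  have lim1 : Tendsto (fun y => (deriv g y * y - (g y - g 0)) / y ^ 2) (𝓝[≠] (0:ℝ))
      (𝓝 (deriv (deriv g) 0 / 2)) := by
    have hff' : ∀ y : ℝ, HasDerivAt (fun z => deriv g z * z - (g z - g 0))
        (deriv (deriv g) y * y) y := by
      intro y
      have h1 : HasDerivAt (fun z => deriv g z * z) (deriv (deriv g) y * y + deriv g y * 1) y :=
        ((hg'd y).hasDerivAt).mul (hasDerivAt_id y)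
      have h2 : HasDerivAt (fun z => g z - g 0) (deriv g y) y := ((hgd y).hasDerivAt).sub_const _
      have := h1.sub h2
      exact this.congr_deriv (by ring)
    have hgg' : ∀ y : ℝ, HasDerivAt (fun z : ℝ => z ^ 2) (2 * y) y := by
      intro y
      have := hasDerivAt_pow 2 y
      exact this.congr_deriv (by norm_num)
    have hdiv : Tendsto (fun y => (deriv (deriv g) y * y) / (2 * y)) (𝓝[≠] (0:ℝ))
        (𝓝 (deriv (deriv g) 0 / 2)) := by
      have hbase : Tendsto (fun y => deriv (deriv g) y / 2) (𝓝[≠] (0:ℝ))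
          (𝓝 (deriv (deriv g) 0 / 2)) :=
        ((hg''c.tendsto 0).div_const 2).mono_left nhdsWithin_le_nhds
      refine hbase.congr' ?_
      filter_upwards [self_mem_nhdsWithin] with y hy
      have hy' : y ≠ 0 := hy
      field_simp
    refine HasDerivAt.lhopital_zero_nhdsNE (Filter.Eventually.of_forall hff')
      (Filter.Eventually.of_forall hgg') ?_ ?_ ?_ hdiv
    · filter_upwards [self_mem_nhdsWithin] with y hy
      exact mul_ne_zero two_ne_zero hy
    · have : Continuous (fun z => deriv g z * z - (g z - g 0)) :=
        (hg1.continuous.mul continuous_id).sub (hgd.continuous.sub continuous_const)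
      have h0 : (fun z => deriv g z * z - (g z - g 0)) 0 = 0 := by simp
      exact (this.tendsto' 0 0 h0).mono_left nhdsWithin_le_nhds
    · have : Tendsto (fun y : ℝ => y ^ 2) (𝓝 0) (𝓝 0) := by
        simpa using ((continuous_pow 2).tendsto (0:ℝ))
      exact this.mono_left nhdsWithin_le_nhds
  have lim2 : Tendsto (fun y => (g y - g 0 - deriv g 0 * y) / y ^ 2) (𝓝[≠] (0:ℝ))
      (𝓝 (deriv (deriv g) 0 / 2)) := by
    have hff' : ∀ y : ℝ, HasDerivAt (fun z => g z - g 0 - deriv g 0 * z)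
        (deriv g y - deriv g 0) y := by
      intro y
      have h1 : HasDerivAt (fun z => g z - g 0) (deriv g y) y := ((hgd y).hasDerivAt).sub_const _
      have h2 : HasDerivAt (fun z : ℝ => deriv g 0 * z) (deriv g 0) y := by
        simpa using (hasDerivAt_id y).const_mul (deriv g 0)
      exact h1.sub h2
    have hgg' : ∀ y : ℝ, HasDerivAt (fun z : ℝ => z ^ 2) (2 * y) y := by
      intro y
      have := hasDerivAt_pow 2 y
      exact this.congr_deriv (by norm_num)
    have hslope : Tendsto (slope (deriv g) 0) (𝓝[≠] (0:ℝ)) (𝓝 (deriv (deriv g) 0)) :=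
      hasDerivAt_iff_tendsto_slope.mp ((hg'd 0).hasDerivAt)
    have hdiv : Tendsto (fun y => (deriv g y - deriv g 0) / (2 * y)) (𝓝[≠] (0:ℝ))
        (𝓝 (deriv (deriv g) 0 / 2)) := by
      have := hslope.div_const 2
      refine this.congr' ?_
      filter_upwards [self_mem_nhdsWithin] with y hy
      have hy' : (y : ℝ) ≠ 0 := hy
      rw [slope_def_field, sub_zero, div_div]
      ring
    refine HasDerivAt.lhopital_zero_nhdsNE (Filter.Eventually.of_forall hff')
      (Filter.Eventually.of_forall hgg') ?_ ?_ ?_ hdiv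
    · filter_upwards [self_mem_nhdsWithin] with y hy
      exact mul_ne_zero two_ne_zero hy
    · have : Continuous (fun z => g z - g 0 - deriv g 0 * z) :=
        (hgd.continuous.sub continuous_const).sub (continuous_const.mul continuous_id)
      have h0 : (fun z => g z - g 0 - deriv g 0 * z) 0 = 0 := by simp
      exact (this.tendsto' 0 0 h0).mono_left nhdsWithin_le_nhds
    · have : Tendsto (fun y : ℝ => y ^ 2) (𝓝 0) (𝓝 0) := by
        simpa using ((continuous_pow 2).tendsto (0:ℝ))
      exact this.mono_left nhdsWithin_le_nhds
  have hrD : ∀ y, HasDerivAt r (D y) y := by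
    intro y
    rcases eq_or_ne y 0 with rfl | hy
    · rw [hasDerivAt_iff_tendsto_slope]
      have hD0 : D 0 = deriv (deriv g) 0 / 2 := by simp [hDdef]
      rw [hD0]
      refine lim2.congr' ?_
      filter_upwards [self_mem_nhdsWithin] with z hz
      have hz' : (z : ℝ) ≠ 0 := hz
      rw [slope_def_field, hrdef]
      simp only [if_neg hz', if_pos rfl, ↓reduceIte]
      field_simp
      ring
    · have hev : r =ᶠ[𝓝 y] fun z => (g z - g 0) / z := by
        filter_upwards [isOpen_ne.mem_nhds hy] with z hz
        exact if_neg hz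
      have hder : HasDerivAt (fun z => (g z - g 0) / z)
          ((deriv g y * y - (g y - g 0) * 1) / y ^ 2) y :=
        (((hgd y).hasDerivAt).sub_const _).div (hasDerivAt_id y) hy
      have : HasDerivAt r ((deriv g y * y - (g y - g 0) * 1) / y ^ 2) y :=
        hder.congr_of_eventuallyEq hev
      convert this using 1
      rw [hDdef]; simp only [if_neg hy]; ring
  have hDc : Continuous D := by
    rw [continuous_iff_continuousAt]
    intro y
    rcases eq_or_ne y 0 with rfl | hy
    · have hD0 : D 0 = deriv (deriv g) 0 / 2 := by simp [hDdef]
      unfold ContinuousAt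
      rw [hD0, ← nhdsNE_sup_pure (0:ℝ), tendsto_sup]
      constructor
      · refine lim1.congr' ?_
        filter_upwards [self_mem_nhdsWithin] with z hz
        exact (if_neg hz).symm
      · have : D 0 = deriv (deriv g) 0 / 2 := hD0
        simpa [this] using tendsto_pure_nhds D 0
    · have hev : D =ᶠ[𝓝 y] fun z => (deriv g z * z - (g z - g 0)) / z ^ 2 := by
        filter_upwards [isOpen_ne.mem_nhds hy] with z hz
        exact if_neg hz
      have : ContinuousAt (fun z => (deriv g z * z - (g z - g 0)) / z ^ 2) y := by
        have h1 : ContinuousAt (fun z => deriv g z * z - (g z - g 0)) y :=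
          ((hg1.continuous.mul continuous_id).sub (hgd.continuous.sub continuous_const)).continuousAt
        have h2 : ContinuousAt (fun z : ℝ => z ^ 2) y := (continuous_pow 2).continuousAt
        exact h1.div h2 (pow_ne_zero 2 hy)
      exact this.congr hev.symm
  rw [contDiff_one_iff_deriv]
  refine ⟨fun y => (hrD y).differentiableAt, ?_⟩
  have : deriv r = D := funext fun y => (hrD y).deriv
  rw [this]; exact hDc

end Hadamard


private lemma interior_branch {n : ℕ} [NeZero n] (A : Matrix (Fin n) (Fin n) ℝ)
    (g : Fin n → ℝ → ℝ) (d0 : ℝ) (x0 : Fin n → ℝ)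
    (hgC : ∀ j, ContDiff ℝ 1 (g j))
    (hx0 : ∀ j, 0 < x0 j)
    (heq : ∀ j, d0 * ∑ k, A j k * x0 k + x0 j * g j (x0 j) = 0)
    (hoff : ∀ j k, j ≠ k → 0 ≤ A j k)
    (hd0 : 0 < d0)
    (hgneg : ∀ j, deriv (g j) (x0 j) < 0) :
    ∃ v : ℝ → Fin n → ℝ, ContDiffAt ℝ 1 v d0 ∧ v d0 = x0 ∧
      ∀ᶠ d in 𝓝 d0, (∀ j, 0 < v d j) ∧
        ∀ j, d * ∑ k, A j k * v d k + v d j * g j (v d j) = 0 := by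
  classical
  set Φ : ℝ × (Fin n → ℝ) → ℝ × (Fin n → ℝ) :=
    fun p => (p.1, fun j => p.1 * ∑ k, A j k * p.2 k + p.2 j * g j (p.2 j)) with hΦdef
  have hΦC : ContDiff ℝ 1 Φ := by
    refine contDiff_fst.prodMk (contDiff_pi.mpr fun j => ContDiff.add ?_ ?_)
    · exact contDiff_fst.mul
        (ContDiff.sum fun k _ => contDiff_const.mul ((contDiff_apply ℝ ℝ k).comp contDiff_snd))
    · exact ((contDiff_apply ℝ ℝ j).comp contDiff_snd).mul
        ((hgC j).comp ((contDiff_apply ℝ ℝ j).comp contDiff_snd))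
  -- row sums as derivatives
  have hrow : ∀ (j : Fin n) (x : (Fin n → ℝ)), HasFDerivAt (fun y : (Fin n → ℝ) => ∑ k, A j k * y k)
      (∑ k, A j k • ContinuousLinearMap.proj (R := ℝ) (φ := fun _ : Fin n => ℝ) k) x := by
    intro j x
    refine HasFDerivAt.fun_sum fun k _ => ?_
    exact (hasFDerivAt_apply k x).const_mul (A j k)
  set c : Fin n → ℝ := fun j => g j (x0 j) + x0 j * deriv (g j) (x0 j) with hcdef
  set fstL := ContinuousLinearMap.fst ℝ ℝ (Fin n → ℝ)
  set sndL := ContinuousLinearMap.snd ℝ ℝ (Fin n → ℝ)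
  set rowL : Fin n → (Fin n → ℝ) →L[ℝ] ℝ :=
    fun j => ∑ k, A j k • ContinuousLinearMap.proj (R := ℝ) (φ := fun _ : Fin n => ℝ) k with hrowL
  have hrowL_apply : ∀ j (x : (Fin n → ℝ)), rowL j x = ∑ k, A j k * x k := by
    intro j x
    simp [hrowL, ContinuousLinearMap.sum_apply]
  set Jrow : Fin n → (ℝ × (Fin n → ℝ)) →L[ℝ] ℝ := fun j =>
    (d0 • ((rowL j).comp sndL) + (∑ k, A j k * x0 k) • fstL)
      + c j • ((ContinuousLinearMap.proj (R := ℝ) (φ := fun _ : Fin n => ℝ) j).comp sndL)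
    with hJrow
  set e0 : (ℝ × (Fin n → ℝ)) →L[ℝ] (ℝ × (Fin n → ℝ)) := fstL.prod (ContinuousLinearMap.pi Jrow) with he0
  have hΦd : HasFDerivAt Φ e0 (d0, x0) := by
    refine HasFDerivAt.prodMk (hasFDerivAt_fst) (hasFDerivAt_pi'' fun j => ?_)
    rw [ContinuousLinearMap.proj_pi]
    have t1 : HasFDerivAt (fun p : ℝ × (Fin n → ℝ) => p.1 * ∑ k, A j k * p.2 k)
        (d0 • ((rowL j).comp sndL) + (∑ k, A j k * x0 k) • fstL) (d0, x0) := by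
      have hb : HasFDerivAt (fun p : ℝ × (Fin n → ℝ) => ∑ k, A j k * p.2 k)
          ((rowL j).comp sndL) (d0, x0) := by
            have := (hrow j x0).comp (d0, x0) (hasFDerivAt_snd (𝕜 := ℝ) (p := (d0, x0))); exact this
      exact hasFDerivAt_fst.mul hb
    have t2 : HasFDerivAt (fun p : ℝ × (Fin n → ℝ) => p.2 j * g j (p.2 j))
        (c j • ((ContinuousLinearMap.proj (R := ℝ) (φ := fun _ : Fin n => ℝ) j).comp sndL))
        (d0, x0) := by
      have h1 : HasDerivAt (fun y => y * g j y)
          (1 * g j (x0 j) + x0 j * deriv (g j) (x0 j)) (x0 j) :=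
        (hasDerivAt_id (x0 j)).mul ((hgC j).differentiable one_ne_zero (x0 j)).hasDerivAt
      have h2 : HasFDerivAt (fun p : ℝ × (Fin n → ℝ) => p.2 j)
          ((ContinuousLinearMap.proj (R := ℝ) (φ := fun _ : Fin n => ℝ) j).comp sndL) (d0, x0) :=
        ((ContinuousLinearMap.proj (R := ℝ) (φ := fun _ : Fin n => ℝ) j).comp sndL).hasFDerivAt
      have h3 := h1.comp_hasFDerivAt (d0, x0) h2
      simp only [one_mul] at h3; exact h3
    exact t1.add t2
  -- injectivity of e0
  have hker : ∀ X : ℝ × (Fin n → ℝ), e0 X = 0 → X = 0 := by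
    rintro ⟨δ, w⟩ hX
    have hδ : δ = 0 := by
      have := congrArg Prod.fst hX
      simpa [he0, fstL] using this
    subst hδ
    have hJ : ∀ j, d0 * (∑ k, A j k * w k) + c j * w j = 0 := by
      intro j
      have h1 := congrArg Prod.snd hX
      have h2 := congrFun h1 j
      simpa [he0, hJrow, hrowL_apply, fstL, sndL, ContinuousLinearMap.sum_apply] using h2
    set N : Matrix (Fin n) (Fin n) ℝ :=
      Matrix.of fun j k => d0 * A j k + if j = k then c j else 0 with hN
    have hNsum : ∀ (x : (Fin n → ℝ)) j, ∑ k, N j k * x k = d0 * ∑ k, A j k * x k + c j * x j := by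
      intro x j
      have : ∀ k, N j k * x k = d0 * (A j k * x k) + (if j = k then c j * x k else 0) := by
        intro k
        simp only [hN, Matrix.of_apply, add_mul, ite_mul, zero_mul]
        ring_nf
      rw [Finset.sum_congr rfl fun k _ => this k, Finset.sum_add_distrib,
        Finset.sum_ite_eq Finset.univ j (fun k => c j * x k), if_pos (Finset.mem_univ j),
        ← Finset.mul_sum]
    have hw : w = 0 := by
      refine eq_zero_of_quasipos N x0 w hx0 ?_ ?_ ?_
      · intro j k hjk
        simp only [hN, Matrix.of_apply, if_neg hjk, add_zero]
        exact mul_nonneg hd0.le (hoff j k hjk)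
      · intro j
        rw [hNsum]
        have h1 := heq j
        have h2 := mul_neg_of_pos_of_neg (mul_pos (hx0 j) (hx0 j)) (hgneg j)
        simp only [hcdef]
        nlinarith
      · intro j; rw [hNsum]; exact hJ j
    simp [hw]
  have hinj : Function.Injective e0 := by
    intro X Y h
    have := hker (X - Y) (by rw [map_sub, h, sub_self])
    exact sub_eq_zero.mp this
  have hbij : Function.Bijective e0 :=
    ⟨hinj, LinearMap.injective_iff_surjective.mp
      (show Function.Injective (e0 : ℝ × (Fin n → ℝ) →ₗ[ℝ] ℝ × (Fin n → ℝ)) from hinj)⟩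
  set e : (ℝ × (Fin n → ℝ)) ≃L[ℝ] (ℝ × (Fin n → ℝ)) :=
    LinearEquiv.toContinuousLinearEquiv (LinearEquiv.ofBijective (e0 : ℝ × (Fin n → ℝ) →ₗ[ℝ] ℝ × (Fin n → ℝ)) hbij)
    with hedef
  have hΦd' : HasFDerivAt Φ ((e : (ℝ × (Fin n → ℝ)) ≃L[ℝ] (ℝ × (Fin n → ℝ))) : (ℝ × (Fin n → ℝ)) →L[ℝ] (ℝ × (Fin n → ℝ))) (d0, x0) := by
    have hcoe : ((e : (ℝ × (Fin n → ℝ)) ≃L[ℝ] (ℝ × (Fin n → ℝ))) : (ℝ × (Fin n → ℝ)) →L[ℝ] (ℝ × (Fin n → ℝ))) = e0 :=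
      ContinuousLinearMap.ext fun X => rfl
    rw [hcoe]; exact hΦd
  have hΦCAt : ContDiffAt ℝ 1 Φ (d0, x0) := hΦC.contDiffAt
  have him : Φ (d0, x0) = (d0, (0 : (Fin n → ℝ))) := by
    refine Prod.ext rfl ?_
    funext j
    exact heq j
  have hlocC : ContDiffAt ℝ 1 (hΦCAt.localInverse hΦd' one_ne_zero) (d0, (0:(Fin n → ℝ))) := by
    have := hΦCAt.to_localInverse hΦd' one_ne_zero
    rwa [him] at this
  have hlocval : hΦCAt.localInverse hΦd' one_ne_zero (d0, (0:(Fin n → ℝ))) = (d0, x0) := by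
    have := hΦCAt.localInverse_apply_image hΦd' one_ne_zero
    rwa [him] at this
  have hrinv : ∀ᶠ y in 𝓝 (d0, (0:(Fin n → ℝ))), Φ (hΦCAt.localInverse hΦd' one_ne_zero y) = y := by
    have := (hΦCAt.hasStrictFDerivAt' hΦd' one_ne_zero).eventually_right_inverse
    rwa [him] at this
  set Φinv := hΦCAt.localInverse hΦd' one_ne_zero with hΦinv
  have hembC : ContDiffAt ℝ 1 (fun d : ℝ => ((d, 0) : ℝ × (Fin n → ℝ))) d0 :=
    (contDiff_id.prodMk contDiff_const).contDiffAt
  have hvC : ContDiffAt ℝ 1 (fun d : ℝ => (Φinv (d, 0)).2) d0 := by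
    have h1 : ContDiffAt ℝ 1 (fun d : ℝ => Φinv (d, 0)) d0 := hlocC.comp d0 hembC
    exact (contDiff_snd.contDiffAt).comp _ h1
  refine ⟨fun d => (Φinv (d, 0)).2, hvC, ?_, ?_⟩
  · show (Φinv ((d0 : ℝ), (0 : Fin n → ℝ))).2 = x0
    rw [hlocval]
  have htend : Tendsto (fun d : ℝ => ((d, 0) : ℝ × (Fin n → ℝ))) (𝓝 d0) (𝓝 (d0, (0:(Fin n → ℝ)))) :=
    hembC.continuousAt
  have hev1 : ∀ᶠ d in 𝓝 d0, Φ (Φinv (d, 0)) = (d, 0) := htend.eventually hrinv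
  have hopen : IsOpen {x : (Fin n → ℝ) | ∀ j, 0 < x j} := by
    have : {x : (Fin n → ℝ) | ∀ j, 0 < x j} = Set.pi Set.univ (fun _ => Ioi (0:ℝ)) := by
      ext x; simp [Set.mem_pi]
    rw [this]; exact isOpen_set_pi Set.finite_univ (fun _ _ => isOpen_Ioi)
  have hpos : ∀ᶠ d in 𝓝 d0, ∀ j, 0 < (Φinv (d, 0)).2 j := by
    have hmem : (fun d : ℝ => (Φinv (d, 0)).2) d0 ∈ {x : (Fin n → ℝ) | ∀ j, 0 < x j} := by
      show (Φinv ((d0 : ℝ), (0 : Fin n → ℝ))).2 ∈ {x : Fin n → ℝ | ∀ j, 0 < x j}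
      rw [hlocval]; exact hx0
    exact hvC.continuousAt.eventually_mem (hopen.mem_nhds hmem)
  filter_upwards [hev1, hpos] with d h1 h2
  refine ⟨h2, fun j => ?_⟩
  have hfst : (Φinv (d, 0)).1 = d := congrArg Prod.fst h1
  have hsnd := congrArg Prod.snd h1
  have h3 := congrFun hsnd j
  simp only [hΦdef] at h3
  rw [hfst] at h3
  exact h3


set_option maxHeartbeats 1000000 in
private lemma endpoint_branch {n : ℕ} [NeZero n] (A : Matrix (Fin n) (Fin n) ℝ)
    (g : Fin n → ℝ → ℝ) (m η ς : Fin n → ℝ) (dstar βs : ℝ) (ξs : Fin n → ℝ)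
    (ab : Fin n → ℝ)
    (hgC : ∀ j, ContDiff ℝ 2 (g j))
    (hg0 : ∀ j, g j 0 = m j)
    (hab : ∀ j, ab j = deriv (g j) 0)
    (hη : ∀ j, 0 < η j)
    (hds : 0 < dstar) (hβs : 0 < βs)
    (hηe : ∀ j, dstar * ∑ k, A j k * η k + m j * η j = 0)
    (hςcol : ∀ k, dstar * ∑ j, A j k * ς j + m k * ς k = 0)
    (htab : ∑ j, ς j * (η j ^ 2 * ab j) ≠ 0)
    (hξsO : ∑ j, ς j * ξs j = 0)
    (hLP : ∀ j, dstar * (dstar * ∑ k, A j k * ξs k + m j * ξs j)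
        + η j * (m j + dstar * βs * ab j * η j) = 0)
    (huniq0 : ∀ v : Fin n → ℝ, (∀ j, dstar * ∑ k, A j k * v k + m j * v j = 0) →
        ∑ j, ς j * v j = 0 → v = 0) :
    ∃ βh : ℝ → ℝ, ∃ ξh : ℝ → Fin n → ℝ,
      ContDiffAt ℝ 1 βh dstar ∧ ContDiffAt ℝ 1 ξh dstar ∧
      βh dstar = βs ∧ ξh dstar = ξs ∧
      ∀ᶠ d in 𝓝 dstar, (∑ j, ς j * ξh d j = 0) ∧ 0 < βh d ∧
        (∀ j, 0 < η j + (dstar - d) * ξh d j) ∧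
        (∀ j, d * ∑ k, A j k * (βh d * (dstar - d) * (η k + (dstar - d) * ξh d k))
          + (βh d * (dstar - d) * (η j + (dstar - d) * ξh d j))
            * g j (βh d * (dstar - d) * (η j + (dstar - d) * ξh d j)) = 0) := by
  classical
  set R : Fin n → ℝ → ℝ :=
    fun j y => if y = 0 then deriv (g j) 0 else (g j y - g j 0) / y with hRdef
  have hRC : ∀ j, ContDiff ℝ 1 (R j) := fun j => hadamard_contDiffAt (hgC j)
  have hRid : ∀ j y, y * R j y = g j y - g j 0 := fun j y => hadamard_id (g j) y
  have hR0 : ∀ j, R j 0 = ab j := by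
    intro j; rw [hRdef]; simp only [if_pos rfl]; exact (hab j).symm
  set L : ℝ × ℝ × (Fin n → ℝ) → Fin n → ℝ := fun P j =>
    -(∑ k, A j k * η k) + P.1 * (∑ k, A j k * P.2.2 k) + m j * P.2.2 j
      + (η j + (dstar - P.1) * P.2.2 j) ^ 2 * P.2.1
        * R j (P.2.1 * (dstar - P.1) * (η j + (dstar - P.1) * P.2.2 j)) with hLdef
  -- the key algebraic identity
  have hkey : ∀ (d β : ℝ) (ξ : Fin n → ℝ) (j : Fin n),
      d * (∑ k, A j k * (β * (dstar - d) * (η k + (dstar - d) * ξ k)))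
        + (β * (dstar - d) * (η j + (dstar - d) * ξ j))
          * g j (β * (dstar - d) * (η j + (dstar - d) * ξ j))
      = β * (dstar - d) * ((dstar - d) * L (d, β, ξ) j) := by
    intro d β ξ j
    have hsum : ∑ k, A j k * (β * (dstar - d) * (η k + (dstar - d) * ξ k))
        = β * (dstar - d) * (∑ k, A j k * η k)
          + β * (dstar - d) * ((dstar - d) * (∑ k, A j k * ξ k)) := by
      have hterm : ∀ k, A j k * (β * (dstar - d) * (η k + (dstar - d) * ξ k))
          = β * (dstar - d) * (A j k * η k)
            + β * (dstar - d) * ((dstar - d) * (A j k * ξ k)) := fun k => by ring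
      rw [Finset.sum_congr rfl fun k _ => hterm k, Finset.sum_add_distrib,
        ← Finset.mul_sum, ← Finset.mul_sum, ← Finset.mul_sum]
    have hgval : g j (β * (dstar - d) * (η j + (dstar - d) * ξ j))
        = m j + (β * (dstar - d) * (η j + (dstar - d) * ξ j))
            * R j (β * (dstar - d) * (η j + (dstar - d) * ξ j)) := by
      have := hRid j (β * (dstar - d) * (η j + (dstar - d) * ξ j))
      rw [hg0 j] at this
      linarith
    simp only [hLdef]
    rw [hsum, hgval]
    linear_combination (β * (dstar - d)) * hηe j
  set Ψ : ℝ × ℝ × (Fin n → ℝ) → ℝ × ℝ × (Fin n → ℝ) :=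
    fun P => (P.1, ∑ j, ς j * P.2.2 j, L P) with hΨdef
  set Pstar : ℝ × ℝ × (Fin n → ℝ) := (dstar, βs, ξs) with hPstar
  -- value of L at the slice d = dstar
  have hslice : ∀ (β : ℝ) (ξ : Fin n → ℝ) (j : Fin n),
      L (dstar, β, ξ) j = -(∑ k, A j k * η k) + dstar * ∑ k, A j k * ξ k + m j * ξ j
        + (η j ^ 2 * ab j) * β := by
    intro β ξ j
    simp only [hLdef, sub_self, zero_mul, mul_zero, add_zero, hR0 j]
    ring
  have hΨP : Ψ Pstar = (dstar, 0, 0) := by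
    refine Prod.ext rfl (Prod.ext ?_ ?_)
    · exact hξsO
    · show L Pstar = 0
      funext j
      rw [hPstar, hslice βs ξs j]
      show -(∑ k, A j k * η k) + dstar * ∑ k, A j k * ξs k + m j * ξs j
        + (η j ^ 2 * ab j) * βs = (0:ℝ)
      have hX : dstar * (-(∑ k, A j k * η k) + dstar * ∑ k, A j k * ξs k + m j * ξs j
          + (η j ^ 2 * ab j) * βs) = 0 := by linear_combination hLP j - hηe j
      rcases mul_eq_zero.mp hX with h | h
      · exact absurd h hds.ne'
      · exact h
  have hΨC : ContDiff ℝ 1 Ψ := by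
    have happ : ∀ j : Fin n, ContDiff ℝ 1 (fun P : ℝ × ℝ × (Fin n → ℝ) => P.2.2 j) :=
      fun j => (contDiff_apply ℝ ℝ j).comp (contDiff_snd.comp contDiff_snd)
    have hβc : ContDiff ℝ 1 (fun P : ℝ × ℝ × (Fin n → ℝ) => P.2.1) :=
      contDiff_fst.comp contDiff_snd
    refine contDiff_fst.prodMk (ContDiff.prodMk ?_ ?_)
    · exact ContDiff.sum fun j _ => contDiff_const.mul (happ j)
    · refine contDiff_pi.mpr fun j => ?_
      have hφ : ContDiff ℝ 1 (fun P : ℝ × ℝ × (Fin n → ℝ) =>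
          η j + (dstar - P.1) * P.2.2 j) :=
        contDiff_const.add ((contDiff_const.sub contDiff_fst).mul (happ j))
      have hW : ContDiff ℝ 1 (fun P : ℝ × ℝ × (Fin n → ℝ) =>
          P.2.1 * (dstar - P.1) * (η j + (dstar - P.1) * P.2.2 j)) :=
        (hβc.mul (contDiff_const.sub contDiff_fst)).mul hφ
      refine ContDiff.add (ContDiff.add (ContDiff.add contDiff_const ?_) ?_) ?_
      · exact contDiff_fst.mul (ContDiff.sum fun k _ => contDiff_const.mul (happ k))
      · exact contDiff_const.mul (happ j)
      · exact ((hφ.pow 2).mul hβc).mul ((hRC j).comp hW)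
  have hΨdAt : DifferentiableAt ℝ Ψ Pstar := hΨC.differentiable one_ne_zero Pstar
  set e0 := fderiv ℝ Ψ Pstar with he0
  have hΨF : HasFDerivAt Ψ e0 Pstar := hΨdAt.hasFDerivAt
  -- first component of e0
  have hfstE : ∀ X : ℝ × ℝ × (Fin n → ℝ), (e0 X).1 = X.1 := by
    have h1 : HasFDerivAt (fun P : ℝ × ℝ × (Fin n → ℝ) => (Ψ P).1)
        ((ContinuousLinearMap.fst ℝ ℝ (ℝ × (Fin n → ℝ))).comp e0) Pstar := hΨF.fst
    have h2 : HasFDerivAt (fun P : ℝ × ℝ × (Fin n → ℝ) => (Ψ P).1)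
        (ContinuousLinearMap.fst ℝ ℝ (ℝ × (Fin n → ℝ))) Pstar := hasFDerivAt_fst
    have h3 := h1.unique h2
    intro X
    calc (e0 X).1 = ((ContinuousLinearMap.fst ℝ ℝ (ℝ × (Fin n → ℝ))).comp e0) X := rfl
    _ = (ContinuousLinearMap.fst ℝ ℝ (ℝ × (Fin n → ℝ))) X := by rw [h3]
    _ = X.1 := rfl
  -- the slice map and its derivative
  set σL : (ℝ × (Fin n → ℝ)) →L[ℝ] ℝ × ℝ × (Fin n → ℝ) :=
    (0 : (ℝ × (Fin n → ℝ)) →L[ℝ] ℝ).prod (ContinuousLinearMap.id ℝ (ℝ × (Fin n → ℝ)))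
    with hσL
  have hσd : HasFDerivAt (fun q : ℝ × (Fin n → ℝ) => ((dstar, q.1, q.2) : ℝ × ℝ × (Fin n → ℝ)))
      σL (βs, ξs) := by
    have := (hasFDerivAt_const (𝕜 := ℝ) dstar ((βs, ξs) : ℝ × (Fin n → ℝ))).prodMk
      (hasFDerivAt_id (𝕜 := ℝ) ((βs, ξs) : ℝ × (Fin n → ℝ)))
    exact this
  have hσP : (fun q : ℝ × (Fin n → ℝ) => ((dstar, q.1, q.2) : ℝ × ℝ × (Fin n → ℝ))) (βs, ξs)
      = Pstar := rfl
  have hcomp : HasFDerivAt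
      (fun q : ℝ × (Fin n → ℝ) => Ψ (dstar, q.1, q.2)) (e0.comp σL) (βs, ξs) := by
    have := hΨF.comp (βs, ξs) hσd
    exact this
  -- explicit form of the sliced map
  set fstL2 := ContinuousLinearMap.fst ℝ ℝ (Fin n → ℝ)
  set sndL2 := ContinuousLinearMap.snd ℝ ℝ (Fin n → ℝ)
  set projL : Fin n → (Fin n → ℝ) →L[ℝ] ℝ :=
    fun j => ContinuousLinearMap.proj (R := ℝ) (φ := fun _ : Fin n => ℝ) j with hprojL
  set rowL : Fin n → (Fin n → ℝ) →L[ℝ] ℝ := fun j => ∑ k, A j k • projL k with hrowL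
  have hrowL_apply : ∀ j (x : Fin n → ℝ), rowL j x = ∑ k, A j k * x k := by
    intro j x
    simp [hrowL, hprojL, ContinuousLinearMap.sum_apply]
  have hrowF : ∀ (j : Fin n) (x : Fin n → ℝ),
      HasFDerivAt (fun y : Fin n → ℝ => ∑ k, A j k * y k) (rowL j) x := by
    intro j x
    rw [hrowL]
    refine HasFDerivAt.fun_sum fun k _ => ?_
    rw [hprojL]
    exact (hasFDerivAt_apply k x).const_mul (A j k)
  set T2L : (ℝ × (Fin n → ℝ)) →L[ℝ] ℝ := ∑ j, ς j • ((projL j).comp sndL2) with hT2L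
  set T3row : Fin n → (ℝ × (Fin n → ℝ)) →L[ℝ] ℝ := fun j =>
    dstar • ((rowL j).comp sndL2) + m j • ((projL j).comp sndL2)
      + (η j ^ 2 * ab j) • fstL2 with hT3row
  set Tlin : (ℝ × (Fin n → ℝ)) →L[ℝ] ℝ × ℝ × (Fin n → ℝ) :=
    (0 : (ℝ × (Fin n → ℝ)) →L[ℝ] ℝ).prod (T2L.prod (ContinuousLinearMap.pi T3row))
    with hTlin
  have hexp : (fun q : ℝ × (Fin n → ℝ) => Ψ (dstar, q.1, q.2))
      = fun q : ℝ × (Fin n → ℝ) => ((dstar, ∑ j, ς j * q.2 j, fun j =>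
          -(∑ k, A j k * η k) + dstar * ∑ k, A j k * q.2 k + m j * q.2 j
            + (η j ^ 2 * ab j) * q.1) : ℝ × ℝ × (Fin n → ℝ)) := by
    funext q
    refine Prod.ext rfl (Prod.ext rfl ?_)
    show L (dstar, q.1, q.2) = _
    funext j
    rw [hslice q.1 q.2 j]
    all_goals ring
  have hTexp : HasFDerivAt (fun q : ℝ × (Fin n → ℝ) => ((dstar, ∑ j, ς j * q.2 j, fun j =>
      -(∑ k, A j k * η k) + dstar * ∑ k, A j k * q.2 k + m j * q.2 j
        + (η j ^ 2 * ab j) * q.1) : ℝ × ℝ × (Fin n → ℝ))) Tlin (βs, ξs) := by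
    rw [hTlin]
    refine HasFDerivAt.prodMk (hasFDerivAt_const (𝕜 := ℝ) dstar _) (HasFDerivAt.prodMk ?_ ?_)
    · rw [hT2L]
      refine HasFDerivAt.fun_sum fun j _ => ?_
      exact (((projL j).comp sndL2).hasFDerivAt).const_mul (ς j)
    · refine hasFDerivAt_pi'' fun j => ?_
      rw [ContinuousLinearMap.proj_pi, hT3row]
      have h2 : HasFDerivAt (fun q : ℝ × (Fin n → ℝ) => dstar * ∑ k, A j k * q.2 k)
          (dstar • ((rowL j).comp sndL2)) (βs, ξs) :=
        (by have := (hrowF j ξs).comp (βs, ξs) (hasFDerivAt_snd (𝕜 := ℝ) (p := (βs, ξs))); exact this :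
          HasFDerivAt (fun q : ℝ × (Fin n → ℝ) => ∑ k, A j k * q.2 k) ((rowL j).comp sndL2) (βs, ξs)).const_mul dstar
      have h3 : HasFDerivAt (fun q : ℝ × (Fin n → ℝ) => m j * q.2 j)
          (m j • ((projL j).comp sndL2)) (βs, ξs) :=
        (((projL j).comp sndL2).hasFDerivAt).const_mul (m j)
      have h4 : HasFDerivAt (fun q : ℝ × (Fin n → ℝ) => (η j ^ 2 * ab j) * q.1)
          ((η j ^ 2 * ab j) • fstL2) (βs, ξs) :=
        (fstL2.hasFDerivAt).const_mul (η j ^ 2 * ab j)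
      exact ((h2.const_add (-(∑ k, A j k * η k))).add h3).add h4
  have hTeq : e0.comp σL = Tlin := by
    have h1 : HasFDerivAt (fun q : ℝ × (Fin n → ℝ) => Ψ (dstar, q.1, q.2)) Tlin (βs, ξs) := by
      rw [hexp]; exact hTexp
    exact hcomp.unique h1
  -- action of e0 on vectors with zero first component
  have hact : ∀ (δβ : ℝ) (δξ : Fin n → ℝ),
      e0 (0, δβ, δξ) = (0, ∑ j, ς j * δξ j, fun j =>
        dstar * ∑ k, A j k * δξ k + m j * δξ j + (η j ^ 2 * ab j) * δβ) := by
    intro δβ δξ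
    have hσap : σL (δβ, δξ) = ((0 : ℝ), δβ, δξ) := by
      rw [hσL]
      rfl
    have h1 : e0 ((0:ℝ), δβ, δξ) = Tlin (δβ, δξ) := by
      rw [← hσap, ← ContinuousLinearMap.comp_apply, hTeq]
    rw [h1, hTlin]
    refine Prod.ext rfl (Prod.ext ?_ ?_)
    · show T2L (δβ, δξ) = _
      simp [hT2L, hprojL, ContinuousLinearMap.sum_apply, sndL2]
    · show (ContinuousLinearMap.pi T3row) (δβ, δξ) = _
      funext j
      simp [hT3row, hrowL_apply, hprojL, sndL2, fstL2]
  -- injectivity of e0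
  have hker : ∀ X : ℝ × ℝ × (Fin n → ℝ), e0 X = 0 → X = 0 := by
    rintro ⟨δd, δβ, δξ⟩ hX
    have hδd : δd = 0 := by
      have := congrArg Prod.fst hX
      rw [hfstE] at this
      exact this
    subst hδd
    rw [hact δβ δξ] at hX
    have h2 : ∑ j, ς j * δξ j = 0 := congrArg (fun z => z.2.1) hX
    have h3 : ∀ j, dstar * ∑ k, A j k * δξ k + m j * δξ j + (η j ^ 2 * ab j) * δβ = 0 := by
      intro j
      exact congrFun (congrArg (fun z => z.2.2) hX) j
    -- pair with ς
    have hswap : ∑ j, ς j * (dstar * ∑ k, A j k * δξ k + m j * δξ j) = 0 := by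
      have e1 : ∀ j, ς j * (dstar * ∑ k, A j k * δξ k + m j * δξ j)
          = (∑ k, δξ k * (dstar * (A j k * ς j))) + δξ j * (m j * ς j) := by
        intro j
        rw [mul_add, Finset.mul_sum, Finset.mul_sum]
        congr 1
        · exact Finset.sum_congr rfl fun k _ => by ring
        · ring
      rw [Finset.sum_congr rfl fun j _ => e1 j, Finset.sum_add_distrib, Finset.sum_comm]
      have e2 : ∀ k, (∑ j, δξ k * (dstar * (A j k * ς j)))
          = δξ k * (dstar * ∑ j, A j k * ς j) := by
        intro k
        rw [Finset.mul_sum, Finset.mul_sum]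
        all_goals exact Finset.sum_congr rfl fun j _ => by ring
      rw [Finset.sum_congr rfl fun k _ => e2 k]
      have e3 : ∀ k, δξ k * (dstar * ∑ j, A j k * ς j) + δξ k * (m k * ς k) = 0 := by
        intro k
        linear_combination δξ k * hςcol k
      rw [← Finset.sum_add_distrib]
      rw [Finset.sum_congr rfl fun k _ => e3 k]
      exact Finset.sum_const_zero
    have hβ0 : δβ = 0 := by
      have h4 : ∑ j, ς j * (dstar * ∑ k, A j k * δξ k + m j * δξ j + (η j ^ 2 * ab j) * δβ)
          = 0 := by
        rw [Finset.sum_congr rfl fun j _ => by rw [h3 j]]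
        simp
      have h5 : ∑ j, ς j * (dstar * ∑ k, A j k * δξ k + m j * δξ j + (η j ^ 2 * ab j) * δβ)
          = (∑ j, ς j * (dstar * ∑ k, A j k * δξ k + m j * δξ j))
            + δβ * ∑ j, ς j * (η j ^ 2 * ab j) := by
        rw [Finset.mul_sum, ← Finset.sum_add_distrib]
        exact Finset.sum_congr rfl fun j _ => by ring
      rw [h5, hswap, zero_add] at h4
      rcases mul_eq_zero.mp h4 with h | h
      · exact h
      · exact absurd h htab
    subst hβ0
    have h6 : ∀ j, dstar * ∑ k, A j k * δξ k + m j * δξ j = 0 := by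
      intro j
      have := h3 j
      rw [mul_zero, add_zero] at this
      exact this
    have h7 : δξ = 0 := huniq0 δξ h6 h2
    rw [h7]
    rfl
  have hinj : Function.Injective e0 := by
    intro X Y h
    have := hker (X - Y) (by rw [map_sub, h, sub_self])
    exact sub_eq_zero.mp this
  have hbij : Function.Bijective e0 :=
    ⟨hinj, LinearMap.injective_iff_surjective.mp
      (show Function.Injective (e0 : ℝ × ℝ × (Fin n → ℝ) →ₗ[ℝ] ℝ × ℝ × (Fin n → ℝ)) from hinj)⟩
  set e : (ℝ × ℝ × (Fin n → ℝ)) ≃L[ℝ] ℝ × ℝ × (Fin n → ℝ) :=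
    LinearEquiv.toContinuousLinearEquiv
      (LinearEquiv.ofBijective (e0 : ℝ × ℝ × (Fin n → ℝ) →ₗ[ℝ] ℝ × ℝ × (Fin n → ℝ)) hbij)
    with hedef
  have hΨd' : HasFDerivAt Ψ ((e : (ℝ × ℝ × (Fin n → ℝ)) ≃L[ℝ] ℝ × ℝ × (Fin n → ℝ)) :
      (ℝ × ℝ × (Fin n → ℝ)) →L[ℝ] ℝ × ℝ × (Fin n → ℝ)) Pstar := by
    have hcoe : ((e : (ℝ × ℝ × (Fin n → ℝ)) ≃L[ℝ] ℝ × ℝ × (Fin n → ℝ)) :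
        (ℝ × ℝ × (Fin n → ℝ)) →L[ℝ] ℝ × ℝ × (Fin n → ℝ)) = e0 :=
      ContinuousLinearMap.ext fun X => rfl
    rw [hcoe]; exact hΨF
  have hΨCAt : ContDiffAt ℝ 1 Ψ Pstar := hΨC.contDiffAt
  set Φinv := hΨCAt.localInverse hΨd' one_ne_zero with hΦinv
  have hlocC : ContDiffAt ℝ 1 Φinv ((dstar, 0, 0) : ℝ × ℝ × (Fin n → ℝ)) := by
    have := hΨCAt.to_localInverse hΨd' one_ne_zero
    rwa [hΨP] at this
  have hlocval : Φinv ((dstar, 0, 0) : ℝ × ℝ × (Fin n → ℝ)) = Pstar := by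
    have := hΨCAt.localInverse_apply_image hΨd' one_ne_zero
    rwa [hΨP] at this
  have hrinv : ∀ᶠ y in 𝓝 ((dstar, 0, 0) : ℝ × ℝ × (Fin n → ℝ)), Ψ (Φinv y) = y := by
    have := (hΨCAt.hasStrictFDerivAt' hΨd' one_ne_zero).eventually_right_inverse
    rwa [hΨP] at this
  have hembC : ContDiffAt ℝ 1 (fun d : ℝ => ((d, 0, 0) : ℝ × ℝ × (Fin n → ℝ))) dstar :=
    (contDiff_id.prodMk contDiff_const).contDiffAt
  have hQC : ContDiffAt ℝ 1 (fun d : ℝ => Φinv (d, 0, 0)) dstar := by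
    have := hlocC.comp dstar hembC
    exact this
  have hβhC : ContDiffAt ℝ 1 (fun d : ℝ => (Φinv (d, 0, 0)).2.1) dstar :=
    ((contDiff_fst.comp contDiff_snd).contDiffAt).comp _ hQC
  have hξhC : ContDiffAt ℝ 1 (fun d : ℝ => (Φinv (d, 0, 0)).2.2) dstar :=
    ((contDiff_snd.comp contDiff_snd).contDiffAt).comp _ hQC
  have hβval : (Φinv ((dstar, 0, 0) : ℝ × ℝ × (Fin n → ℝ))).2.1 = βs := by rw [hlocval]
  have hξval : (Φinv ((dstar, 0, 0) : ℝ × ℝ × (Fin n → ℝ))).2.2 = ξs := by rw [hlocval]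
  refine ⟨fun d => (Φinv (d, 0, 0)).2.1, fun d => (Φinv (d, 0, 0)).2.2,
    hβhC, hξhC, hβval, hξval, ?_⟩
  have htend : Tendsto (fun d : ℝ => ((d, 0, 0) : ℝ × ℝ × (Fin n → ℝ))) (𝓝 dstar)
      (𝓝 ((dstar, 0, 0) : ℝ × ℝ × (Fin n → ℝ))) := hembC.continuousAt
  have hev1 : ∀ᶠ d in 𝓝 dstar, Ψ (Φinv (d, 0, 0)) = (d, 0, 0) := htend.eventually hrinv
  have hβpos : ∀ᶠ d in 𝓝 dstar, 0 < (Φinv (d, 0, 0)).2.1 := by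
    refine hβhC.continuousAt.eventually_mem (isOpen_Ioi.mem_nhds ?_)
    show (Φinv ((dstar, 0, 0) : ℝ × ℝ × (Fin n → ℝ))).2.1 ∈ Ioi (0:ℝ)
    rw [hβval]; exact hβs
  have hopen : IsOpen {x : Fin n → ℝ | ∀ j, 0 < x j} := by
    have : {x : Fin n → ℝ | ∀ j, 0 < x j} = Set.pi Set.univ (fun _ => Ioi (0:ℝ)) := by
      ext x; simp [Set.mem_pi]
    rw [this]; exact isOpen_set_pi Set.finite_univ (fun _ _ => isOpen_Ioi)
  have hφpos : ∀ᶠ d in 𝓝 dstar, ∀ j, 0 < η j + (dstar - d) * (Φinv (d, 0, 0)).2.2 j := by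
    have hc : ContinuousAt (fun d : ℝ => fun j => η j + (dstar - d) * (Φinv (d, 0, 0)).2.2 j)
        dstar := by
      refine continuousAt_pi.mpr fun j => ?_
      exact continuousAt_const.add ((continuousAt_const.sub continuousAt_id).mul
        ((continuous_apply j).continuousAt.comp hξhC.continuousAt))
    refine hc.eventually_mem (hopen.mem_nhds ?_)
    show (fun j => η j + (dstar - dstar) * (Φinv ((dstar,0,0) : ℝ × ℝ × (Fin n → ℝ))).2.2 j)
        ∈ {x : Fin n → ℝ | ∀ j, 0 < x j}
    intro j
    simp only [sub_self, zero_mul, add_zero]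
    exact hη j
  filter_upwards [hev1, hβpos, hφpos] with d h1 h2 h3
  set Q := Φinv ((d, 0, 0) : ℝ × ℝ × (Fin n → ℝ)) with hQdef
  have hQ1 : Q.1 = d := congrArg Prod.fst h1
  have hO : ∑ j, ς j * Q.2.2 j = 0 :=
    congrArg (fun z : ℝ × ℝ × (Fin n → ℝ) => z.2.1) h1
  refine ⟨hO, h2, h3, fun j => ?_⟩
  have hLQ : L Q = 0 := congrArg (fun z : ℝ × ℝ × (Fin n → ℝ) => z.2.2) h1
  have hLd : L (d, Q.2.1, Q.2.2) = 0 := by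
    rw [← hQ1]
    exact hLQ
  rw [hkey d _ _ j, hLd]
  simp


set_option maxHeartbeats 2000000 in
theorem stmt3 {n : ℕ} (hn : 2 ≤ n) (A : Matrix (Fin n) (Fin n) ℝ)
    (f : Fin n → ℝ × ℝ → ℝ) (m : Fin n → ℝ)
    -- (H0)
    (hoff : ∀ j k, j ≠ k → 0 ≤ A j k)
    (hirr : ∀ S : Finset (Fin n), S.Nonempty → S ≠ Finset.univ →
      ∃ j ∉ S, ∃ k ∈ S, 0 < A j k)
    (hcol : ∀ j, ∑ k ∈ Finset.univ.erase j, A k j ≤ -A j j)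
    (hstr : ∃ j, ∑ k ∈ Finset.univ.erase j, A k j < -A j j)
    -- (H1)
    (hf : ∀ j, ContDiff ℝ 4 (f j)) (hm : ∀ j, 0 < m j) (hf0 : ∀ j, f j (0, 0) = m j)
    (hg : ∀ j x, (0:ℝ) ≤ x → deriv (fun y => f j (y, y)) x < 0)
    (u0 : Fin n → ℝ) (hu0 : ∀ j, 0 < u0 j ∧ f j (u0 j, u0 j) = 0)
    -- the critical dispersal rate d_*
    (dstar : ℝ) (hds : 0 < dstar)
    (hsd : specBound (dstar • A + Matrix.diagonal m) = 0)
    -- Perron–Frobenius right and left eigenvectors of d_* A + diag(m) for eigenvalue 0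
    (η ς : Fin n → ℝ) (hη : ∀ j, 0 < η j) (hς : ∀ j, 0 < ς j)
    (hηs : ∑ j, η j = 1) (hςs : ∑ j, ς j = 1)
    (hηe : ∀ j, dstar * ∑ k, A j k * η k + m j * η j = 0)
    (hςe : ∀ j, dstar * ∑ k, A k j * ς k + m j * ς j = 0)
    -- the unique positive equilibrium u^d for d ∈ (0, d_*)
    (u : ℝ → Fin n → ℝ)
    (hu : ∀ d, 0 < d → d < dstar → (∀ j, 0 < u d j) ∧
      (∀ j, d * ∑ k, A j k * u d k + u d j * f j (u d j, u d j) = 0) ∧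
      ∀ v : Fin n → ℝ, (∀ j, 0 < v j) →
        (∀ j, d * ∑ k, A j k * v k + v j * f j (v j, v j) = 0) → v = u d)
    -- a_j = ∂ₓ f_j(0,0), b_j = ∂_y f_j(0,0), ã = Σ a_j η_j² ς_j, b̃ = Σ b_j η_j² ς_j
    (a b : Fin n → ℝ) (ha : ∀ j, a j = pd1 (f j) 0 0) (hb : ∀ j, b j = pd2 (f j) 0 0)
    (ta tb : ℝ) (hta : ta = ∑ j, a j * η j ^ 2 * ς j) (htb : tb = ∑ j, b j * η j ^ 2 * ς j) :
    ∃ β : ℝ → ℝ, ∃ ξ : ℝ → Fin n → ℝ,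
      ContDiffOn ℝ 1 β (Set.Ioc 0 dstar) ∧ ContDiffOn ℝ 1 ξ (Set.Ioc 0 dstar) ∧
      (∀ d ∈ Set.Ioc 0 dstar, ∑ j, ς j * ξ d j = 0) ∧
      (∀ d ∈ Set.Ioo 0 dstar, ∀ j,
        u d j = β d * (dstar - d) * (η j + (dstar - d) * ξ d j)) ∧
      β dstar = (∑ j, m j * η j * ς j) / (-(dstar * (ta + tb))) ∧
      0 < β dstar ∧
      (∀ j, dstar * (dstar * ∑ k, A j k * ξ dstar k + m j * ξ dstar j)
          + η j * (m j + dstar * β dstar * (a j + b j) * η j) = 0) ∧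
      ∀ ξ' : Fin n → ℝ, (∑ j, ς j * ξ' j = 0) →
        (∀ j, dstar * (dstar * ∑ k, A j k * ξ' k + m j * ξ' j)
          + η j * (m j + dstar * β dstar * (a j + b j) * η j) = 0) → ξ' = ξ dstar := by
  classical
  haveI : NeZero n := ⟨by omega⟩
  have huniv : (Finset.univ : Finset (Fin n)).Nonempty := ⟨0, Finset.mem_univ 0⟩
  -- basic facts about g j = f j (y, y)
  have hgC4 : ∀ j, ContDiff ℝ 4 (fun y => f j (y, y)) :=
    fun j => (hf j).comp (contDiff_id.prodMk contDiff_id)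
  have hgC1 : ∀ j, ContDiff ℝ 1 (fun y => f j (y, y)) :=
    fun j => (hgC4 j).of_le (by norm_num)
  have hgC2 : ∀ j, ContDiff ℝ 2 (fun y => f j (y, y)) :=
    fun j => (hgC4 j).of_le (by norm_num)
  have hgderiv : ∀ j x, deriv (fun y => f j (y, y)) x
      = fderiv ℝ (f j) (x, x) (1, 0) + fderiv ℝ (f j) (x, x) (0, 1) := by
    intro j x
    have hfd : HasFDerivAt (f j) (fderiv ℝ (f j) (x, x)) (x, x) :=
      ((hf j).differentiable (by norm_num) (x, x)).hasFDerivAt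
    have hc : HasDerivAt (fun y : ℝ => ((y, y) : ℝ × ℝ)) (1, 1) x :=
      (hasDerivAt_id x).prodMk (hasDerivAt_id x)
    have hcomp := HasFDerivAt.comp_hasDerivAt (f := fun y : ℝ => ((y, y) : ℝ × ℝ)) x hfd hc
    have hco : HasDerivAt (fun y => f j (y, y)) ((fderiv ℝ (f j) (x, x)) (1, 1)) x := hcomp
    rw [hco.deriv]
    rw [show ((1:ℝ), (1:ℝ)) = ((1:ℝ), (0:ℝ)) + ((0:ℝ), (1:ℝ)) by norm_num, map_add]
  have hab : ∀ j, a j + b j = deriv (fun y => f j (y, y)) 0 := by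
    intro j
    rw [ha j, hb j, hgderiv j 0, pd1, pd2]
  have habneg : ∀ j, a j + b j < 0 := fun j => (hab j) ▸ hg j 0 le_rfl
  -- positivity constants
  have hc0 : 0 < ∑ j, ς j * η j :=
    Finset.sum_pos (fun j _ => mul_pos (hς j) (hη j)) huniv
  -- kernel characterization of dstar A + diag m
  have hker : ∀ v : Fin n → ℝ, (∀ j, dstar * ∑ k, A j k * v k + m j * v j = 0) →
      ∃ t, ∀ j, v j = t * η j := by
    intro v hv
    set N : Matrix (Fin n) (Fin n) ℝ :=
      Matrix.of fun j k => dstar * A j k + if j = k then m j else 0 with hN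
    have hNsum : ∀ (x : Fin n → ℝ) j,
        ∑ k, N j k * x k = dstar * ∑ k, A j k * x k + m j * x j := by
      intro x j
      have hterm : ∀ k, N j k * x k
          = dstar * (A j k * x k) + (if j = k then m j * x k else 0) := by
        intro k
        simp only [hN, Matrix.of_apply, add_mul, ite_mul, zero_mul]
        ring_nf
      rw [Finset.sum_congr rfl fun k _ => hterm k, Finset.sum_add_distrib,
        Finset.sum_ite_eq Finset.univ j (fun k => m j * x k), if_pos (Finset.mem_univ j),
        ← Finset.mul_sum]
    refine exists_smul_of_kernel N η v hη ?_ ?_ (fun j => by rw [hNsum]; exact hηe j)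
      (fun j => by rw [hNsum]; exact hv j)
    · intro j k hjk
      simp only [hN, Matrix.of_apply, if_neg hjk, add_zero]
      exact mul_nonneg hds.le (hoff j k hjk)
    · intro S hS1 hS2
      obtain ⟨j, hjS, k, hkS, hA⟩ := hirr S hS1 hS2
      refine ⟨j, hjS, k, hkS, ?_⟩
      have hjk : j ≠ k := fun h => hjS (h ▸ hkS)
      simp only [hN, Matrix.of_apply, if_neg hjk, add_zero]
      exact mul_pos hds hA
  have huniq0 : ∀ v : Fin n → ℝ, (∀ j, dstar * ∑ k, A j k * v k + m j * v j = 0) →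
      ∑ j, ς j * v j = 0 → v = 0 := by
    intro v hv hvO
    obtain ⟨t, ht⟩ := hker v hv
    have hsum : ∑ j, ς j * v j = t * ∑ j, ς j * η j := by
      rw [Finset.mul_sum]
      exact Finset.sum_congr rfl fun j _ => by rw [ht j]; ring
    rw [hvO] at hsum
    have ht0 : t = 0 := by
      rcases mul_eq_zero.mp hsum.symm with h | h
      · exact h
      · exact absurd h hc0.ne'
    funext j
    rw [ht j, ht0, zero_mul]
    rfl
  -- pairing with ς kills the range of dstar A + diag m
  have hpair : ∀ x : Fin n → ℝ,
      ∑ j, ς j * (dstar * ∑ k, A j k * x k + m j * x j) = 0 := by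
    intro x
    have e1 : ∀ j, ς j * (dstar * ∑ k, A j k * x k + m j * x j)
        = (∑ k, x k * (dstar * (A j k * ς j))) + x j * (m j * ς j) := by
      intro j
      rw [mul_add, Finset.mul_sum, Finset.mul_sum]
      congr 1
      · exact Finset.sum_congr rfl fun k _ => by ring
      · ring
    rw [Finset.sum_congr rfl fun j _ => e1 j, Finset.sum_add_distrib, Finset.sum_comm]
    have e2 : ∀ k, (∑ j, x k * (dstar * (A j k * ς j)))
        = x k * (dstar * ∑ j, A j k * ς j) := by
      intro k
      rw [Finset.mul_sum, Finset.mul_sum]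
      all_goals exact Finset.sum_congr rfl fun j _ => by ring
    rw [Finset.sum_congr rfl fun k _ => e2 k, ← Finset.sum_add_distrib]
    have e3 : ∀ k, x k * (dstar * ∑ j, A j k * ς j) + x k * (m k * ς k) = 0 := by
      intro k
      linear_combination x k * hςe k
    rw [Finset.sum_congr rfl fun k _ => e3 k]
    exact Finset.sum_const_zero
  -- the limit value of β
  have htabeq : ta + tb = ∑ j, ς j * (η j ^ 2 * (a j + b j)) := by
    rw [hta, htb, ← Finset.sum_add_distrib]
    exact Finset.sum_congr rfl fun j _ => by ring
  have htabneg : ta + tb < 0 := by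
    rw [htabeq]
    calc ∑ j, ς j * (η j ^ 2 * (a j + b j)) < ∑ _j : Fin n, (0:ℝ) :=
      Finset.sum_lt_sum_of_nonempty huniv (fun j _ =>
        mul_neg_of_pos_of_neg (hς j) (mul_neg_of_pos_of_neg (pow_pos (hη j) 2) (habneg j)))
    _ = 0 := Finset.sum_const_zero
  have hβvpos : 0 < (∑ j, m j * η j * ς j) / (-(dstar * (ta + tb))) := by
    refine div_pos (Finset.sum_pos (fun j _ => mul_pos (mul_pos (hm j) (hη j)) (hς j)) huniv) ?_
    nlinarith
  set βv : ℝ := (∑ j, m j * η j * ς j) / (-(dstar * (ta + tb))) with hβv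
  -- the solvability condition for ξstar
  set cvec : Fin n → ℝ := fun j => η j * (m j + dstar * βv * (a j + b j) * η j) with hcvec
  have hςc : ∑ j, ς j * cvec j = 0 := by
    have e1 : ∀ j, ς j * cvec j
        = m j * η j * ς j + (dstar * βv) * (ς j * (η j ^ 2 * (a j + b j))) := by
      intro j
      simp only [hcvec]
      ring
    rw [Finset.sum_congr rfl fun j _ => e1 j, Finset.sum_add_distrib, ← Finset.mul_sum,
      ← htabeq]
    have hne : -(dstar * (ta + tb)) ≠ 0 := by nlinarith
    have hkey2 : dstar * βv * (ta + tb) = -(∑ j, m j * η j * ς j) := by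
      rw [hβv]
      have htb0 : ta + tb ≠ 0 := htabneg.ne
      field_simp
    rw [hkey2]
    ring
  -- existence of ξstar
  obtain ⟨ξv, hξvE, hξvO⟩ : ∃ ξv : Fin n → ℝ,
      (∀ j, dstar * (dstar * ∑ k, A j k * ξv k + m j * ξv j) + cvec j = 0) ∧
      ∑ j, ς j * ξv j = 0 := by
    set Tm : Matrix (Fin n) (Fin n) ℝ :=
      Matrix.of fun j k => (dstar * A j k + if j = k then m j else 0) + η j * ς k with hTm
    have hTsum : ∀ (x : Fin n → ℝ) j, ∑ k, Tm j k * x k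
        = (dstar * ∑ k, A j k * x k + m j * x j) + η j * ∑ k, ς k * x k := by
      intro x j
      have hterm : ∀ k, Tm j k * x k
          = (dstar * (A j k * x k) + (if j = k then m j * x k else 0)) + η j * (ς k * x k) := by
        intro k
        simp only [hTm, Matrix.of_apply, add_mul, ite_mul, zero_mul]
        ring_nf
      rw [Finset.sum_congr rfl fun k _ => hterm k, Finset.sum_add_distrib,
        Finset.sum_add_distrib,
        Finset.sum_ite_eq Finset.univ j (fun k => m j * x k), if_pos (Finset.mem_univ j),
        ← Finset.mul_sum, ← Finset.mul_sum]
    have hTinj : Function.Injective Tm.mulVecLin := by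
      intro x y hxy
      have hz : Tm.mulVecLin (x - y) = 0 := by rw [map_sub, hxy, sub_self]
      have hz' : ∀ j, ∑ k, Tm j k * (x - y) k = 0 := by
        intro j
        have := congrFun hz j
        simpa [Matrix.mulVecLin_apply, Matrix.mulVec, dotProduct] using this
      set w := x - y with hw
      have hS : ∑ k, ς k * w k = 0 := by
        have h1 : ∑ j, ς j * ((dstar * ∑ k, A j k * w k + m j * w j) + η j * ∑ k, ς k * w k)
            = 0 := by
          rw [Finset.sum_congr rfl fun j _ => by rw [← hTsum w j, hz' j]]
          simp
        have h2 : ∑ j, ς j * ((dstar * ∑ k, A j k * w k + m j * w j) + η j * ∑ k, ς k * w k)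
            = (∑ j, ς j * (dstar * ∑ k, A j k * w k + m j * w j))
              + (∑ k, ς k * w k) * ∑ j, ς j * η j := by
          have e4 : ∀ j, ς j * ((dstar * ∑ k, A j k * w k + m j * w j) + η j * ∑ k, ς k * w k)
              = ς j * (dstar * ∑ k, A j k * w k + m j * w j)
                + (∑ k, ς k * w k) * (ς j * η j) := fun j => by ring
          rw [Finset.sum_congr rfl fun j _ => e4 j, Finset.sum_add_distrib, ← Finset.mul_sum]
        rw [h2, hpair w, zero_add] at h1
        rcases mul_eq_zero.mp h1 with h | h
        · exact h
        · exact absurd h hc0.ne'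
      have hMw : ∀ j, dstar * ∑ k, A j k * w k + m j * w j = 0 := by
        intro j
        have := hz' j
        rw [hTsum w j, hS, mul_zero, add_zero] at this
        exact this
      have : w = 0 := huniq0 w hMw hS
      exact sub_eq_zero.mp this
    have hTsurj : Function.Surjective Tm.mulVecLin :=
      LinearMap.injective_iff_surjective.mp hTinj
    obtain ⟨x, hx⟩ := hTsurj (fun j => -(cvec j) / dstar)
    have hx' : ∀ j, (dstar * ∑ k, A j k * x k + m j * x j) + η j * ∑ k, ς k * x k
        = -(cvec j) / dstar := by
      intro j
      rw [← hTsum x j]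
      have := congrFun hx j
      simpa [Matrix.mulVecLin_apply, Matrix.mulVec, dotProduct] using this
    have hSx : ∑ k, ς k * x k = 0 := by
      have h1 : ∑ j, ς j * ((dstar * ∑ k, A j k * x k + m j * x j) + η j * ∑ k, ς k * x k)
          = ∑ j, ς j * (-(cvec j) / dstar) := by
        exact Finset.sum_congr rfl fun j _ => by rw [hx' j]
      have h2 : ∑ j, ς j * ((dstar * ∑ k, A j k * x k + m j * x j) + η j * ∑ k, ς k * x k)
          = (∑ j, ς j * (dstar * ∑ k, A j k * x k + m j * x j))
            + (∑ k, ς k * x k) * ∑ j, ς j * η j := by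
        have e4 : ∀ j, ς j * ((dstar * ∑ k, A j k * x k + m j * x j) + η j * ∑ k, ς k * x k)
            = ς j * (dstar * ∑ k, A j k * x k + m j * x j)
              + (∑ k, ς k * x k) * (ς j * η j) := fun j => by ring
        rw [Finset.sum_congr rfl fun j _ => e4 j, Finset.sum_add_distrib, ← Finset.mul_sum]
      have h3 : ∑ j, ς j * (-(cvec j) / dstar) = 0 := by
        have : ∀ j, ς j * (-(cvec j) / dstar) = -(1/dstar) * (ς j * cvec j) := by
          intro j; ring
        rw [Finset.sum_congr rfl fun j _ => this j, ← Finset.mul_sum, hςc, mul_zero]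
      rw [h2, hpair x, zero_add, h3] at h1
      rcases mul_eq_zero.mp h1 with h | h
      · exact h
      · exact absurd h hc0.ne'
    refine ⟨x, fun j => ?_, hSx⟩
    have := hx' j
    rw [hSx, mul_zero, add_zero] at this
    rw [this]
    field_simp
    all_goals ring
  -- uniqueness of ξstar
  have hξvU : ∀ ξ' : Fin n → ℝ, (∑ j, ς j * ξ' j = 0) →
      (∀ j, dstar * (dstar * ∑ k, A j k * ξ' k + m j * ξ' j) + cvec j = 0) → ξ' = ξv := by
    intro ξ' hO' hE'
    have hw : ∀ j, dstar * ∑ k, A j k * (ξ' - ξv) k + m j * (ξ' - ξv) j = 0 := by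
      intro j
      have h1 := hE' j
      have h2 := hξvE j
      have h3 : dstar * (dstar * ∑ k, A j k * ξ' k + m j * ξ' j)
          = dstar * (dstar * ∑ k, A j k * ξv k + m j * ξv j) := by linarith
      have h4 : ∑ k, A j k * (ξ' - ξv) k = ∑ k, A j k * ξ' k - ∑ k, A j k * ξv k := by
        rw [← Finset.sum_sub_distrib]
        exact Finset.sum_congr rfl fun k _ => by simp [Pi.sub_apply]; ring
      have h5 : dstar * (dstar * ∑ k, A j k * (ξ' - ξv) k + m j * (ξ' - ξv) j) = 0 := by
        rw [h4]
        simp only [Pi.sub_apply]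
        linarith [h3]
      rcases mul_eq_zero.mp h5 with h | h
      · exact absurd h hds.ne'
      · exact h
    have hwO : ∑ j, ς j * (ξ' - ξv) j = 0 := by
      have : ∑ j, ς j * (ξ' - ξv) j = (∑ j, ς j * ξ' j) - ∑ j, ς j * ξv j := by
        rw [← Finset.sum_sub_distrib]
        exact Finset.sum_congr rfl fun j _ => by simp [Pi.sub_apply]; ring
      rw [this, hO', hξvO, sub_zero]
    have := huniq0 (ξ' - ξv) hw hwO
    exact sub_eq_zero.mp this
  -- the endpoint branch
  obtain ⟨βh, ξh, hβhC, hξhC, hβhval, hξhval, hevE⟩ :=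
    endpoint_branch A (fun j y => f j (y, y)) m η ς dstar βv ξv (fun j => a j + b j)
      hgC2 (fun j => hf0 j) (fun j => hab j) hη hds hβvpos hηe hςe
      (by rw [← htabeq]; exact htabneg.ne)
      hξvO (fun j => hξvE j) huniq0
  -- global definitions of β and ξ
  set sβ : ℝ → ℝ := fun d =>
    if d < dstar then (∑ j, ς j * u d j) / ((dstar - d) * ∑ j, ς j * η j) else βh d with hsβ
  set sξ : ℝ → Fin n → ℝ := fun d =>
    if d < dstar then (fun j => (u d j / (sβ d * (dstar - d)) - η j) / (dstar - d)) else ξh d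
    with hsξ
  have hsβlt : ∀ d, d < dstar →
      sβ d = (∑ j, ς j * u d j) / ((dstar - d) * ∑ j, ς j * η j) := by
    intro d hd; simp only [hsβ]; rw [if_pos hd]
  have hsξlt : ∀ d, d < dstar →
      sξ d = fun j => (u d j / (sβ d * (dstar - d)) - η j) / (dstar - d) := by
    intro d hd; simp only [hsξ]; rw [if_pos hd]
  have hsβd : sβ dstar = βh dstar := by
    simp only [hsβ]; rw [if_neg (lt_irrefl dstar)]
  have hsξd : sξ dstar = ξh dstar := by
    simp only [hsξ]; rw [if_neg (lt_irrefl dstar)]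
  have hsβpos : ∀ d, 0 < d → d < dstar → 0 < sβ d := by
    intro d h1 h2
    rw [hsβlt d h2]
    have hupos := (hu d h1 h2).1
    exact div_pos (Finset.sum_pos (fun j _ => mul_pos (hς j) (hupos j)) huniv)
      (mul_pos (by linarith) hc0)
  -- matching with the endpoint branch near dstar
  have hmatch : ∀ᶠ d in 𝓝 dstar, sβ d = βh d ∧ sξ d = ξh d := by
    filter_upwards [hevE, eventually_gt_nhds hds] with d hd hdpos
    rcases lt_or_ge d dstar with hlt | hge
    · obtain ⟨hO, hβp, hφp, hFeq⟩ := hd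
      have hs0 : (0:ℝ) < dstar - d := by linarith
      have hvpos : ∀ j, 0 < βh d * (dstar - d) * (η j + (dstar - d) * ξh d j) :=
        fun j => mul_pos (mul_pos hβp hs0) (hφp j)
      have hueq : u d = fun j => βh d * (dstar - d) * (η j + (dstar - d) * ξh d j) :=
        ((hu d hdpos hlt).2.2 _ hvpos (fun j => hFeq j)).symm
      have hsum : ∑ j, ς j * u d j = βh d * (dstar - d) * ∑ j, ς j * η j := by
        rw [hueq]
        have e1 : ∀ j, ς j * (βh d * (dstar - d) * (η j + (dstar - d) * ξh d j))
            = βh d * (dstar - d) * (ς j * η j)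
              + (βh d * (dstar - d) * (dstar - d)) * (ς j * ξh d j) := fun j => by ring
        rw [Finset.sum_congr rfl fun j _ => e1 j, Finset.sum_add_distrib, ← Finset.mul_sum,
          ← Finset.mul_sum, hO, mul_zero, add_zero]
      have hβeq : sβ d = βh d := by
        rw [hsβlt d hlt, hsum]
        have h1 : dstar - d ≠ 0 := hs0.ne'
        have h2 : (∑ j, ς j * η j) ≠ 0 := hc0.ne'
        field_simp
        all_goals ring
      refine ⟨hβeq, ?_⟩
      rw [hsξlt d hlt]
      funext j
      rw [hβeq]
      have h3 : u d j = βh d * (dstar - d) * (η j + (dstar - d) * ξh d j) := by rw [hueq]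
      rw [h3]
      have h1 : dstar - d ≠ 0 := hs0.ne'
      have h2 : βh d ≠ 0 := hβp.ne'
      field_simp
      all_goals ring
    · have hnlt : ¬ d < dstar := not_lt.mpr hge
      constructor
      · simp only [hsβ]; rw [if_neg hnlt]
      · simp only [hsξ]; rw [if_neg hnlt]
  have hβCd : ContDiffAt ℝ 1 sβ dstar :=
    hβhC.congr_of_eventuallyEq (hmatch.mono fun d hd => hd.1)
  have hξCd : ContDiffAt ℝ 1 sξ dstar :=
    hξhC.congr_of_eventuallyEq (hmatch.mono fun d hd => hd.2)
  -- interior smoothness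
  have hint : ∀ d0 ∈ Set.Ioo (0:ℝ) dstar, ContDiffAt ℝ 1 sβ d0 ∧ ContDiffAt ℝ 1 sξ d0 := by
    intro d0 hd0
    obtain ⟨hupos, hueq, -⟩ := hu d0 hd0.1 hd0.2
    obtain ⟨v, hvC, hvd0, hvev⟩ := interior_branch A (fun j y => f j (y, y)) d0 (u d0)
      hgC1 hupos (fun j => hueq j) hoff hd0.1 (fun j => hg j (u d0 j) (hupos j).le)
    have hIoo : ∀ᶠ d in 𝓝 d0, d ∈ Set.Ioo (0:ℝ) dstar := isOpen_Ioo.eventually_mem hd0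
    have huv : ∀ᶠ d in 𝓝 d0, u d = v d := by
      filter_upwards [hvev, hIoo] with d h1 h2
      exact ((hu d h2.1 h2.2).2.2 (v d) h1.1 h1.2).symm
    have hvjC : ∀ j, ContDiffAt ℝ 1 (fun d => v d j) d0 :=
      fun j => ((contDiff_apply ℝ ℝ j).contDiffAt).comp d0 hvC
    have hnumC : ContDiffAt ℝ 1 (fun d => ∑ j, ς j * v d j) d0 := by
      have houter : ContDiff ℝ 1 (fun x : Fin n → ℝ => ∑ j, ς j * x j) :=
        ContDiff.sum fun j _ => contDiff_const.mul (contDiff_apply ℝ ℝ j)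
      exact houter.contDiffAt.comp d0 hvC
    have hnum0 : 0 < ∑ j, ς j * v d0 j := by
      rw [hvd0]
      exact Finset.sum_pos (fun j _ => mul_pos (hς j) (hupos j)) huniv
    have hβrep : sβ =ᶠ[𝓝 d0]
        fun d => (∑ j, ς j * v d j) / ((dstar - d) * ∑ j, ς j * η j) := by
      filter_upwards [huv, hIoo] with d h1 h2
      rw [hsβlt d h2.2, h1]
    have hquotC : ContDiffAt ℝ 1
        (fun d => (∑ j, ς j * v d j) / ((dstar - d) * ∑ j, ς j * η j)) d0 := by
      refine hnumC.div ((contDiffAt_const.sub contDiffAt_id).mul contDiffAt_const) ?_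
      have hs0 : (0:ℝ) < dstar - d0 := sub_pos.mpr hd0.2
      exact (mul_pos hs0 hc0).ne'
    have hβC : ContDiffAt ℝ 1 sβ d0 := hquotC.congr_of_eventuallyEq hβrep
    refine ⟨hβC, ?_⟩
    have hnumpos : ∀ᶠ d in 𝓝 d0, 0 < ∑ j, ς j * v d j :=
      hnumC.continuousAt.eventually_mem (isOpen_Ioi.mem_nhds hnum0)
    have hξrep : sξ =ᶠ[𝓝 d0] fun d => fun j =>
        (v d j * (∑ k, ς k * η k) / (∑ k, ς k * v d k) - η j) / (dstar - d) := by
      filter_upwards [huv, hIoo, hnumpos] with d h1 h2 h3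
      rw [hsξlt d h2.2]
      funext j
      have hsne : dstar - d ≠ 0 := (sub_pos.mpr h2.2).ne'
      have hnne : (∑ k, ς k * v d k) ≠ 0 := h3.ne'
      have hc0ne : (∑ k, ς k * η k) ≠ 0 := hc0.ne'
      rw [hsβlt d h2.2, h1]
      field_simp
      all_goals ring
    have hξquotC : ContDiffAt ℝ 1 (fun d => fun j =>
        (v d j * (∑ k, ς k * η k) / (∑ k, ς k * v d k) - η j) / (dstar - d)) d0 := by
      refine contDiffAt_pi.mpr fun j => ?_
      have hs0 : (0:ℝ) < dstar - d0 := sub_pos.mpr hd0.2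
      refine ContDiffAt.div ?_ (contDiffAt_const.sub contDiffAt_id) hs0.ne'
      refine ContDiffAt.sub ?_ contDiffAt_const
      exact ContDiffAt.div ((hvjC j).mul contDiffAt_const) hnumC hnum0.ne'
    exact hξquotC.congr_of_eventuallyEq hξrep
  -- final assembly
  refine ⟨sβ, sξ, ?_, ?_, ?_, ?_, ?_, ?_, ?_, ?_⟩
  · intro d hd
    rcases eq_or_lt_of_le hd.2 with heq | hlt
    · subst heq
      exact hβCd.contDiffWithinAt
    · exact ((hint d ⟨hd.1, hlt⟩).1).contDiffWithinAt
  · intro d hd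
    rcases eq_or_lt_of_le hd.2 with heq | hlt
    · subst heq
      exact hξCd.contDiffWithinAt
    · exact ((hint d ⟨hd.1, hlt⟩).2).contDiffWithinAt
  · intro d hd
    rcases eq_or_lt_of_le hd.2 with heq | hlt
    · subst heq
      rw [hsξd, hξhval]
      exact hξvO
    · have hupos := (hu d hd.1 hlt).1
      have hnum0 : 0 < ∑ j, ς j * u d j :=
        Finset.sum_pos (fun j _ => mul_pos (hς j) (hupos j)) huniv
      have hs0 : (0:ℝ) < dstar - d := sub_pos.mpr hlt
      have hβp : 0 < sβ d := hsβpos d hd.1 hlt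
      have key : ∀ j, ς j * sξ d j * (sβ d * (dstar - d) * (dstar - d))
          = ς j * u d j - sβ d * (dstar - d) * (ς j * η j) := by
        intro j
        have hj := congrFun (hsξlt d hlt) j
        rw [hj]
        have h1 : dstar - d ≠ 0 := hs0.ne'
        have h2 : sβ d ≠ 0 := hβp.ne'
        field_simp
        all_goals ring
      have hsum := Finset.sum_congr rfl fun j (_ : j ∈ Finset.univ) => key j
      rw [← Finset.sum_mul, Finset.sum_sub_distrib, ← Finset.mul_sum] at hsum
      have hrhs : (∑ j, ς j * u d j) - sβ d * (dstar - d) * (∑ j, ς j * η j) = 0 := by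
        rw [hsβlt d hlt]
        have h1 : dstar - d ≠ 0 := hs0.ne'
        have h2 : (∑ j, ς j * η j) ≠ 0 := hc0.ne'
        field_simp
        all_goals ring
      rw [hrhs] at hsum
      have hK : sβ d * (dstar - d) * (dstar - d) ≠ 0 :=
        (mul_pos (mul_pos hβp hs0) hs0).ne'
      rcases mul_eq_zero.mp hsum with h | h
      · exact h
      · exact absurd h hK
  · intro d hd j
    have hβp : 0 < sβ d := hsβpos d hd.1 hd.2
    have hs0 : (0:ℝ) < dstar - d := sub_pos.mpr hd.2
    have hj := congrFun (hsξlt d hd.2) j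
    rw [hj]
    have h1 : dstar - d ≠ 0 := hs0.ne'
    have h2 : sβ d ≠ 0 := hβp.ne'
    field_simp
    all_goals ring
  · rw [hsβd, hβhval]
  · rw [hsβd, hβhval]; exact hβvpos
  · intro j
    rw [hsξd, hξhval, hsβd, hβhval]
    have h := hξvE j
    simp only [hcvec] at h
    exact h
  · intro ξ' hO' hE'
    rw [hsξd, hξhval]
    refine hξvU ξ' hO' ?_
    intro j
    have h := hE' j
    rw [hsβd, hβhval] at h
    simp only [hcvec]
    exact h
end

section
/- Assume ã − b̃ > 0 and fix an integer l ≥ 0; set τ_{d,l} := (θ(d)+2lπ)/ν(d). Then for d < d_* with d_*−d sufficiently small, the kernel of the conjugate-transpose matrix Δ(d,iν(d),τ_{d,l})^* is nontrivial, and its nonzero elements ψ̃_d, normalized (after multiplication by a nonzero scalar) as ψ̃_d = r̃_d ς + w̃_d with r̃_d ≥ 0, ⟨η, w̃_d⟩ = 0 and ‖ψ̃_d‖₂ = ‖ς‖₂, satisfy ψ̃_d → ς as d → d_*. -/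
open Matrix Filter Set

section Aux
variable {n : ℕ}

lemma aux_ker_eq (B : Matrix (Fin n) (Fin n) ℂ) (i0 j0 : Fin n)
    (h : IsUnit ((B.updateRow j0 (Pi.single i0 1)).det))
    (v : Fin n → ℂ) (hv : B.mulVec v = 0) :
    v = v i0 • ((B.updateRow j0 (Pi.single i0 1))⁻¹).mulVec (Pi.single j0 1) := by
  set N := B.updateRow j0 (Pi.single i0 1) with hN
  have h1 : N.mulVec v = v i0 • (Pi.single j0 1 : Fin n → ℂ) := by
    funext k
    rcases eq_or_ne k j0 with rfl | hk
    · have : N.mulVec v k = Pi.single i0 1 ⬝ᵥ v := by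
        rw [Matrix.mulVec, hN]
        simp [Matrix.updateRow_self]
      rw [this, single_dotProduct]
      simp
    · have : N.mulVec v k = B.mulVec v k := by
        rw [Matrix.mulVec, hN]
        simp [Matrix.updateRow_ne hk, Matrix.mulVec]
      rw [this, hv]
      simp [Pi.single_eq_of_ne hk]
  have h2 : N⁻¹.mulVec (N.mulVec v) = v := by
    rw [Matrix.mulVec_mulVec, Matrix.nonsing_inv_mul _ h, Matrix.one_mulVec]
  conv_lhs => rw [← h2, h1, Matrix.mulVec_smul]

lemma aux_exists_update (B : Matrix (Fin n) (Fin n) ℂ) (s : Fin n → ℂ) (i0 : Fin n)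
    (hs0 : s i0 ≠ 0) (hsk : B.mulVec s = 0)
    (hker : ∀ v, B.mulVec v = 0 → ∃ c : ℂ, v = c • s) :
    ∃ j0, IsUnit ((B.updateRow j0 (Pi.single i0 1)).det) := by
  by_contra hno
  push_neg at hno
  have he : ∀ j : Fin n, ∃ w : Fin n → ℂ, B.mulVec w = Pi.single j 1 := by
    intro j
    have hdet : (B.updateRow j (Pi.single i0 1)).det = 0 := by
      by_contra h; exact hno j (isUnit_iff_ne_zero.mpr h)
    obtain ⟨v, hv0, hvk⟩ := (Matrix.exists_mulVec_eq_zero_iff).mpr hdet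
    have hcomp : ∀ k, (B.updateRow j (Pi.single i0 1)).mulVec v k = 0 :=
      fun k => congrFun hvk k
    have hk0 : ∀ k, k ≠ j → B.mulVec v k = 0 := by
      intro k hkj
      have h3 := hcomp k
      rwa [Matrix.mulVec, Matrix.updateRow_ne hkj] at h3
    have hvi0 : v i0 = 0 := by
      have h4 := hcomp j
      rw [Matrix.mulVec, Matrix.updateRow_self, single_dotProduct, one_mul] at h4
      exact h4
    have hBj : B.mulVec v j ≠ 0 := by
      intro h0
      have hall : B.mulVec v = 0 := by
        funext k
        rcases eq_or_ne k j with rfl | hkj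
        · exact h0
        · exact hk0 k hkj
      obtain ⟨c, hc⟩ := hker v hall
      have hc0 : c = 0 := by
        have h5 := congrFun hc i0
        rw [hvi0] at h5
        simp only [Pi.smul_apply, smul_eq_mul] at h5
        rcases mul_eq_zero.mp h5.symm with h | h
        · exact h
        · exact absurd h hs0
      exact hv0 (by rw [hc, hc0, zero_smul])
    refine ⟨(B.mulVec v j)⁻¹ • v, ?_⟩
    rw [Matrix.mulVec_smul]
    funext k
    rcases eq_or_ne k j with rfl | hkj
    · simp [inv_mul_cancel₀ hBj]
    · simp [hk0 k hkj, Pi.single_eq_of_ne hkj]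
  have hsurj : Function.Surjective B.mulVecLin := by
    rw [← LinearMap.range_eq_top, ← top_le_iff, ← (Pi.basisFun ℂ (Fin n)).span_eq,
      Submodule.span_le]
    rintro x ⟨j, rfl⟩
    rw [Pi.basisFun_apply]
    obtain ⟨w, hw⟩ := he j
    exact ⟨w, hw⟩
  have hinj : Function.Injective B.mulVecLin :=
    (LinearMap.injective_iff_surjective).mpr hsurj
  refine hs0 ?_
  have : s = 0 := by
    apply hinj
    rw [Matrix.mulVecLin_apply, hsk]
    simp
  rw [this]; rfl

lemma aux_det_tendsto {α : Type*} {F : Filter α} {M : α → Matrix (Fin n) (Fin n) ℂ}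
    {N : Matrix (Fin n) (Fin n) ℂ}
    (h : ∀ i j, Filter.Tendsto (fun x => M x i j) F (nhds (N i j))) :
    Filter.Tendsto (fun x => (M x).det) F (nhds N.det) := by
  simp only [Matrix.det_apply']
  refine tendsto_finset_sum _ fun σ _ => ?_
  refine Filter.Tendsto.const_mul _ ?_
  exact tendsto_finset_prod _ fun i _ => h (σ i) i

end Aux

set_option maxHeartbeats 4000000

theorem stmt7 {n : ℕ} (hn : 2 ≤ n) (A : Matrix (Fin n) (Fin n) ℝ)
    (f : Fin n → ℝ × ℝ → ℝ) (m : Fin n → ℝ)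
    -- (H0)
    (hoff : ∀ j k, j ≠ k → 0 ≤ A j k)
    (hirr : ∀ S : Finset (Fin n), S.Nonempty → S ≠ Finset.univ →
      ∃ j ∉ S, ∃ k ∈ S, 0 < A j k)
    (hcol : ∀ j, ∑ k ∈ Finset.univ.erase j, A k j ≤ -A j j)
    (hstr : ∃ j, ∑ k ∈ Finset.univ.erase j, A k j < -A j j)
    -- (H1)
    (hf : ∀ j, ContDiff ℝ 4 (f j)) (hm : ∀ j, 0 < m j) (hf0 : ∀ j, f j (0, 0) = m j)
    (hg : ∀ j x, (0:ℝ) ≤ x → deriv (fun y => f j (y, y)) x < 0)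
    (u0 : Fin n → ℝ) (hu0 : ∀ j, 0 < u0 j ∧ f j (u0 j, u0 j) = 0)
    -- the critical dispersal rate d_*
    (dstar : ℝ) (hds : 0 < dstar)
    (hsd : specBound (dstar • A + Matrix.diagonal m) = 0)
    -- Perron–Frobenius right and left eigenvectors of d_* A + diag(m) for eigenvalue 0
    (η ς : Fin n → ℝ) (hη : ∀ j, 0 < η j) (hς : ∀ j, 0 < ς j)
    (hηs : ∑ j, η j = 1) (hςs : ∑ j, ς j = 1)
    (hηe : ∀ j, dstar * ∑ k, A j k * η k + m j * η j = 0)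
    (hςe : ∀ j, dstar * ∑ k, A k j * ς k + m j * ς j = 0)
    -- the unique positive equilibrium u^d for d ∈ (0, d_*)
    (u : ℝ → Fin n → ℝ)
    (hu : ∀ d, 0 < d → d < dstar → (∀ j, 0 < u d j) ∧
      (∀ j, d * ∑ k, A j k * u d k + u d j * f j (u d j, u d j) = 0) ∧
      ∀ v : Fin n → ℝ, (∀ j, 0 < v j) →
        (∀ j, d * ∑ k, A j k * v k + v j * f j (v j, v j) = 0) → v = u d)
    -- a_j = ∂ₓ f_j(0,0), b_j = ∂_y f_j(0,0), ã = Σ a_j η_j² ς_j, b̃ = Σ b_j η_j² ς_j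
    (a b : Fin n → ℝ) (ha : ∀ j, a j = pd1 (f j) 0 0) (hb : ∀ j, b j = pd2 (f j) 0 0)
    (ta tb : ℝ) (hta : ta = ∑ j, a j * η j ^ 2 * ς j) (htb : tb = ∑ j, b j * η j ^ 2 * ς j)
    (hab : 0 < ta - tb)
    -- the branch of purely imaginary characteristic roots near d_*
    (d2 : ℝ) (hd2 : 0 < d2 ∧ d2 < dstar) (ν θ : ℝ → ℝ) (ψ : ℝ → Fin n → ℂ)
    (l : ℕ)
    (hbr : ∀ d, d2 ≤ d → d < dstar →
      0 < ν d ∧ 0 < θ d ∧ θ d < 2 * Real.pi ∧ ψ d ≠ 0 ∧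
      (charM A f (u d) d (Complex.I * (ν d : ℂ))
        ((θ d + 2 * l * Real.pi) / ν d)).mulVec (ψ d) = 0)
    (hψlim : Tendsto ψ (nhdsWithin dstar (Set.Iio dstar)) (nhds (fun j => (η j : ℂ)))) :
    ∃ d', d2 ≤ d' ∧ d' < dstar ∧
      ∃ ψt : ℝ → Fin n → ℂ, ∃ rt : ℝ → ℝ, ∃ wt : ℝ → Fin n → ℂ,
      (∀ d, d' ≤ d → d < dstar →
        ψt d ≠ 0 ∧
        ((charM A f (u d) d (Complex.I * (ν d : ℂ))
            ((θ d + 2 * l * Real.pi) / ν d)).conjTranspose).mulVec (ψt d) = 0 ∧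
        (∀ φ : Fin n → ℂ, φ ≠ 0 →
          ((charM A f (u d) d (Complex.I * (ν d : ℂ))
              ((θ d + 2 * l * Real.pi) / ν d)).conjTranspose).mulVec φ = 0 →
          ∃ c : ℂ, c ≠ 0 ∧ φ = c • ψt d) ∧
        (∀ j, ψt d j = (rt d : ℂ) * (ς j : ℂ) + wt d j) ∧
        0 ≤ rt d ∧
        (∑ j, (η j : ℂ) * wt d j = 0) ∧
        Real.sqrt (∑ j, ‖ψt d j‖ ^ 2) = Real.sqrt (∑ j, (ς j) ^ 2)) ∧
      Tendsto ψt (nhdsWithin dstar (Set.Iio dstar)) (nhds (fun j => (ς j : ℂ))) := by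

  classical
  have hn' : 0 < n := by omega
  set i0 : Fin n := ⟨0, hn'⟩ with hi0def
  set Fil := nhdsWithin dstar (Set.Iio dstar) with hFil
  set ςc : Fin n → ℂ := fun j => (ς j : ℂ) with hςcdef
  set ηc : Fin n → ℂ := fun j => (η j : ℂ) with hηcdef
  -- real Perron-Frobenius rigidity for the transposed system
  have hker_real : ∀ w : Fin n → ℝ,
      (∀ j, dstar * ∑ k, A k j * w k + m j * w j = 0) → ∃ t : ℝ, ∀ k, w k = t * ς k := by
    intro w hw
    obtain ⟨k0, -, hk0⟩ := Finset.exists_min_image Finset.univ (fun k => w k / ς k)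
      ⟨i0, Finset.mem_univ i0⟩
    set t := w k0 / ς k0 with htdef
    set z : Fin n → ℝ := fun k => w k - t * ς k with hzdef
    have hz0 : ∀ k, 0 ≤ z k := by
      intro k
      have h1 : t ≤ w k / ς k := hk0 k (Finset.mem_univ k)
      rw [le_div_iff₀ (hς k)] at h1
      simp only [hzdef]
      linarith
    have hzeq : ∀ j, dstar * ∑ k, A k j * z k + m j * z j = 0 := by
      intro j
      have hsum : ∑ k, A k j * z k = (∑ k, A k j * w k) - t * (∑ k, A k j * ς k) := by
        rw [Finset.mul_sum, ← Finset.sum_sub_distrib]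
        refine Finset.sum_congr rfl fun k _ => ?_
        simp only [hzdef]
        ring
      rw [hsum]
      have hzj : z j = w j - t * ς j := rfl
      rw [hzj]
      linear_combination hw j - t * hςe j
    set S : Finset (Fin n) := Finset.univ.filter (fun k => z k = 0) with hSdef
    have hk0S : k0 ∈ S := by
      have : z k0 = 0 := by
        simp only [hzdef, htdef]
        rw [div_mul_cancel₀ _ (ne_of_gt (hς k0))]
        ring
      simp [hSdef, this]
    have hSuniv : S = Finset.univ := by
      by_contra hne
      obtain ⟨p, hpS, q, hqS, hpq⟩ := hirr S ⟨k0, hk0S⟩ hne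
      have hzq : z q = 0 := by
        have := hqS
        simp only [hSdef, Finset.mem_filter] at this
        exact this.2
      have heq : ∑ k, A k q * z k = 0 := by
        have h1 := hzeq q
        rw [hzq] at h1
        have h2 : dstar * ∑ k, A k q * z k = 0 := by linarith
        exact (mul_eq_zero.mp h2).resolve_left (ne_of_gt hds)
      have hterm : ∀ k ∈ Finset.univ, (0:ℝ) ≤ A k q * z k := by
        intro k _
        rcases eq_or_ne k q with rfl | hkq
        · rw [hzq]; simp
        · exact mul_nonneg (hoff k q hkq) (hz0 k)
      have hzero := (Finset.sum_eq_zero_iff_of_nonneg hterm).mp heq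
      have hzp : z p ≠ 0 := by
        intro h0
        exact hpS (by simp [hSdef, h0])
      rcases mul_eq_zero.mp (hzero p (Finset.mem_univ p)) with h | h
      · exact absurd h (ne_of_gt hpq)
      · exact hzp h
    refine ⟨t, fun k => ?_⟩
    have hk : k ∈ S := hSuniv.symm ▸ Finset.mem_univ k
    simp only [hSdef, Finset.mem_filter] at hk
    have := hk.2
    simp only [hzdef] at this
    linarith
  -- the limiting matrix and its conjugate transpose
  set Mstar : Matrix (Fin n) (Fin n) ℂ :=
    Matrix.of (fun j k => ((dstar * A j k + if j = k then m j else 0 : ℝ) : ℂ)) with hMstardef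
  set Bstar := Mstar.conjTranspose with hBstardef
  have hBent : ∀ j k, Bstar j k = ((dstar * A k j + if k = j then m k else 0 : ℝ) : ℂ) := by
    intro j k
    simp [hBstardef, hMstardef, Matrix.conjTranspose_apply, Complex.star_def,
      Complex.conj_ofReal]
  have hBmv : ∀ (v : Fin n → ℂ) j,
      Bstar.mulVec v j = (dstar : ℂ) * ∑ k, (A k j : ℂ) * v k + (m j : ℂ) * v j := by
    intro v j
    simp only [Matrix.mulVec, dotProduct]
    have hterm : ∀ k, Bstar j k * v k
        = (dstar:ℂ) * ((A k j : ℂ) * v k) + (if k = j then (m k : ℂ) * v k else 0) := by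
      intro k
      rw [hBent]
      split_ifs <;> push_cast <;> ring
    rw [Finset.sum_congr rfl (fun k _ => hterm k), Finset.sum_add_distrib, ← Finset.mul_sum]
    congr 1
    simp
  have hBς : Bstar.mulVec ςc = 0 := by
    funext j
    rw [hBmv]
    have h := hςe j
    have h2 : ((dstar * ∑ k, A k j * ς k + m j * ς j : ℝ) : ℂ) = 0 := by rw [h]; norm_num
    push_cast at h2
    simpa [hςcdef] using h2
  have hkerBstar : ∀ v : Fin n → ℂ, Bstar.mulVec v = 0 → ∃ c : ℂ, v = c • ςc := by
    intro v hv
    have hre : ∀ j, dstar * ∑ k, A k j * (v k).re + m j * (v j).re = 0 := by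
      intro j
      have h := congrFun hv j
      rw [hBmv] at h
      have h2 := congrArg Complex.re h
      simpa [Complex.add_re, Complex.re_ofReal_mul, Complex.re_sum] using h2
    have him : ∀ j, dstar * ∑ k, A k j * (v k).im + m j * (v j).im = 0 := by
      intro j
      have h := congrFun hv j
      rw [hBmv] at h
      have h2 := congrArg Complex.im h
      simpa [Complex.add_im, Complex.im_ofReal_mul, Complex.im_sum] using h2
    obtain ⟨t1, ht1⟩ := hker_real _ hre
    obtain ⟨t2, ht2⟩ := hker_real _ him
    refine ⟨(t1 : ℂ) + (t2 : ℂ) * Complex.I, ?_⟩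
    funext k
    have hvk : v k = ((v k).re : ℂ) + ((v k).im : ℂ) * Complex.I := (Complex.re_add_im (v k)).symm
    rw [hvk, ht1 k, ht2 k]
    simp only [hςcdef, Pi.smul_apply, smul_eq_mul]
    push_cast
    ring
  have hςi0 : ςc i0 ≠ 0 := Complex.ofReal_ne_zero.mpr (ne_of_gt (hς i0))
  obtain ⟨j0, hUnitS⟩ := aux_exists_update Bstar ςc i0 hςi0 hBς hkerBstar
  -- g_j is strictly decreasing on [0,∞)
  have hgc : ∀ j, Continuous (fun x : ℝ => f j (x, x)) := fun j =>
    (hf j).continuous.comp (continuous_id.prodMk continuous_id)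
  have hganti : ∀ j, StrictAntiOn (fun x : ℝ => f j (x, x)) (Set.Ici 0) := by
    intro j
    refine strictAntiOn_of_deriv_neg (convex_Ici 0) (hgc j).continuousOn ?_
    intro x hx
    rw [interior_Ici] at hx
    exact hg j x (le_of_lt hx)
  -- uniform smallness of the positive equilibrium near dstar
  have hukey : ∀ ε : ℝ, 0 < ε → ∃ dl, dl < dstar ∧ ∀ d, dl < d → d2 < d → d < dstar →
      ∀ k, u d k < ε := by
    intro ε hε
    obtain ⟨kmin, -, hkmin⟩ := Finset.exists_min_image Finset.univ η ⟨i0, Finset.mem_univ i0⟩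
    obtain ⟨kmax, -, hkmax⟩ := Finset.exists_max_image Finset.univ η ⟨i0, Finset.mem_univ i0⟩
    set ε2 : ℝ := ε * η kmin / η kmax with hε2def
    have hε2 : 0 < ε2 := div_pos (mul_pos hε (hη kmin)) (hη kmax)
    obtain ⟨jd, -, hjd⟩ := Finset.exists_min_image Finset.univ
      (fun j => m j - f j (ε2, ε2)) ⟨i0, Finset.mem_univ i0⟩
    set δ : ℝ := m jd - f jd (ε2, ε2) with hδdef
    have hδ : 0 < δ := by
      have h1 : f jd (ε2, ε2) < f jd (0, 0) :=
        hganti jd Set.self_mem_Ici (Set.mem_Ici.mpr (le_of_lt hε2)) hε2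
      rw [hf0 jd] at h1
      simp only [hδdef]
      linarith
    obtain ⟨jm, -, hjm⟩ := Finset.exists_max_image Finset.univ m ⟨i0, Finset.mem_univ i0⟩
    refine ⟨dstar - δ * dstar / m jm,
      by nlinarith [div_pos (mul_pos hδ hds) (hm jm)], ?_⟩
    intro d hdl hd2' hdlt k
    have hd0 : 0 < d := lt_trans hd2.1 hd2'
    obtain ⟨hupos, huel, -⟩ := hu d hd0 hdlt
    obtain ⟨J, -, hJ⟩ := Finset.exists_max_image Finset.univ (fun k => u d k / η k)
      ⟨i0, Finset.mem_univ i0⟩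
    have hcoord' : ∀ k2, u d k2 * η J ≤ u d J * η k2 := by
      intro k2
      have h1 : u d k2 / η k2 ≤ u d J / η J := hJ k2 (Finset.mem_univ k2)
      rw [div_le_div_iff₀ (hη k2) (hη J)] at h1
      linarith
    have hcoord : ∀ k2, u d k2 ≤ u d J / η J * η k2 := by
      intro k2
      rw [div_mul_eq_mul_div, le_div_iff₀ (hη J)]
      exact hcoord' k2
    have hAu : ∑ k2, A J k2 * u d k2 ≤ u d J / η J * ∑ k2, A J k2 * η k2 := by
      rw [Finset.mul_sum]
      refine Finset.sum_le_sum fun k2 _ => ?_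
      rcases eq_or_ne J k2 with rfl | hne
      · refine le_of_eq ?_
        have h2 : u d J / η J * η J = u d J := div_mul_cancel₀ _ (ne_of_gt (hη J))
        calc A J J * u d J = A J J * (u d J / η J * η J) := by rw [h2]
          _ = u d J / η J * (A J J * η J) := by ring
      · calc A J k2 * u d k2 ≤ A J k2 * (u d J / η J * η k2) :=
            mul_le_mul_of_nonneg_left (hcoord k2) (hoff J k2 hne)
          _ = u d J / η J * (A J k2 * η k2) := by ring
    have hAη : ∑ k2, A J k2 * η k2 = -(m J * η J) / dstar := by
      have h := hηe J
      field_simp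
      linarith
    have hineq : d * m J / dstar ≤ f J (u d J, u d J) := by
      have h1 := huel J
      have h2 : d * ∑ k2, A J k2 * u d k2 ≤ d * (u d J / η J * (-(m J * η J) / dstar)) := by
        rw [← hAη]
        exact mul_le_mul_of_nonneg_left hAu (le_of_lt hd0)
      have h3 : u d J / η J * (-(m J * η J) / dstar) = -(m J * u d J) / dstar := by
        rw [div_mul_div_comm, div_eq_div_iff (mul_pos (hη J) hds).ne' hds.ne']
        ring
      rw [h3] at h2
      have h4 : d * (m J * u d J) / dstar ≤ u d J * f J (u d J, u d J) := by
        have h5 : d * (-(m J * u d J) / dstar) = -(d * (m J * u d J) / dstar) := by ring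
        rw [h5] at h2
        linarith
      have h5 : d * m J / dstar * u d J ≤ f J (u d J, u d J) * u d J := by
        calc d * m J / dstar * u d J = d * (m J * u d J) / dstar := by ring
          _ ≤ u d J * f J (u d J, u d J) := h4
          _ = f J (u d J, u d J) * u d J := by ring
      exact le_of_mul_le_mul_right h5 (hupos J)
    have hJsmall : u d J < ε2 := by
      by_contra hcon
      push_neg at hcon
      have h1 : f J (u d J, u d J) ≤ f J (ε2, ε2) := by
        rcases eq_or_lt_of_le hcon with heq | hlt
        · rw [← heq]
        · exact le_of_lt (hganti J (Set.mem_Ici.mpr (le_of_lt hε2))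
            (Set.mem_Ici.mpr (le_trans (le_of_lt hε2) hcon)) hlt)
      have h2 : δ ≤ m J - f J (ε2, ε2) := hjd J (Finset.mem_univ J)
      have hms : m J - d * m J / dstar = m J * (dstar - d) / dstar := by
        field_simp
      have h3 : m J - f J (u d J, u d J) ≤ m J * (dstar - d) / dstar := by
        rw [← hms]
        linarith
      have h4 : m J * (dstar - d) / dstar < δ := by
        have hmj : m J ≤ m jm := hjm J (Finset.mem_univ J)
        have h5 : dstar - d < δ * dstar / m jm := by linarith
        rw [lt_div_iff₀ (hm jm)] at h5
        rw [div_lt_iff₀ hds]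
        nlinarith [hm J, hds, sub_nonneg.mpr (le_of_lt hdlt)]
      linarith
    have c1 : u d k * η J ≤ u d J * η k := hcoord' k
    have c2 : u d J * η k < ε2 * η k := mul_lt_mul_of_pos_right hJsmall (hη k)
    have c3 : ε2 * η k ≤ ε2 * η kmax :=
      mul_le_mul_of_nonneg_left (hkmax k (Finset.mem_univ k)) (le_of_lt hε2)
    have c4 : ε2 * η kmax = ε * η kmin := by
      rw [hε2def, div_mul_cancel₀ _ (ne_of_gt (hη kmax))]
    have c5 : ε * η kmin ≤ ε * η J :=
      mul_le_mul_of_nonneg_left (hkmin J (Finset.mem_univ J)) (le_of_lt hε)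
    have c6 : u d k * η J < ε * η J := by linarith
    exact lt_of_mul_lt_mul_right c6 (le_of_lt (hη J))
  have hIoo : ∀ c : ℝ, c < dstar → Set.Ioo c dstar ∈ Fil := fun c hc =>
    Ioo_mem_nhdsLT hc
  have hulim : ∀ j, Tendsto (fun d => u d j) Fil (nhds 0) := by
    intro j
    rw [Metric.tendsto_nhds]
    intro ε hε
    obtain ⟨dl, hdl, hkey⟩ := hukey ε hε
    have hmem : Set.Ioo (max dl d2) dstar ∈ Fil := hIoo _ (max_lt hdl hd2.2)
    filter_upwards [hmem] with d hd
    have h1 := hkey d (lt_of_le_of_lt (le_max_left _ _) hd.1)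
      (lt_of_le_of_lt (le_max_right _ _) hd.1) hd.2 j
    have h0 : 0 < u d j :=
      (hu d (lt_trans hd2.1 (lt_of_le_of_lt (le_max_right _ _) hd.1)) hd.2).1 j
    rw [Real.dist_eq, sub_zero, abs_of_pos h0]
    exact h1
  have hdt : Tendsto (fun d : ℝ => d) Fil (nhds dstar) :=
    tendsto_id.mono_right nhdsWithin_le_nhds
  have hdtC : Tendsto (fun d : ℝ => (d : ℂ)) Fil (nhds (dstar : ℂ)) :=
    (Complex.continuous_ofReal.tendsto dstar).comp hdt
  have hfderc : ∀ j, Continuous (fun x : ℝ => fderiv ℝ (f j) (x, x)) := fun j =>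
    ((hf j).continuous_fderiv (by norm_num)).comp (continuous_id.prodMk continuous_id)
  have hFlim : ∀ j, Tendsto
      (fun d => f j (u d j, u d j) + u d j * pd1 (f j) (u d j) (u d j)) Fil (nhds (m j)) := by
    intro j
    have h1 : Tendsto (fun d => f j (u d j, u d j)) Fil (nhds (m j)) := by
      have h2 := ((hgc j).tendsto 0).comp (hulim j)
      rwa [hf0 j] at h2
    have hpc : Continuous (fun x : ℝ => pd1 (f j) x x) :=
      (hfderc j).clm_apply continuous_const
    have h3 : Tendsto (fun d => u d j * pd1 (f j) (u d j) (u d j)) Fil (nhds 0) := by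
      have h4 := (hulim j).mul ((hpc.tendsto 0).comp (hulim j))
      simpa using h4
    simpa using h1.add h3
  have hClim : ∀ j, Tendsto (fun d => u d j * pd2 (f j) (u d j) (u d j)) Fil (nhds 0) := by
    intro j
    have hpc : Continuous (fun x : ℝ => pd2 (f j) x x) :=
      (hfderc j).clm_apply continuous_const
    have h4 := (hulim j).mul ((hpc.tendsto 0).comp (hulim j))
    simpa using h4
  set τf : ℝ → ℝ := fun d => (θ d + 2 * l * Real.pi) / ν d with hτdef
  set Md : ℝ → Matrix (Fin n) (Fin n) ℂ :=
    fun d => charM A f (u d) d (Complex.I * (ν d : ℂ)) (τf d) with hMddef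
  have hMent : ∀ d j k, Md d j k = (d : ℂ) * (A j k : ℂ) +
      (if j = k then ((f j (u d j, u d j) + u d j * pd1 (f j) (u d j) (u d j) : ℝ) : ℂ)
        + Complex.exp (-(Complex.I * (ν d : ℂ)) * ((τf d : ℝ) : ℂ)) *
          ((u d j * pd2 (f j) (u d j) (u d j) : ℝ) : ℂ)
        - Complex.I * (ν d : ℂ) else 0) := by
    intro d j k
    rw [hMddef]
    simp only [charM, Matrix.sub_apply, Matrix.add_apply, Matrix.smul_apply,
      Matrix.diagonal_apply, Matrix.map_apply, Matrix.one_apply, smul_eq_mul]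
    split_ifs with h
    · subst h; ring
    · ring
  have hexpre : ∀ d, (-(Complex.I * (ν d : ℂ)) * ((τf d : ℝ) : ℂ)).re = 0 := by
    intro d
    simp [Complex.mul_re]
  have hEClim : ∀ j, Tendsto (fun d =>
      Complex.exp (-(Complex.I * (ν d : ℂ)) * ((τf d : ℝ) : ℂ)) *
        ((u d j * pd2 (f j) (u d j) (u d j) : ℝ) : ℂ)) Fil (nhds 0) := by
    intro j
    rw [tendsto_zero_iff_norm_tendsto_zero]
    have heq : ∀ d, ‖Complex.exp (-(Complex.I * (ν d : ℂ)) * ((τf d : ℝ) : ℂ)) *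
        ((u d j * pd2 (f j) (u d j) (u d j) : ℝ) : ℂ)‖
        = |u d j * pd2 (f j) (u d j) (u d j)| := by
      intro d
      rw [norm_mul, Complex.norm_exp,
        hexpre d, Real.exp_zero, one_mul, Complex.norm_real, Real.norm_eq_abs]
    simp only [heq]
    simpa [Function.comp_def] using (continuous_abs.tendsto 0).comp (hClim j)
  have hψlimj : ∀ k, Tendsto (fun d => ψ d k) Fil (nhds (ηc k)) := fun k =>
    (tendsto_pi_nhds.mp hψlim) k
  have hbrEv : ∀ᶠ d in Fil, d2 ≤ d ∧ d < dstar := by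
    filter_upwards [hIoo d2 hd2.2] with d hd
    exact ⟨le_of_lt hd.1, hd.2⟩
  have hcompEv : ∀ᶠ d in Fil, Complex.I * (ν d : ℂ) * ψ d i0
      = ∑ k, ((d:ℂ) * (A i0 k : ℂ)) * ψ d k
        + (((f i0 (u d i0, u d i0) + u d i0 * pd1 (f i0) (u d i0) (u d i0) : ℝ) : ℂ)
          + Complex.exp (-(Complex.I * (ν d : ℂ)) * ((τf d : ℝ) : ℂ)) *
            ((u d i0 * pd2 (f i0) (u d i0) (u d i0) : ℝ) : ℂ)) * ψ d i0 := by
    filter_upwards [hbrEv] with d hd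
    obtain ⟨-, -, -, -, heq⟩ := hbr d hd.1 hd.2
    have h1 : ∑ k, Md d i0 k * ψ d k = 0 := by
      have h2 : (Md d).mulVec (ψ d) i0 = 0 := by
        rw [hMddef]
        exact congrFun heq i0
      rw [Matrix.mulVec, dotProduct] at h2
      exact h2
    have h2 : ∑ k, Md d i0 k * ψ d k = (∑ k, ((d:ℂ) * (A i0 k : ℂ)) * ψ d k)
        + (((f i0 (u d i0, u d i0) + u d i0 * pd1 (f i0) (u d i0) (u d i0) : ℝ) : ℂ)
          + Complex.exp (-(Complex.I * (ν d : ℂ)) * ((τf d : ℝ) : ℂ)) *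
            ((u d i0 * pd2 (f i0) (u d i0) (u d i0) : ℝ) : ℂ)) * ψ d i0
        - Complex.I * (ν d : ℂ) * ψ d i0 := by
      rw [Finset.sum_congr rfl (fun k _ => by rw [hMent d i0 k])]
      simp only [add_mul, ite_mul, zero_mul]
      rw [Finset.sum_add_distrib, Finset.sum_ite_eq]
      simp only [Finset.mem_univ, if_true]
      ring
    rw [h2] at h1
    linear_combination -h1
  have hRlim : Tendsto (fun d : ℝ => ∑ k, ((d:ℂ) * (A i0 k : ℂ)) * ψ d k
      + (((f i0 (u d i0, u d i0) + u d i0 * pd1 (f i0) (u d i0) (u d i0) : ℝ) : ℂ)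
        + Complex.exp (-(Complex.I * (ν d : ℂ)) * ((τf d : ℝ) : ℂ)) *
          ((u d i0 * pd2 (f i0) (u d i0) (u d i0) : ℝ) : ℂ)) * ψ d i0) Fil (nhds 0) := by
    have hsum : Tendsto (fun d : ℝ => ∑ k, ((d:ℂ)*(A i0 k:ℂ)) * ψ d k) Fil
        (nhds (∑ k, ((dstar:ℂ)*(A i0 k:ℂ)) * ηc k)) :=
      tendsto_finset_sum _ fun k _ => (hdtC.mul tendsto_const_nhds).mul (hψlimj k)
    have hFC : Tendsto (fun d =>
        (((f i0 (u d i0, u d i0) + u d i0 * pd1 (f i0) (u d i0) (u d i0) : ℝ) : ℂ)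
          + Complex.exp (-(Complex.I * (ν d : ℂ)) * ((τf d : ℝ) : ℂ)) *
            ((u d i0 * pd2 (f i0) (u d i0) (u d i0) : ℝ) : ℂ)) * ψ d i0) Fil
        (nhds ((m i0 : ℂ) * ηc i0)) := by
      refine Tendsto.mul ?_ (hψlimj i0)
      have hF : Tendsto (fun d =>
          ((f i0 (u d i0, u d i0) + u d i0 * pd1 (f i0) (u d i0) (u d i0) : ℝ) : ℂ)) Fil
          (nhds ((m i0 : ℂ))) := (Complex.continuous_ofReal.tendsto _).comp (hFlim i0)
      simpa using hF.add (hEClim i0)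
    have hval : (∑ k, ((dstar:ℂ)*(A i0 k:ℂ)) * ηc k) + (m i0 : ℂ) * ηc i0 = 0 := by
      have h := hηe i0
      have h2 : ((dstar * ∑ k, A i0 k * η k + m i0 * η i0 : ℝ) : ℂ) = 0 := by
        rw [h]; norm_num
      push_cast at h2
      have h3 : ∑ k, ((dstar:ℂ)*(A i0 k:ℂ)) * ηc k = (dstar:ℂ) * ∑ k, (A i0 k:ℂ) * (η k : ℂ) := by
        rw [Finset.mul_sum]
        exact Finset.sum_congr rfl fun k _ => by rw [hηcdef]; ring
      rw [h3, hηcdef]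
      exact h2
    have h4 := hsum.add hFC
    rwa [hval] at h4
  have hIνψ : Tendsto (fun d => Complex.I * (ν d:ℂ) * ψ d i0) Fil (nhds 0) :=
    Tendsto.congr' (by filter_upwards [hcompEv] with d hd using hd.symm) hRlim
  have hνlim : Tendsto ν Fil (nhds 0) := by
    have habs : Tendsto (fun d => ‖Complex.I * (ν d:ℂ) * ψ d i0‖) Fil (nhds 0) := by
      have h1 := (continuous_norm.tendsto 0).comp hIνψ
      simpa only [Function.comp_def, norm_zero] using h1
    have hψabs : Tendsto (fun d => ‖ψ d i0‖) Fil (nhds (η i0)) := by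
      have h1 := (continuous_norm.tendsto (ηc i0)).comp (hψlimj i0)
      simpa [Function.comp_def, hηcdef, Complex.norm_real, Real.norm_eq_abs, abs_of_pos (hη i0)] using h1
    have hdiv := habs.div hψabs (ne_of_gt (hη i0))
    rw [zero_div] at hdiv
    refine Tendsto.congr' ?_ hdiv
    filter_upwards [hbrEv, hψabs.eventually (eventually_gt_nhds (hη i0))] with d hd hpos
    have hν' : 0 < ν d := (hbr d hd.1 hd.2).1
    have habsmul : ‖Complex.I * (ν d:ℂ) * ψ d i0‖
        = ν d * ‖ψ d i0‖ := by
      rw [norm_mul, norm_mul, Complex.norm_I, one_mul, Complex.norm_real, Real.norm_eq_abs, abs_of_pos hν']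
    simp only [Pi.div_apply, habsmul]
    rw [mul_div_assoc, div_self (ne_of_gt hpos), mul_one]
  have hMdlim : ∀ j k, Tendsto (fun d => Md d j k) Fil (nhds (Mstar j k)) := by
    intro j k
    have hoffd : Tendsto (fun d : ℝ => (d:ℂ) * (A j k : ℂ)) Fil
        (nhds ((dstar : ℂ) * (A j k : ℂ))) := hdtC.mul tendsto_const_nhds
    have hstar : Mstar j k = ((dstar * A j k : ℝ) : ℂ) + (if j = k then ((m j : ℝ) : ℂ) else 0) := by
      simp only [hMstardef, Matrix.of_apply]
      split_ifs <;> push_cast <;> ring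
    rcases eq_or_ne j k with rfl | hne
    · have hF : Tendsto (fun d =>
          ((f j (u d j, u d j) + u d j * pd1 (f j) (u d j) (u d j) : ℝ) : ℂ)) Fil
          (nhds ((m j : ℂ))) := (Complex.continuous_ofReal.tendsto _).comp (hFlim j)
      have hIv : Tendsto (fun d => Complex.I * (ν d : ℂ)) Fil (nhds 0) := by
        have h1 : Tendsto (fun d => ((ν d : ℝ) : ℂ)) Fil (nhds 0) := by
          have h2 := (Complex.continuous_ofReal.tendsto 0).comp hνlim
          simpa [Function.comp_def] using h2
        have h3 := h1.const_mul Complex.I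
        simpa using h3
      have htot := hoffd.add ((hF.add (hEClim j)).sub hIv)
      have htot2 : Tendsto (fun d => Md d j j) Fil
          (nhds ((dstar:ℂ)*(A j j:ℂ) + ((m j:ℂ) + 0 - 0))) := by
        refine htot.congr ?_
        intro d
        rw [hMent d j j]
        simp
      have hval : (dstar:ℂ)*(A j j:ℂ) + ((m j:ℂ) + 0 - 0)
          = ((dstar * A j j : ℝ) : ℂ) + ((m j : ℝ) : ℂ) := by
        push_cast
        ring
      rw [hstar, if_pos rfl, ← hval]
      exact htot2
    · have htot2 : Tendsto (fun d => Md d j k) Fil (nhds ((dstar:ℂ)*(A j k:ℂ))) := by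
        refine hoffd.congr ?_
        intro d
        rw [hMent d j k, if_neg hne]
        ring
      rw [hstar, if_neg hne]
      have hval : (dstar:ℂ)*(A j k:ℂ) = ((dstar * A j k : ℝ) : ℂ) + 0 := by
        push_cast
        ring
      rw [← hval]
      exact htot2
  set Bd : ℝ → Matrix (Fin n) (Fin n) ℂ := fun d => (Md d).conjTranspose with hBddef
  have hBdlim : ∀ j k, Tendsto (fun d => Bd d j k) Fil (nhds (Bstar j k)) := by
    intro j k
    have h1 := (continuous_star.tendsto (Mstar k j)).comp (hMdlim k j)
    simpa only [Function.comp_def, hBddef, hBstardef, Matrix.conjTranspose_apply] using h1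
  set NuS : Matrix (Fin n) (Fin n) ℂ := Bstar.updateRow j0 (Pi.single i0 1) with hNuSdef
  set Nud : ℝ → Matrix (Fin n) (Fin n) ℂ :=
    fun d => (Bd d).updateRow j0 (Pi.single i0 1) with hNuddef
  have hNulim : ∀ p q, Tendsto (fun d => Nud d p q) Fil (nhds (NuS p q)) := by
    intro p q
    rcases eq_or_ne p j0 with rfl | hne
    · simp only [hNuddef, hNuSdef, Matrix.updateRow_self]
      exact tendsto_const_nhds
    · simp only [hNuddef, hNuSdef, Matrix.updateRow_ne hne]
      exact hBdlim p q
  have hdetlim : Tendsto (fun d => (Nud d).det) Fil (nhds NuS.det) := aux_det_tendsto hNulim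
  have hdetS : NuS.det ≠ 0 := isUnit_iff_ne_zero.mp hUnitS
  have hUnitEv : ∀ᶠ d in Fil, IsUnit (Nud d).det := by
    filter_upwards [hdetlim.eventually_ne hdetS] with d hd
    exact isUnit_iff_ne_zero.mpr hd
  have hadjlim : ∀ i, Tendsto (fun d => (Nud d).adjugate i j0) Fil
      (nhds (NuS.adjugate i j0)) := by
    intro i
    simp only [Matrix.adjugate_apply]
    refine aux_det_tendsto ?_
    intro p q
    rcases eq_or_ne p j0 with rfl | hne
    · simp only [Matrix.updateRow_self]
      exact tendsto_const_nhds
    · simp only [Matrix.updateRow_ne hne]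
      exact hNulim p q
  set zv : ℝ → Fin n → ℂ := fun d => (Nud d)⁻¹.mulVec (Pi.single j0 1) with hzvdef
  set zS : Fin n → ℂ := NuS⁻¹.mulVec (Pi.single j0 1) with hzSdef
  have hzform : ∀ (M : Matrix (Fin n) (Fin n) ℂ) (i : Fin n),
      M⁻¹.mulVec (Pi.single j0 1) i = (M.det)⁻¹ * M.adjugate i j0 := by
    intro M i
    rw [Matrix.inv_def, Matrix.smul_mulVec, Matrix.mulVec_single, Ring.inverse_eq_inv]
    simp
  have hzlim : ∀ i, Tendsto (fun d => zv d i) Fil (nhds (zS i)) := by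
    intro i
    simp only [hzvdef, hzSdef, hzform]
    exact (hdetlim.inv₀ hdetS).mul (hadjlim i)
  have hςzS : ςc = ςc i0 • zS := aux_ker_eq Bstar i0 j0 hUnitS ςc hBς
  have hzSval : ∀ jj, zS jj = ((ς jj / ς i0 : ℝ) : ℂ) := by
    intro jj
    have h1 := congrFun hςzS jj
    simp only [Pi.smul_apply, smul_eq_mul] at h1
    have h2 : zS jj = ςc jj / ςc i0 := by
      rw [eq_div_iff hςi0]
      linear_combination -h1
    rw [h2, hςcdef]
    push_cast
    ring
  set Lc : ℝ := Real.sqrt (∑ j, (ς j)^2) with hLcdef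
  have hsumsq : 0 < ∑ j, (ς j)^2 :=
    Finset.sum_pos (fun j _ => pow_pos (hς j) 2) ⟨i0, Finset.mem_univ i0⟩
  have hLc : 0 < Lc := Real.sqrt_pos.mpr hsumsq
  set pv : ℝ → ℂ := fun d => ∑ j, ηc j * zv d j with hpvdef
  set Lz : ℝ → ℝ := fun d => Real.sqrt (∑ j, ‖zv d j‖^2) with hLzdef
  set cc : ℝ → ℂ := fun d => ((Lc / Lz d : ℝ) : ℂ) *
    (if pv d = 0 then 1 else (starRingEnd ℂ) (pv d) / ((‖pv d‖ : ℝ) : ℂ)) with hccdef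
  set ψt : ℝ → Fin n → ℂ := fun d j => cc d * zv d j with hψtdef
  set Sςη : ℝ := ∑ j, η j * ς j with hSdef2
  have hSpos : 0 < Sςη :=
    Finset.sum_pos (fun j _ => mul_pos (hη j) (hς j)) ⟨i0, Finset.mem_univ i0⟩
  set rt : ℝ → ℝ := fun d => (∑ j, ηc j * ψt d j).re / Sςη with hrtdef
  set wt : ℝ → Fin n → ℂ := fun d j => ψt d j - (rt d : ℂ) * (ς j : ℂ) with hwtdef
  -- limit of the normalisation data
  have hpS : (∑ j, ηc j * zS j) = ((Sςη / ς i0 : ℝ) : ℂ) := by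
    have h1 : ∀ j, ηc j * zS j = ((η j * ς j / ς i0 : ℝ) : ℂ) := by
      intro j
      rw [hzSval j, hηcdef]
      push_cast
      ring
    rw [Finset.sum_congr rfl (fun j _ => h1 j), hSdef2]
    push_cast [Finset.sum_div]
    rfl
  have hpSpos : (0:ℝ) < Sςη / ς i0 := div_pos hSpos (hς i0)
  have hplim : Tendsto pv Fil (nhds ((Sςη / ς i0 : ℝ) : ℂ)) := by
    rw [← hpS]
    exact tendsto_finset_sum _ fun j _ => tendsto_const_nhds.mul (hzlim j)
  have hpSne : ((Sςη / ς i0 : ℝ) : ℂ) ≠ 0 := Complex.ofReal_ne_zero.mpr (ne_of_gt hpSpos)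
  have hzSabs : ∑ j, ‖zS j‖^2 = (∑ j, (ς j)^2) / (ς i0)^2 := by
    rw [Finset.sum_div]
    refine Finset.sum_congr rfl fun j _ => ?_
    rw [hzSval j, Complex.norm_real, Real.norm_eq_abs, abs_of_pos (div_pos (hς j) (hς i0)), div_pow]
  have hLzlim : Tendsto Lz Fil (nhds (Lc / ς i0)) := by
    have h1 : Tendsto (fun d => ∑ j, ‖zv d j‖^2) Fil
        (nhds (∑ j, ‖zS j‖^2)) := by
      refine tendsto_finset_sum _ fun j _ => ?_
      have h2 := (continuous_norm.tendsto (zS j)).comp (hzlim j)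
      exact (h2.pow 2)
    have h3 := (Real.continuous_sqrt.tendsto _).comp h1
    have h4 : Real.sqrt (∑ j, ‖zS j‖^2) = Lc / ς i0 := by
      rw [hzSabs, Real.sqrt_div (le_of_lt hsumsq), Real.sqrt_sq (le_of_lt (hς i0)), hLcdef]
    rwa [h4] at h3
  have hLzSpos : (0:ℝ) < Lc / ς i0 := div_pos hLc (hς i0)
  have hcclim : Tendsto cc Fil (nhds ((ς i0 : ℝ) : ℂ)) := by
    have hEvp : ∀ᶠ d in Fil, pv d ≠ 0 := hplim.eventually_ne hpSne
    have t1 : Tendsto (fun d => ((Lc / Lz d : ℝ) : ℂ)) Fil (nhds ((ς i0 : ℝ) : ℂ)) := by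
      have h1 : Tendsto (fun d => Lc / Lz d) Fil (nhds (Lc / (Lc / ς i0))) :=
        tendsto_const_nhds.div hLzlim (ne_of_gt hLzSpos)
      have h2 : Lc / (Lc / ς i0) = ς i0 := by
        field_simp
      rw [h2] at h1
      exact (Complex.continuous_ofReal.tendsto _).comp h1
    have t2 : Tendsto (fun d => (starRingEnd ℂ) (pv d) / ((‖pv d‖ : ℝ) : ℂ)) Fil
        (nhds 1) := by
      have h2 : Tendsto (fun d => (starRingEnd ℂ) (pv d)) Fil
          (nhds ((Sςη / ς i0 : ℝ) : ℂ)) := by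
        have h3 := (continuous_star.tendsto ((Sςη / ς i0 : ℝ) : ℂ)).comp hplim
        simpa [Function.comp_def, Complex.conj_ofReal] using h3
      have h4 : Tendsto (fun d => ((‖pv d‖ : ℝ) : ℂ)) Fil
          (nhds ((Sςη / ς i0 : ℝ) : ℂ)) := by
        have h5 := (continuous_norm.tendsto _).comp hplim
        have h6 : ‖((Sςη / ς i0 : ℝ) : ℂ)‖ = Sςη / ς i0 := by
          rw [Complex.norm_real, Real.norm_eq_abs, abs_of_pos hpSpos]
        rw [h6] at h5
        exact (Complex.continuous_ofReal.tendsto _).comp h5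
      have h7 := h2.div h4 hpSne
      rwa [div_self hpSne] at h7
    have htot := t1.mul t2
    rw [mul_one] at htot
    refine Tendsto.congr' ?_ htot
    filter_upwards [hplim.eventually_ne hpSne] with d hp
    rw [hccdef]
    simp only [if_neg hp]
  have hψtlim : Tendsto ψt Fil (nhds ςc) := by
    rw [tendsto_pi_nhds]
    intro j
    have h1 := hcclim.mul (hzlim j)
    have h2 : ((ς i0 : ℝ) : ℂ) * zS j = ςc j := by
      rw [hzSval j, hςcdef]
      push_cast
      rw [mul_comm]
      exact div_mul_cancel₀ _ (Complex.ofReal_ne_zero.mpr (hς i0).ne')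
    rwa [h2] at h1
  -- the per-d properties, holding eventually
  have hbullets : ∀ᶠ d in Fil,
      ψt d ≠ 0 ∧
      ((charM A f (u d) d (Complex.I * (ν d : ℂ))
          ((θ d + 2 * l * Real.pi) / ν d)).conjTranspose).mulVec (ψt d) = 0 ∧
      (∀ φ : Fin n → ℂ, φ ≠ 0 →
        ((charM A f (u d) d (Complex.I * (ν d : ℂ))
            ((θ d + 2 * l * Real.pi) / ν d)).conjTranspose).mulVec φ = 0 →
        ∃ c : ℂ, c ≠ 0 ∧ φ = c • ψt d) ∧
      (∀ j, ψt d j = (rt d : ℂ) * (ς j : ℂ) + wt d j) ∧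
      0 ≤ rt d ∧
      (∑ j, (η j : ℂ) * wt d j = 0) ∧
      Real.sqrt (∑ j, ‖ψt d j‖ ^ 2) = Real.sqrt (∑ j, (ς j) ^ 2) := by
    filter_upwards [hbrEv, hUnitEv] with d hd hUnit
    obtain ⟨hν', -, -, hψne, heqψ⟩ := hbr d hd.1 hd.2
    have hdet0 : (Md d).det = 0 := by
      refine Matrix.exists_mulVec_eq_zero_iff.mp ⟨ψ d, hψne, ?_⟩
      rw [hMddef]
      exact heqψ
    have hdetB : (Bd d).det = 0 := by
      have : (Bd d).det = star ((Md d).det) := by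
        rw [hBddef]
        exact Matrix.det_conjTranspose (Md d)
      rw [this, hdet0, star_zero]
    obtain ⟨φ0, hφ0ne, hφ0⟩ := Matrix.exists_mulVec_eq_zero_iff.mpr hdetB
    have hkerd : ∀ v : Fin n → ℂ, (Bd d).mulVec v = 0 → v = v i0 • zv d := by
      intro v hv
      exact aux_ker_eq (Bd d) i0 j0 hUnit v hv
    have hφeq : φ0 = φ0 i0 • zv d := hkerd φ0 hφ0
    have hφi0 : φ0 i0 ≠ 0 := by
      intro h0
      exact hφ0ne (by rw [hφeq, h0, zero_smul])
    have hzne : zv d ≠ 0 := by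
      intro h0
      exact hφ0ne (by rw [hφeq, h0, smul_zero])
    have hzker : (Bd d).mulVec (zv d) = 0 := by
      have h1 := congrArg (fun w : Fin n → ℂ => (φ0 i0)⁻¹ • w) hφeq
      simp only [smul_smul, inv_mul_cancel₀ hφi0, one_smul] at h1
      rw [← h1, Matrix.mulVec_smul, hφ0, smul_zero]
    obtain ⟨jnz, hjnz⟩ : ∃ jj, zv d jj ≠ 0 := by
      by_contra hco
      push_neg at hco
      exact hzne (funext hco)
    have hsumz : 0 < ∑ j, ‖zv d j‖^2 := by
      refine Finset.sum_pos' (fun j _ => by positivity) ⟨jnz, Finset.mem_univ jnz, ?_⟩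
      have := norm_pos_iff.mpr hjnz
      positivity
    have hLzpos : 0 < Lz d := Real.sqrt_pos.mpr hsumz
    have hphase : ‖if pv d = 0 then 1
        else (starRingEnd ℂ) (pv d) / ((‖pv d‖ : ℝ) : ℂ)‖ = 1 := by
      split_ifs with hp
      · simp
      · rw [norm_div, Complex.norm_conj, Complex.norm_real, Real.norm_eq_abs,
          abs_of_pos (norm_pos_iff.mpr hp), div_self (ne_of_gt (norm_pos_iff.mpr hp))]
    have hccabs : ‖cc d‖ = Lc / Lz d := by
      simp only [hccdef]
      rw [norm_mul, hphase, mul_one, Complex.norm_real, Real.norm_eq_abs,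
        abs_of_pos (div_pos hLc hLzpos)]
    have hccne : cc d ≠ 0 := by
      intro h0
      rw [h0, norm_zero] at hccabs
      exact absurd hccabs.symm (ne_of_gt (div_pos hLc hLzpos))
    have hψtz : ψt d = cc d • zv d := by
      funext j
      rw [hψtdef]
      simp [smul_eq_mul]
    have hψtne : ψt d ≠ 0 := by
      intro h0
      have h1 := congrFun h0 jnz
      rw [hψtdef] at h1
      simp only [Pi.zero_apply] at h1
      exact (mul_ne_zero hccne hjnz) h1
    have hψtker : (Bd d).mulVec (ψt d) = 0 := by
      rw [hψtz, Matrix.mulVec_smul, hzker, smul_zero]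
    have hcp : cc d * pv d = ((Lc / Lz d * ‖pv d‖ : ℝ) : ℂ) := by
      simp only [hccdef]
      split_ifs with hp
      · simp [hp]
      · have hap : (‖pv d‖ : ℝ) ≠ 0 := ne_of_gt (norm_pos_iff.mpr hp)
        have h1 : (starRingEnd ℂ) (pv d) * pv d = (((‖pv d‖)^2 : ℝ) : ℂ) := by
          rw [mul_comm, Complex.mul_conj, Complex.normSq_eq_norm_sq]
        have hapC : ((‖pv d‖ : ℝ) : ℂ) ≠ 0 := Complex.ofReal_ne_zero.mpr hap
        have h2 : ((Lc / Lz d : ℝ) : ℂ) * ((starRingEnd ℂ) (pv d)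
              / ((‖pv d‖ : ℝ) : ℂ)) * pv d
            = ((Lc / Lz d : ℝ) : ℂ) * (((‖pv d‖)^2 : ℝ) : ℂ)
              / ((‖pv d‖ : ℝ) : ℂ) := by
          rw [← h1]
          ring
        rw [h2]
        rw [div_eq_iff hapC]
        push_cast
        ring
    set Rr : ℝ := Lc / Lz d * ‖pv d‖ with hRrdef
    have hRr0 : 0 ≤ Rr := mul_nonneg (le_of_lt (div_pos hLc hLzpos))
      (norm_nonneg _)
    have hsumψ : ∑ j, ηc j * ψt d j = cc d * pv d := by
      simp only [hpvdef, hψtdef]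
      rw [Finset.mul_sum]
      refine Finset.sum_congr rfl fun j _ => ?_
      ring
    have hrtval : rt d = Rr / Sςη := by
      simp only [hrtdef]
      rw [hsumψ, hcp, Complex.ofReal_re]
    have hrt0 : 0 ≤ rt d := by
      rw [hrtval]
      exact div_nonneg hRr0 (le_of_lt hSpos)
    refine ⟨hψtne, hψtker, ?_, ?_, hrt0, ?_, ?_⟩
    · intro φ hφne hφk
      have hφk' : (Bd d).mulVec φ = 0 := hφk
      have hφeq2 : φ = φ i0 • zv d := hkerd φ hφk'
      have hφi02 : φ i0 ≠ 0 := by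
        intro h0
        exact hφne (by rw [hφeq2, h0, zero_smul])
      refine ⟨φ i0 * (cc d)⁻¹, mul_ne_zero hφi02 (inv_ne_zero hccne), ?_⟩
      have hφj : ∀ j, φ j = φ i0 * zv d j := fun j => by
        have h9 := congrFun hφeq2 j
        simpa [smul_eq_mul] using h9
      funext j
      rw [Pi.smul_apply, smul_eq_mul, hφj j]
      simp only [hψtdef]
      field_simp
    · intro j
      simp only [hwtdef]
      ring
    · have h1 : ∑ j, (η j : ℂ) * wt d j
          = (∑ j, ηc j * ψt d j) - (rt d : ℂ) * ∑ j, (η j : ℂ) * (ς j : ℂ) := by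
        rw [Finset.mul_sum, ← Finset.sum_sub_distrib]
        refine Finset.sum_congr rfl fun j _ => ?_
        simp only [hwtdef, hηcdef]
        ring
      have h2 : ∑ j, (η j : ℂ) * (ς j : ℂ) = ((Sςη : ℝ) : ℂ) := by
        rw [hSdef2]
        push_cast
        rfl
      rw [h1, hsumψ, hcp, h2, hrtval]
      have hSneC : ((Sςη : ℝ) : ℂ) ≠ 0 := Complex.ofReal_ne_zero.mpr (ne_of_gt hSpos)
      push_cast
      rw [div_mul_cancel₀ _ hSneC, sub_self]
    · have h3 : ∑ j, ‖ψt d j‖^2 = ∑ j, (ς j)^2 := by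
        have h4 : ∀ j, ‖ψt d j‖^2 = (Lc/Lz d)^2 * ‖zv d j‖^2 := by
          intro j
          simp only [hψtdef]
          rw [norm_mul, hccabs, mul_pow]
        rw [Finset.sum_congr rfl (fun j _ => h4 j), ← Finset.mul_sum]
        have h5 : ∑ j, ‖zv d j‖^2 = (Lz d)^2 := by
          simp only [hLzdef]
          rw [Real.sq_sqrt (le_of_lt hsumz)]
        rw [h5]
        have h6 : (Lc/Lz d)^2 * (Lz d)^2 = Lc^2 := by
          field_simp
        rw [h6, hLcdef, Real.sq_sqrt (le_of_lt hsumsq)]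
      rw [h3]
  obtain ⟨c0, hc0mem, hc0sub⟩ :=
    (mem_nhdsLT_iff_exists_Ioo_subset' (show dstar - 1 < dstar by linarith)).mp hbullets
  refine ⟨max d2 ((c0 + dstar)/2), le_max_left _ _, ?_, ψt, rt, wt, ?_, hψtlim⟩
  · exact max_lt hd2.2 (by linarith [(Set.mem_Iio.mp hc0mem)])
  · intro d hd' hdlt
    refine hc0sub ⟨?_, hdlt⟩
    have hle : (c0 + dstar)/2 ≤ d := le_trans (le_max_right _ _) hd'
    linarith [(Set.mem_Iio.mp hc0mem)]
end

section
/- For every d̃ ∈ (0,d_*) there exists C > 0 such that for all d ∈ (0,d̃], all τ ≥ 0 and all μ ∈ ℂ with Re μ ≥ 0 for which Δ(d,μ,τ)φ = 0 has a nonzero solution φ ∈ ℂⁿ, one has |μ| ≤ C. Indeed one may take C = max_{d∈[0,d̃],j} |f_j(u_j^d,u_j^d)| + max_{d∈[0,d̃],j} |u_j^d a_j^d| + max_{d∈[0,d̃],j} |u_j^d b_j^d| + d̃ n max_{j,k} |α_{jk}|. -/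
open Matrix Filter Set

private lemma bdd_range_prod {X : Type*} [TopologicalSpace X] [CompactSpace X] {n : ℕ}
    (G : Fin n → X → ℝ) (hG : ∀ j, Continuous (G j)) :
    BddAbove (Set.range fun p : X × Fin n => G p.2 p.1) := by
  have h : ∀ j, ∃ B, ∀ x, G j x ≤ B := by
    intro j
    obtain ⟨B, hB⟩ := (isCompact_range (hG j)).bddAbove
    exact ⟨B, fun x => hB (Set.mem_range_self x)⟩
  choose B hB using h
  refine ⟨∑ j, |B j|, ?_⟩
  rintro y ⟨⟨x, j⟩, rfl⟩
  calc G j x ≤ |B j| := (hB j x).trans (le_abs_self _)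
    _ ≤ ∑ k, |B k| :=
      Finset.single_le_sum (f := fun k => |B k|) (fun k _ => abs_nonneg _) (Finset.mem_univ j)

theorem stmt11 {n : ℕ} (hn : 2 ≤ n) (A : Matrix (Fin n) (Fin n) ℝ)
    (f : Fin n → ℝ × ℝ → ℝ) (m : Fin n → ℝ)
    -- (H0)
    (hoff : ∀ j k, j ≠ k → 0 ≤ A j k)
    (hirr : ∀ S : Finset (Fin n), S.Nonempty → S ≠ Finset.univ →
      ∃ j ∉ S, ∃ k ∈ S, 0 < A j k)
    (hcol : ∀ j, ∑ k ∈ Finset.univ.erase j, A k j ≤ -A j j)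
    (hstr : ∃ j, ∑ k ∈ Finset.univ.erase j, A k j < -A j j)
    -- (H1)
    (hf : ∀ j, ContDiff ℝ 4 (f j)) (hm : ∀ j, 0 < m j) (hf0 : ∀ j, f j (0, 0) = m j)
    (hg : ∀ j x, (0:ℝ) ≤ x → deriv (fun y => f j (y, y)) x < 0)
    (u0 : Fin n → ℝ) (hu0 : ∀ j, 0 < u0 j ∧ f j (u0 j, u0 j) = 0)
    -- the critical dispersal rate d_*
    (dstar : ℝ) (hds : 0 < dstar)
    (hsd : specBound (dstar • A + Matrix.diagonal m) = 0)
    -- the positive equilibrium family, extended continuously differentiably to d = 0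
    (U : ℝ → Fin n → ℝ)
    (hUC : ContDiffOn ℝ 1 U (Set.Ico 0 dstar)) (hU0 : U 0 = u0)
    (hUeq : ∀ d, 0 < d → d < dstar → (∀ j, 0 < U d j) ∧
      (∀ j, d * ∑ k, A j k * U d k + U d j * f j (U d j, U d j) = 0) ∧
      ∀ v : Fin n → ℝ, (∀ j, 0 < v j) →
        (∀ j, d * ∑ k, A j k * v k + v j * f j (v j, v j) = 0) → v = U d)
    -- d̃ ∈ (0, d_*)
    (dt : ℝ) (hdt0 : 0 < dt) (hdts : dt < dstar)
    -- the explicit constant C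
    (C : ℝ)
    (hC : C = (⨆ p : ↥(Set.Icc (0:ℝ) dt) × Fin n,
        |f p.2 (U (↑p.1) p.2, U (↑p.1) p.2)|)
      + (⨆ p : ↥(Set.Icc (0:ℝ) dt) × Fin n,
        |U (↑p.1) p.2 * pd1 (f p.2) (U (↑p.1) p.2) (U (↑p.1) p.2)|)
      + (⨆ p : ↥(Set.Icc (0:ℝ) dt) × Fin n,
        |U (↑p.1) p.2 * pd2 (f p.2) (U (↑p.1) p.2) (U (↑p.1) p.2)|)
      + dt * n * (⨆ p : Fin n × Fin n, |A p.1 p.2|)) :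
    0 < C ∧
    ∀ d, 0 < d → d ≤ dt → ∀ τ : ℝ, 0 ≤ τ → ∀ μ : ℂ, 0 ≤ μ.re →
      ∀ φ : Fin n → ℂ, φ ≠ 0 →
        (charM A f (U d) d μ τ).mulVec φ = 0 → ‖μ‖ ≤ C := by
  set S1 := (⨆ p : ↥(Set.Icc (0:ℝ) dt) × Fin n, |f p.2 (U (↑p.1) p.2, U (↑p.1) p.2)|) with hS1def
  set S2 := (⨆ p : ↥(Set.Icc (0:ℝ) dt) × Fin n,
      |U (↑p.1) p.2 * pd1 (f p.2) (U (↑p.1) p.2) (U (↑p.1) p.2)|) with hS2def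
  set S3 := (⨆ p : ↥(Set.Icc (0:ℝ) dt) × Fin n,
      |U (↑p.1) p.2 * pd2 (f p.2) (U (↑p.1) p.2) (U (↑p.1) p.2)|) with hS3def
  set SA := (⨆ p : Fin n × Fin n, |A p.1 p.2|) with hSAdef
  have hnpos : 0 < n := by omega
  have hAbdd : BddAbove (Set.range fun p : Fin n × Fin n => |A p.1 p.2|) :=
    (Set.finite_range _).bddAbove
  have hSApos : 0 < SA := by
    obtain ⟨j, hj, k, hk, hjk⟩ := hirr {(⟨0, hnpos⟩ : Fin n)}
      ⟨⟨0, hnpos⟩, Finset.mem_singleton_self _⟩ (by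
        intro h
        have h1 : (⟨1, by omega⟩ : Fin n) ∈ ({(⟨0, hnpos⟩ : Fin n)} : Finset (Fin n)) :=
          h ▸ Finset.mem_univ _
        rw [Finset.mem_singleton, Fin.ext_iff] at h1
        simp at h1)
    calc (0:ℝ) < A j k := hjk
      _ ≤ |A j k| := le_abs_self _
      _ ≤ SA := le_ciSup hAbdd (j, k)
  have hSAnn : 0 ≤ SA := hSApos.le
  have hsub : Set.Icc (0:ℝ) dt ⊆ Set.Ico 0 dstar := fun x hx => ⟨hx.1, lt_of_le_of_lt hx.2 hdts⟩
  have hUcont : Continuous ((Set.Icc (0:ℝ) dt).restrict U) :=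
    (hUC.continuousOn.mono hsub).restrict
  have hUj : ∀ j, Continuous fun x : ↥(Set.Icc (0:ℝ) dt) => U (↑x) j :=
    fun j => (continuous_apply j).comp hUcont
  have hpd1 : ∀ j, Continuous fun q : ℝ × ℝ => pd1 (f j) q.1 q.2 := by
    intro j
    have h1 : Continuous (fderiv ℝ (f j)) := (hf j).continuous_fderiv (by norm_num)
    have h2 : Continuous fun q : ℝ × ℝ => (fderiv ℝ (f j) q) (1, 0) :=
      h1.clm_apply continuous_const
    simpa [pd1] using h2
  have hpd2 : ∀ j, Continuous fun q : ℝ × ℝ => pd2 (f j) q.1 q.2 := by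
    intro j
    have h1 : Continuous (fderiv ℝ (f j)) := (hf j).continuous_fderiv (by norm_num)
    have h2 : Continuous fun q : ℝ × ℝ => (fderiv ℝ (f j) q) (0, 1) :=
      h1.clm_apply continuous_const
    simpa [pd2] using h2
  have hb1 : BddAbove (Set.range fun p : ↥(Set.Icc (0:ℝ) dt) × Fin n =>
      |f p.2 (U (↑p.1) p.2, U (↑p.1) p.2)|) :=
    bdd_range_prod (X := ↥(Set.Icc (0:ℝ) dt))
      (fun j (x : ↥(Set.Icc (0:ℝ) dt)) => |f j (U (↑x) j, U (↑x) j)|)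
      (fun j => by exact ((hf j).continuous.comp ((hUj j).prodMk (hUj j))).abs)
  have hb2 : BddAbove (Set.range fun p : ↥(Set.Icc (0:ℝ) dt) × Fin n =>
      |U (↑p.1) p.2 * pd1 (f p.2) (U (↑p.1) p.2) (U (↑p.1) p.2)|) :=
    bdd_range_prod (X := ↥(Set.Icc (0:ℝ) dt))
      (fun j (x : ↥(Set.Icc (0:ℝ) dt)) => |U (↑x) j * pd1 (f j) (U (↑x) j) (U (↑x) j)|)
      (fun j => by exact ((hUj j).mul ((hpd1 j).comp ((hUj j).prodMk (hUj j)))).abs)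
  have hb3 : BddAbove (Set.range fun p : ↥(Set.Icc (0:ℝ) dt) × Fin n =>
      |U (↑p.1) p.2 * pd2 (f p.2) (U (↑p.1) p.2) (U (↑p.1) p.2)|) :=
    bdd_range_prod (X := ↥(Set.Icc (0:ℝ) dt))
      (fun j (x : ↥(Set.Icc (0:ℝ) dt)) => |U (↑x) j * pd2 (f j) (U (↑x) j) (U (↑x) j)|)
      (fun j => by exact ((hUj j).mul ((hpd2 j).comp ((hUj j).prodMk (hUj j)))).abs)
  have hS1nn : 0 ≤ S1 := Real.iSup_nonneg fun p => abs_nonneg _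
  have hS2nn : 0 ≤ S2 := Real.iSup_nonneg fun p => abs_nonneg _
  have hS3nn : 0 ≤ S3 := Real.iSup_nonneg fun p => abs_nonneg _
  constructor
  · rw [hC]
    have : 0 < dt * n * SA := mul_pos (mul_pos hdt0 (by exact_mod_cast hnpos)) hSApos
    linarith
  intro d hd0 hddt τ hτ μ hμ φ hφ hmul
  have hdmem : d ∈ Set.Icc (0:ℝ) dt := ⟨hd0.le, hddt⟩
  obtain ⟨j, -, hjmax⟩ := Finset.exists_max_image Finset.univ (fun k => ‖φ k‖)
    ⟨⟨0, hnpos⟩, Finset.mem_univ _⟩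
  have hφj : 0 < ‖φ j‖ := by
    obtain ⟨k, hk⟩ := Function.ne_iff.mp hφ
    exact lt_of_lt_of_le (norm_pos_iff.mpr hk) (hjmax k (Finset.mem_univ _))
  have hkey : μ * φ j = (d:ℂ) * (∑ k, (A j k : ℂ) * φ k)
      + ((f j (U d j, U d j) + U d j * pd1 (f j) (U d j) (U d j) : ℝ) : ℂ) * φ j
      + Complex.exp (-μ * τ) * (((U d j * pd2 (f j) (U d j) (U d j) : ℝ) : ℂ) * φ j) := by
    have h := congrFun hmul j
    have hmap : ((A.map (fun x : ℝ => (x:ℂ))) *ᵥ φ) j = ∑ k, (A j k : ℂ) * φ k := by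
      simp [Matrix.mulVec, dotProduct, Matrix.map_apply]
    simp only [charM, Matrix.sub_mulVec, Matrix.add_mulVec, Matrix.smul_mulVec,
      Matrix.one_mulVec, Pi.sub_apply, Pi.add_apply, Pi.smul_apply, Matrix.mulVec_diagonal,
      smul_eq_mul, Pi.zero_apply, hmap] at h
    linear_combination -h
  have hbf : |f j (U d j, U d j)| ≤ S1 := le_ciSup hb1 (⟨⟨d, hdmem⟩, j⟩)
  have hba : |U d j * pd1 (f j) (U d j) (U d j)| ≤ S2 := le_ciSup hb2 (⟨⟨d, hdmem⟩, j⟩)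
  have hbb : |U d j * pd2 (f j) (U d j) (U d j)| ≤ S3 := le_ciSup hb3 (⟨⟨d, hdmem⟩, j⟩)
  have hexp : ‖Complex.exp (-μ * τ)‖ ≤ 1 := by
    rw [Complex.norm_exp, Real.exp_le_one_iff]
    simp only [neg_mul, Complex.neg_re, Complex.mul_re, Complex.ofReal_re, Complex.ofReal_im]
    nlinarith
  have hsum : ‖∑ k, (A j k : ℂ) * φ k‖ ≤ n * SA * ‖φ j‖ := by
    calc ‖∑ k, (A j k : ℂ) * φ k‖ ≤ ∑ k, ‖(A j k : ℂ) * φ k‖ :=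
          norm_sum_le _ _
      _ ≤ ∑ _k : Fin n, SA * ‖φ j‖ := by
          refine Finset.sum_le_sum fun k _ => ?_
          rw [norm_mul, Complex.norm_real, Real.norm_eq_abs]
          exact mul_le_mul (le_ciSup hAbdd (j, k)) (hjmax k (Finset.mem_univ _))
            (norm_nonneg _) hSAnn
      _ = n * SA * ‖φ j‖ := by
          rw [Finset.sum_const, Finset.card_univ, Fintype.card_fin]
          push_cast; ring
  have hdnn : (0:ℝ) ≤ d := hd0.le
  have main : ‖μ‖ * ‖φ j‖ ≤ C * ‖φ j‖ := by
    calc ‖μ‖ * ‖φ j‖ = ‖μ * φ j‖ :=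
          (norm_mul _ _).symm
      _ ≤ ‖(d:ℂ) * (∑ k, (A j k : ℂ) * φ k)‖
          + ‖((f j (U d j, U d j) + U d j * pd1 (f j) (U d j) (U d j) : ℝ) : ℂ) * φ j‖
          + ‖Complex.exp (-μ * τ)
              * (((U d j * pd2 (f j) (U d j) (U d j) : ℝ) : ℂ) * φ j)‖ := by
          rw [hkey]
          exact (norm_add_le _ _).trans
            (add_le_add_left (norm_add_le _ _) _)
      _ ≤ d * (n * SA * ‖φ j‖) + (S1 + S2) * ‖φ j‖
          + 1 * (S3 * ‖φ j‖) := by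
          gcongr ?_ + ?_ + ?_
          · rw [norm_mul, Complex.norm_real, Real.norm_eq_abs, abs_of_nonneg hdnn]
            exact mul_le_mul_of_nonneg_left hsum hdnn
          · rw [norm_mul, Complex.norm_real, Real.norm_eq_abs]
            refine mul_le_mul_of_nonneg_right ?_ (norm_nonneg _)
            exact (abs_add_le _ _).trans (add_le_add hbf hba)
          · rw [norm_mul, norm_mul, Complex.norm_real, Real.norm_eq_abs]
            exact mul_le_mul hexp (mul_le_mul_of_nonneg_right hbb (norm_nonneg _))
              (by positivity) zero_le_one
      _ ≤ C * ‖φ j‖ := by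
          rw [hC]
          nlinarith [norm_nonneg (φ j),
            mul_le_mul_of_nonneg_right hddt (mul_nonneg (Nat.cast_nonneg n) hSAnn)]
  exact le_of_mul_le_mul_right main hφj
end
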